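/- arXiv:0911.1696 — 11 statements merged into one kernel-verified Lean document; each statement's English description precedes it below -/
import Mathlib

section
/- Let X_1, X_2, …, X_n be subspaces of a finite-dimensional vector space V such that R(X_i) ≥ 1 − p for every i, and such that each X_i is mutually R-independent of all but at most d of the other subspaces (i.e., there is a dependency graph for X_1,…,X_n in which every vertex has out-degree at most d). If p · e · (d+1) ≤ 1, then R(⋂_{i=1}^n X_i) > 0; in particular the intersection ⋂_{i=1}^n X_i is a nonzero subspace. -/
/-- Relative dimension of a subspace `X` of `V`: `dim X / dim V` as a rational number. -/
noncomputable def relDim (K : Type*) {V : Type*} [Field K] [AddCommGroup V] [Module K V]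
    (X : Submodule K V) : ℚ :=
  (Module.finrank K X : ℚ) / (Module.finrank K V : ℚ)

/-- Conditional relative dimension `R(X|Y) = dim (X ⊓ Y) / dim Y`
(equal to `0` when `dim Y = 0`, by the convention that division by zero is zero). -/
noncomputable def condDim (K : Type*) {V : Type*} [Field K] [AddCommGroup V] [Module K V]
    (X Y : Submodule K V) : ℚ :=
  (Module.finrank K ↥(X ⊓ Y) : ℚ) / (Module.finrank K ↥Y : ℚ)


lemma qLLL_num (p : ℝ) (d : ℕ) (hpd : p * Real.exp 1 * (d + 1) ≤ 1) :
    p ≤ (1/(d+2)) * (1 - 1/((d:ℝ)+2))^d := by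
  have h1 : (0:ℝ) < (d:ℝ) + 1 := by positivity
  have h2 : (0:ℝ) < (d:ℝ) + 2 := by positivity
  have hE : (((d:ℝ)+2)/((d:ℝ)+1))^(d+1) ≤ Real.exp 1 := by
    have heq : ((d:ℝ)+2)/((d:ℝ)+1) = 1 + 1/((d:ℝ)+1) := by field_simp; ring
    rw [heq]
    calc (1 + 1/((d:ℝ)+1))^(d+1) ≤ (Real.exp (1/((d:ℝ)+1)))^(d+1) := by
          apply pow_le_pow_left₀ (by positivity)
          linarith [Real.add_one_le_exp (1/((d:ℝ)+1))]
      _ = Real.exp 1 := by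
          rw [← Real.exp_nat_mul]; congr 1; push_cast; field_simp
  have hx : (1 - 1/((d:ℝ)+2)) = ((d:ℝ)+1)/((d:ℝ)+2) := by field_simp; ring
  rw [hx]
  have hstep : ((d:ℝ)+2) * (((d:ℝ)+2)/((d:ℝ)+1))^d ≤ Real.exp 1 * ((d:ℝ)+1) := by
    calc ((d:ℝ)+2) * (((d:ℝ)+2)/((d:ℝ)+1))^d
        = (((d:ℝ)+2)/((d:ℝ)+1))^(d+1) * ((d:ℝ)+1) := by
          rw [pow_succ]; field_simp
      _ ≤ Real.exp 1 * ((d:ℝ)+1) := by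
          exact mul_le_mul_of_nonneg_right hE h1.le
  have hp1 : p ≤ 1/(Real.exp 1 * ((d:ℝ)+1)) := by
    rw [le_div_iff₀ (by positivity)]
    push_cast at hpd
    nlinarith
  have hpos : (0:ℝ) < ((d:ℝ)+2) * (((d:ℝ)+2)/((d:ℝ)+1))^d := by positivity
  have h3 : 1/(Real.exp 1 * ((d:ℝ)+1)) ≤ 1/(((d:ℝ)+2) * (((d:ℝ)+2)/((d:ℝ)+1))^d) :=
    one_div_le_one_div_of_le hpos hstep
  have heq2 : 1/(((d:ℝ)+2) * (((d:ℝ)+2)/((d:ℝ)+1))^d)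
      = (1/((d:ℝ)+2)) * (((d:ℝ)+1)/((d:ℝ)+2))^d := by
    rw [div_pow, div_pow]
    field_simp
  rw [heq2] at h3
  calc p ≤ _ := hp1
    _ ≤ _ := h3

/-- Symmetric quantum Lovász local lemma: if `R(X i) ≥ 1 - p` for all `i`, each `X i` is
mutually R-independent of all but at most `d` of the other subspaces, and
`p * e * (d+1) ≤ 1`, then `R(⋂ i, X i) > 0`; in particular `⋂ i, X i` is nonzero. -/
theorem symmetric_quantum_LLL {K V : Type*} [Field K] [AddCommGroup V] [Module K V]
    [FiniteDimensional K V] [Nontrivial V]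
    (n : ℕ) (X : Fin n → Submodule K V) (p : ℝ) (d : ℕ)
    (hp : ∀ i, 1 - p ≤ ((relDim K (X i) : ℚ) : ℝ))
    (hdep : ∀ i : Fin n, ∃ J : Finset (Fin n), i ∉ J ∧ J.card ≤ d ∧
        ∀ S : Finset (Fin n), (∀ j ∈ S, j ∉ J ∧ j ≠ i) →
          condDim K (X i) (⨅ j ∈ S, X j) = relDim K (X i))
    (hpd : p * Real.exp 1 * (d + 1) ≤ 1) :
    0 < relDim K (⨅ i, X i) ∧ (⨅ i, X i) ≠ ⊥ := by

  have hV : 0 < Module.finrank K V := Module.finrank_pos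
  have hVR : (0:ℝ) < (Module.finrank K V : ℝ) := by exact_mod_cast hV
  set x : ℝ := 1/((d:ℝ)+2) with hxdef
  have hx0 : 0 < x := by positivity
  have hx1 : x < 1 := by
    rw [hxdef, div_lt_one (by positivity)]; linarith [Nat.cast_nonneg (α := ℝ) d]
  have h1x : (0:ℝ) < 1 - x := by linarith
  have h1x1 : 1 - x ≤ 1 := by linarith
  have hpx : p ≤ x * (1-x)^d := by
    have := qLLL_num p d hpd
    rw [hxdef]; push_cast; linarith [this]
  have hp' : ∀ i, (1-p) * (Module.finrank K V : ℝ) ≤ (Module.finrank K (X i) : ℝ) := by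
    intro i
    have h := hp i
    simp only [relDim] at h
    push_cast at h
    exact (le_div_iff₀ hVR).mp h
  have hpxx : p ≤ x := by
    have hd1 : (1-x)^d ≤ 1 := pow_le_one₀ h1x.le h1x1
    nlinarith
  have key : ∀ s : ℕ, ∀ S : Finset (Fin n), S.card ≤ s →
      0 < (Module.finrank K ↥(⨅ j ∈ S, X j) : ℝ) ∧
      ∀ i ∉ S, (1-x) * (Module.finrank K ↥(⨅ j ∈ S, X j) : ℝ)
        ≤ (Module.finrank K ↥(X i ⊓ ⨅ j ∈ S, X j) : ℝ) := by
    intro s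
    induction s with
    | zero =>
      intro S hS
      have hSe : S = ∅ := Finset.card_eq_zero.mp (Nat.le_zero.mp hS)
      subst hSe
      have htop : (⨅ j ∈ (∅ : Finset (Fin n)), X j) = ⊤ := by simp
      rw [htop]
      constructor
      · rw [finrank_top]; exact hVR
      · intro i _
        rw [inf_top_eq, finrank_top]
        have := hp' i
        nlinarith
    | succ s ih =>
      have pos : ∀ S' : Finset (Fin n), S'.card ≤ s + 1 →
          0 < (Module.finrank K ↥(⨅ j ∈ S', X j) : ℝ) := by
        intro S' hS'
        rcases S'.eq_empty_or_nonempty with rfl | ⟨j, hj⟩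
        · have htop : (⨅ j ∈ (∅ : Finset (Fin n)), X j) = ⊤ := by simp
          rw [htop, finrank_top]; exact hVR
        · have hT : (S'.erase j).card ≤ s := by
            have h1 := Finset.card_erase_of_mem hj
            have h2 := Finset.card_pos.mpr ⟨j, hj⟩
            omega
          obtain ⟨posT, clT⟩ := ih (S'.erase j) hT
          have hins : (⨅ k ∈ S', X k) = X j ⊓ ⨅ k ∈ S'.erase j, X k := by
            conv_lhs => rw [← Finset.insert_erase hj]
            exact Finset.iInf_insert _ _ _
          rw [hins]
          have hcl := clT j (Finset.notMem_erase j S')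
          nlinarith
      intro S hS
      refine ⟨pos S hS, ?_⟩
      intro i hi
      obtain ⟨J, hiJ, hJd, hJ⟩ := hdep i
      set S1 : Finset (Fin n) := S ∩ J with hS1
      set S2 : Finset (Fin n) := S \ J with hS2
      have hunion : S1 ∪ S2 = S := by
        rw [Finset.union_comm]; exact Finset.sdiff_union_inter S J
      have hC : condDim K (X i) (⨅ j ∈ S2, X j) = relDim K (X i) := by
        refine hJ S2 (fun j hj => ⟨(Finset.mem_sdiff.mp hj).2, fun h => ?_⟩)
        exact hi (h ▸ (Finset.mem_sdiff.mp hj).1)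
      have hS2card : S2.card ≤ s + 1 :=
        le_trans (Finset.card_le_card (Finset.sdiff_subset)) hS
      have posC := pos S2 hS2card
      -- bound on finrank (X i ⊓ C)
      have hAC : (1-p) * (Module.finrank K ↥(⨅ j ∈ S2, X j) : ℝ)
          ≤ (Module.finrank K ↥(X i ⊓ ⨅ j ∈ S2, X j) : ℝ) := by
        simp only [condDim, relDim] at hC
        have hCr := congrArg (fun q : ℚ => (q : ℝ)) hC
        push_cast at hCr
        have h2 : (1-p) ≤ (Module.finrank K ↥(X i ⊓ ⨅ j ∈ S2, X j) : ℝ)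
            / (Module.finrank K ↥(⨅ j ∈ S2, X j) : ℝ) := by
          rw [hCr]
          exact (le_div_iff₀ hVR).mpr (hp' i)
        calc (1-p) * (Module.finrank K ↥(⨅ j ∈ S2, X j) : ℝ)
            ≤ ((Module.finrank K ↥(X i ⊓ ⨅ j ∈ S2, X j) : ℝ)
              / (Module.finrank K ↥(⨅ j ∈ S2, X j) : ℝ))
              * (Module.finrank K ↥(⨅ j ∈ S2, X j) : ℝ) :=
              mul_le_mul_of_nonneg_right h2 posC.le
          _ = _ := div_mul_cancel₀ _ (ne_of_gt posC)
      -- peeling S1 off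
      have peel : ∀ T1 : Finset (Fin n), T1 ⊆ S1 →
          (1-x)^T1.card * (Module.finrank K ↥(⨅ j ∈ S2, X j) : ℝ)
            ≤ (Module.finrank K ↥(⨅ j ∈ T1 ∪ S2, X j) : ℝ) := by
        intro T1
        induction T1 using Finset.induction_on with
        | empty => intro _; rw [Finset.empty_union]; simp
        | @insert a T1' ha ihT =>
          intro hsub
          have haS1 : a ∈ S1 := hsub (Finset.mem_insert_self a T1')
          have hT1'sub : T1' ⊆ S1 := (Finset.insert_subset_iff.mp hsub).2
          have haS : a ∈ S := Finset.mem_of_mem_inter_left haS1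
          have haJ : a ∈ J := Finset.mem_of_mem_inter_right haS1
          have haS2 : a ∉ S2 := fun h => (Finset.mem_sdiff.mp h).2 haJ
          have haT : a ∉ T1' ∪ S2 := by
            simp only [Finset.mem_union]; tauto
          have hTsub : T1' ∪ S2 ⊆ S :=
            Finset.union_subset (le_trans hT1'sub Finset.inter_subset_left)
              Finset.sdiff_subset
          have hTcard : (T1' ∪ S2).card ≤ s := by
            have h1 : T1' ∪ S2 ⊆ S.erase a := by
              rw [Finset.subset_erase]; exact ⟨hTsub, haT⟩
            have h2 := Finset.card_le_card h1
            have h3 := Finset.card_erase_of_mem haS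
            have h4 := Finset.card_pos.mpr ⟨a, haS⟩
            omega
          obtain ⟨posT, clT⟩ := ih _ hTcard
          have hstep := clT a haT
          have hins : (⨅ j ∈ insert a T1' ∪ S2, X j)
              = X a ⊓ ⨅ j ∈ T1' ∪ S2, X j := by
            rw [Finset.insert_union]
            exact Finset.iInf_insert _ _ _
          rw [hins, Finset.card_insert_of_notMem ha]
          calc (1-x)^(T1'.card+1) * (Module.finrank K ↥(⨅ j ∈ S2, X j) : ℝ)
              = (1-x) * ((1-x)^T1'.card
                  * (Module.finrank K ↥(⨅ j ∈ S2, X j) : ℝ)) := by ring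
            _ ≤ (1-x) * (Module.finrank K ↥(⨅ j ∈ T1' ∪ S2, X j) : ℝ) :=
                mul_le_mul_of_nonneg_left (ihT hT1'sub) h1x.le
            _ ≤ _ := hstep
      have hpeel : (1-x)^d * (Module.finrank K ↥(⨅ j ∈ S2, X j) : ℝ)
          ≤ (Module.finrank K ↥(⨅ j ∈ S, X j) : ℝ) := by
        have h1 := peel S1 (subset_refl _)
        rw [hunion] at h1
        have hc1 : S1.card ≤ d :=
          le_trans (Finset.card_le_card Finset.inter_subset_right) hJd
        have h2 : (1-x)^d ≤ (1-x)^S1.card :=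
          pow_le_pow_of_le_one h1x.le h1x1 hc1
        calc (1-x)^d * (Module.finrank K ↥(⨅ j ∈ S2, X j) : ℝ)
            ≤ (1-x)^S1.card * (Module.finrank K ↥(⨅ j ∈ S2, X j) : ℝ) :=
              mul_le_mul_of_nonneg_right h2 posC.le
          _ ≤ _ := h1
      -- submodularity
      have hBC : (⨅ j ∈ S, X j) = (⨅ j ∈ S1, X j) ⊓ ⨅ j ∈ S2, X j := by
        conv_lhs => rw [← hunion]
        exact Finset.iInf_union
      have hsubm : Module.finrank K ↥(X i ⊓ ⨅ j ∈ S2, X j)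
            + Module.finrank K ↥(⨅ j ∈ S, X j)
          ≤ Module.finrank K ↥(X i ⊓ ⨅ j ∈ S, X j)
            + Module.finrank K ↥(⨅ j ∈ S2, X j) := by
        have heq := Submodule.finrank_sup_add_finrank_inf_eq
          (X i ⊓ ⨅ j ∈ S2, X j) (⨅ j ∈ S, X j)
        have hinf : (X i ⊓ ⨅ j ∈ S2, X j) ⊓ (⨅ j ∈ S, X j)
            = X i ⊓ ⨅ j ∈ S, X j := by
          rw [hBC, inf_inf_inf_comm, inf_idem, inf_assoc, ← hBC]
        have hle : (X i ⊓ ⨅ j ∈ S2, X j) ⊔ (⨅ j ∈ S, X j)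
            ≤ ⨅ j ∈ S2, X j := by
          refine sup_le inf_le_right ?_
          rw [hBC]; exact inf_le_right
        have hmono := Submodule.finrank_mono hle
        rw [hinf] at heq
        omega
      have hR : (Module.finrank K ↥(X i ⊓ ⨅ j ∈ S2, X j) : ℝ)
            + (Module.finrank K ↥(⨅ j ∈ S, X j) : ℝ)
          ≤ (Module.finrank K ↥(X i ⊓ ⨅ j ∈ S, X j) : ℝ)
            + (Module.finrank K ↥(⨅ j ∈ S2, X j) : ℝ) := by
        exact_mod_cast hsubm
      have hpc : p * (Module.finrank K ↥(⨅ j ∈ S2, X j) : ℝ)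
          ≤ x * (Module.finrank K ↥(⨅ j ∈ S, X j) : ℝ) := by
        calc p * (Module.finrank K ↥(⨅ j ∈ S2, X j) : ℝ)
            ≤ (x * (1-x)^d) * (Module.finrank K ↥(⨅ j ∈ S2, X j) : ℝ) :=
              mul_le_mul_of_nonneg_right hpx posC.le
          _ = x * ((1-x)^d * (Module.finrank K ↥(⨅ j ∈ S2, X j) : ℝ)) := by ring
          _ ≤ x * (Module.finrank K ↥(⨅ j ∈ S, X j) : ℝ) :=
              mul_le_mul_of_nonneg_left hpeel hx0.le
      linarith [hAC, hR, hpc]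
  obtain ⟨posU, -⟩ := key n Finset.univ (by simp)
  have hUeq : (⨅ j ∈ Finset.univ, X j) = ⨅ i, X i := by simp
  rw [hUeq] at posU
  have hfr : 0 < Module.finrank K ↥(⨅ i, X i) := by exact_mod_cast posU
  constructor
  · simp only [relDim]
    apply div_pos
    · exact_mod_cast hfr
    · exact_mod_cast hV
  · intro h
    rw [h] at hfr
    simp at hfr
end

section
/- (Quantum Lovász Local Lemma, asymmetric form.) Let X_1, X_2, …, X_n be subspaces of a finite-dimensional vector space V with dependency graph G = ([n], E). If there exist real numbers 0 ≤ y_1, …, y_n < 1 such that R(X_i) ≥ 1 − y_i · ∏_{j : (i,j) ∈ E} (1 − y_j) for every i ∈ [n], then R(⋂_{i=1}^n X_i) ≥ ∏_{i=1}^n (1 − y_i). -/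
/-- Quantum Lovász Local Lemma (asymmetric form). `E` is (the edge set of) a dependency
graph for the subspaces `X i`: each `X i` is mutually R-independent of
`{X j : (i,j) ∉ E}`. If `R(X i) ≥ 1 - y i * ∏_{(i,j) ∈ E} (1 - y j)` for all `i`,
then `R(⋂ i, X i) ≥ ∏ i, (1 - y i)`. -/
theorem quantum_LLL {K V : Type*} [Field K] [AddCommGroup V] [Module K V]
    [FiniteDimensional K V] [Nontrivial V]
    (n : ℕ) (X : Fin n → Submodule K V) (E : Finset (Fin n × Fin n))
    (hdep : ∀ i : Fin n, ∀ S : Finset (Fin n), (∀ j ∈ S, (i, j) ∉ E) →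
        condDim K (X i) (⨅ j ∈ S, X j) = relDim K (X i))
    (y : Fin n → ℝ) (hy0 : ∀ i, 0 ≤ y i) (hy1 : ∀ i, y i < 1)
    (hR : ∀ i, 1 - y i * ∏ j ∈ Finset.univ.filter (fun j => (i, j) ∈ E), (1 - y j)
        ≤ ((relDim K (X i) : ℚ) : ℝ)) :
    (∏ i, (1 - y i)) ≤ ((relDim K (⨅ i, X i) : ℚ) : ℝ) := by
  classical
  have hDpos : 0 < Module.finrank K V := Module.finrank_pos
  have hD0 : (0:ℝ) < (Module.finrank K V : ℝ) := by exact_mod_cast hDpos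
  have hy1' : ∀ i, (0:ℝ) < 1 - y i := fun i => by linarith [hy1 i]
  have hprod_pos : ∀ T : Finset (Fin n), (0:ℝ) < ∏ j ∈ T, (1 - y j) :=
    fun T => Finset.prod_pos fun j _ => hy1' j
  have hprod_le_one : ∀ T : Finset (Fin n), ∏ j ∈ T, (1 - y j) ≤ 1 :=
    fun T => Finset.prod_le_one (fun j _ => (hy1' j).le) (fun j _ => by linarith [hy0 j])
  -- cross-multiplied form of the independence hypothesis
  have hcross : ∀ (i : Fin n) (S : Finset (Fin n)), (∀ j ∈ S, (i, j) ∉ E) →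
      0 < Module.finrank K ↥(⨅ j ∈ S, X j) →
      (Module.finrank K ↥(X i ⊓ ⨅ j ∈ S, X j) : ℝ) * (Module.finrank K V : ℝ)
        = (Module.finrank K ↥(X i) : ℝ) * (Module.finrank K ↥(⨅ j ∈ S, X j) : ℝ) := by
    intro i S hno hpos
    have h := hdep i S hno
    unfold condDim relDim at h
    rw [div_eq_div_iff (by exact_mod_cast hpos.ne') (by exact_mod_cast hDpos.ne')] at h
    exact_mod_cast h
  -- the main induction: positivity of dimensions, and the conditional bound
  have key : ∀ m : ℕ, ∀ S : Finset (Fin n), S.card = m →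
      0 < Module.finrank K ↥(⨅ j ∈ S, X j) ∧
      ∀ i ∉ S, (1 - y i) * (Module.finrank K ↥(⨅ j ∈ S, X j) : ℝ)
        ≤ (Module.finrank K ↥(⨅ j ∈ insert i S, X j) : ℝ) := by
    intro m
    induction m using Nat.strong_induction_on with
    | _ m IH =>
    intro S hScard
    have IH' : ∀ T : Finset (Fin n), T.card < m →
        0 < Module.finrank K ↥(⨅ j ∈ T, X j) ∧
        ∀ i ∉ T, (1 - y i) * (Module.finrank K ↥(⨅ j ∈ T, X j) : ℝ)
          ≤ (Module.finrank K ↥(⨅ j ∈ insert i T, X j) : ℝ) := by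
      intro T hT
      exact IH T.card (hScard ▸ hT) T rfl
    have hpos : 0 < Module.finrank K ↥(⨅ j ∈ S, X j) := by
      rcases S.eq_empty_or_nonempty with rfl | ⟨a, ha⟩
      · have he : (⨅ j ∈ (∅ : Finset (Fin n)), X j) = ⊤ := by simp
        rw [he, finrank_top]
        exact hDpos
      · have hins : insert a (S.erase a) = S := Finset.insert_erase ha
        have hcard : (S.erase a).card < m := by
          rw [← hScard]; exact Finset.card_erase_lt_of_mem ha
        obtain ⟨hp, hq⟩ := IH' _ hcard
        have h1 := hq a (Finset.notMem_erase a S)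
        rw [hins] at h1
        have h2 : (0:ℝ) < (Module.finrank K ↥(⨅ j ∈ S, X j) : ℝ) :=
          lt_of_lt_of_le (mul_pos (hy1' a) (by exact_mod_cast hp)) h1
        exact_mod_cast h2
    refine ⟨hpos, ?_⟩
    intro i hiS
    have hS0 : (0:ℝ) ≤ (Module.finrank K ↥(⨅ j ∈ S, X j) : ℝ) := by positivity
    have hins : (⨅ j ∈ insert i S, X j) = X i ⊓ ⨅ j ∈ S, X j := Finset.iInf_insert i S X
    set S₁ := S.filter (fun j => (i, j) ∈ E) with hS₁def
    set S₂ := S.filter (fun j => (i, j) ∉ E) with hS₂def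
    have hS₂no : ∀ j ∈ S₂, (i, j) ∉ E := fun j hj => (Finset.mem_filter.mp hj).2
    have hS₂sub : S₂ ⊆ S := Finset.filter_subset _ _
    have hS₁sub : S₁ ⊆ S := Finset.filter_subset _ _
    have hunion : S₂ ∪ S₁ = S := by
      rw [hS₁def, hS₂def, Finset.union_comm]
      exact Finset.filter_union_filter_not_eq _ S
    by_cases hS₁e : S₁ = ∅
    · -- no neighbours of i inside S
      have hSno : ∀ j ∈ S, (i, j) ∉ E := by
        intro j hj hij
        have : j ∈ S₁ := Finset.mem_filter.mpr ⟨hj, hij⟩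
        rw [hS₁e] at this
        exact absurd this (Finset.notMem_empty j)
      have hc := hcross i S hSno hpos
      have hRineq : 1 - y i
          ≤ (Module.finrank K ↥(X i) : ℝ) / (Module.finrank K V : ℝ) := by
        have h1 := hR i
        have h2 : ((relDim K (X i) : ℚ) : ℝ)
            = (Module.finrank K ↥(X i) : ℝ) / (Module.finrank K V : ℝ) := by
          unfold relDim; push_cast; ring
        rw [h2] at h1
        nlinarith [hprod_pos (Finset.univ.filter (fun j => (i, j) ∈ E)),
          hprod_le_one (Finset.univ.filter (fun j => (i, j) ∈ E)), hy0 i]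
      have hkey : (Module.finrank K ↥(X i) : ℝ) / (Module.finrank K V : ℝ)
          * (Module.finrank K ↥(⨅ j ∈ S, X j) : ℝ)
          = (Module.finrank K ↥(X i ⊓ ⨅ j ∈ S, X j) : ℝ) := by
        field_simp
        linarith [hc]
      rw [hins]
      calc (1 - y i) * (Module.finrank K ↥(⨅ j ∈ S, X j) : ℝ)
          ≤ (Module.finrank K ↥(X i) : ℝ) / (Module.finrank K V : ℝ)
            * (Module.finrank K ↥(⨅ j ∈ S, X j) : ℝ) :=
            mul_le_mul_of_nonneg_right hRineq hS0
        _ = _ := hkey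
    · -- at least one neighbour of i inside S
      have hS₂card : S₂.card < m := by
        rw [← hScard]
        apply Finset.card_lt_card
        rw [Finset.ssubset_def]
        refine ⟨hS₂sub, fun hsub => ?_⟩
        obtain ⟨a, ha⟩ := Finset.nonempty_iff_ne_empty.mpr hS₁e
        have : a ∈ S₂ := hsub (hS₁sub ha)
        exact (Finset.mem_filter.mp this).2 (Finset.mem_filter.mp ha).2
      obtain ⟨hS₂pos, _⟩ := IH' S₂ hS₂card
      have hS₂0 : (0:ℝ) ≤ (Module.finrank K ↥(⨅ j ∈ S₂, X j) : ℝ) := by positivity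
      -- chain bound: adding the neighbours one by one
      have chain : ∀ T : Finset (Fin n), T ⊆ S₁ →
          (∏ j ∈ T, (1 - y j)) * (Module.finrank K ↥(⨅ j ∈ S₂, X j) : ℝ)
            ≤ (Module.finrank K ↥(⨅ j ∈ S₂ ∪ T, X j) : ℝ) := by
        intro T
        induction T using Finset.induction_on with
        | empty => intro _; rw [Finset.union_empty, Finset.prod_empty, one_mul]
        | @insert a T haT ih =>
          intro hsub
          have hT : T ⊆ S₁ := fun x hx => hsub (Finset.mem_insert_of_mem hx)
          have haS₁ : a ∈ S₁ := hsub (Finset.mem_insert_self a T)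
          have hU_sub : S₂ ∪ T ⊆ S := Finset.union_subset hS₂sub (hT.trans hS₁sub)
          have haU : a ∉ S₂ ∪ T := by
            intro h
            rcases Finset.mem_union.mp h with h | h
            · exact (Finset.mem_filter.mp h).2 (Finset.mem_filter.mp haS₁).2
            · exact haT h
          have hUcard : (S₂ ∪ T).card < m := by
            rw [← hScard]
            apply Finset.card_lt_card
            rw [Finset.ssubset_def]
            exact ⟨hU_sub, fun hc => haU (hc (hS₁sub haS₁))⟩
          obtain ⟨hUpos, hUq⟩ := IH' _ hUcard
          have hstep := hUq a haU
          have heq : insert a (S₂ ∪ T) = S₂ ∪ insert a T := by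
            rw [Finset.union_insert]
          rw [heq] at hstep
          have hTbound := ih hT
          rw [Finset.prod_insert haT, mul_assoc]
          exact le_trans (mul_le_mul_of_nonneg_left hTbound (hy1' a).le) hstep
      have hchainS : (∏ j ∈ S₁, (1 - y j)) * (Module.finrank K ↥(⨅ j ∈ S₂, X j) : ℝ)
          ≤ (Module.finrank K ↥(⨅ j ∈ S, X j) : ℝ) := by
        have h := chain S₁ (subset_refl S₁)
        rwa [hunion] at h
      -- independence over S₂
      have hc := hcross i S₂ hS₂no hS₂pos
      -- dimension inequality
      have hYle : (⨅ j ∈ S, X j) ≤ ⨅ j ∈ S₂, X j := by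
        refine le_iInf₂ fun j hj => ?_
        exact iInf₂_le j (hS₂sub hj)
      have hA : (X i ⊓ ⨅ j ∈ S₂, X j) ≤ ⨅ j ∈ S₂, X j := inf_le_right
      have hdim := Submodule.finrank_sup_add_finrank_inf_eq
        (X i ⊓ ⨅ j ∈ S₂, X j) (⨅ j ∈ S, X j)
      have hsup : Module.finrank K ↥((X i ⊓ ⨅ j ∈ S₂, X j) ⊔ ⨅ j ∈ S, X j)
          ≤ Module.finrank K ↥(⨅ j ∈ S₂, X j) :=
        Submodule.finrank_mono (sup_le hA hYle)
      have hinf_eq : (X i ⊓ ⨅ j ∈ S₂, X j) ⊓ ⨅ j ∈ S, X j = X i ⊓ ⨅ j ∈ S, X j := by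
        rw [inf_assoc]
        congr 1
        exact inf_eq_right.mpr hYle
      rw [hinf_eq] at hdim
      have hnat : Module.finrank K ↥(X i ⊓ ⨅ j ∈ S₂, X j)
            + Module.finrank K ↥(⨅ j ∈ S, X j)
          ≤ Module.finrank K ↥(⨅ j ∈ S₂, X j)
            + Module.finrank K ↥(X i ⊓ ⨅ j ∈ S, X j) := by omega
      have hnatR : (Module.finrank K ↥(X i ⊓ ⨅ j ∈ S₂, X j) : ℝ)
            + (Module.finrank K ↥(⨅ j ∈ S, X j) : ℝ)
          ≤ (Module.finrank K ↥(⨅ j ∈ S₂, X j) : ℝ)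
            + (Module.finrank K ↥(X i ⊓ ⨅ j ∈ S, X j) : ℝ) := by exact_mod_cast hnat
      -- the hypothesis hR, multiplied by D
      have h1' : (Module.finrank K V : ℝ) - (Module.finrank K ↥(X i) : ℝ)
          ≤ y i * (∏ j ∈ Finset.univ.filter (fun j => (i, j) ∈ E), (1 - y j))
            * (Module.finrank K V : ℝ) := by
        have h1 := hR i
        have h2 : ((relDim K (X i) : ℚ) : ℝ)
            = (Module.finrank K ↥(X i) : ℝ) / (Module.finrank K V : ℝ) := by
          unfold relDim; push_cast; ring
        rw [h2] at h1
        have h3 := (le_div_iff₀ hD0).mp h1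
        nlinarith [h3]
      -- product over all neighbours vs product over neighbours in S
      have hS₁N : S₁ ⊆ Finset.univ.filter (fun j => (i, j) ∈ E) := by
        intro j hj
        exact Finset.mem_filter.mpr ⟨Finset.mem_univ j, (Finset.mem_filter.mp hj).2⟩
      have h2 : ∏ j ∈ Finset.univ.filter (fun j => (i, j) ∈ E), (1 - y j)
          ≤ ∏ j ∈ S₁, (1 - y j) := by
        calc ∏ j ∈ Finset.univ.filter (fun j => (i, j) ∈ E), (1 - y j)
            = (∏ j ∈ (Finset.univ.filter (fun j => (i, j) ∈ E)) \ S₁, (1 - y j))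
                * ∏ j ∈ S₁, (1 - y j) := (Finset.prod_sdiff hS₁N).symm
          _ ≤ 1 * ∏ j ∈ S₁, (1 - y j) :=
              mul_le_mul_of_nonneg_right (hprod_le_one _) (hprod_pos _).le
          _ = _ := one_mul _
      -- now combine everything, multiplied through by D
      rw [hins]
      have hgoal' : (1 - y i) * (Module.finrank K ↥(⨅ j ∈ S, X j) : ℝ)
            * (Module.finrank K V : ℝ)
          ≤ (Module.finrank K ↥(X i ⊓ ⨅ j ∈ S, X j) : ℝ) * (Module.finrank K V : ℝ) := by
        have p1 := mul_le_mul_of_nonneg_right h1' hS₂0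
        have p2 : y i * (∏ j ∈ Finset.univ.filter (fun j => (i, j) ∈ E), (1 - y j))
              * (Module.finrank K V : ℝ) * (Module.finrank K ↥(⨅ j ∈ S₂, X j) : ℝ)
            ≤ y i * (∏ j ∈ S₁, (1 - y j))
              * (Module.finrank K V : ℝ) * (Module.finrank K ↥(⨅ j ∈ S₂, X j) : ℝ) := by
          have := mul_le_mul_of_nonneg_right h2
            (by positivity : (0:ℝ) ≤ (Module.finrank K V : ℝ)
              * (Module.finrank K ↥(⨅ j ∈ S₂, X j) : ℝ))
          linarith [mul_le_mul_of_nonneg_left this (hy0 i)]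
        have p3 := mul_le_mul_of_nonneg_left hchainS
          (mul_nonneg (hy0 i) hD0.le)
        have p4 := mul_le_mul_of_nonneg_right hnatR hD0.le
        linarith [p1, p2, p3, p4, hc]
      exact le_of_mul_le_mul_right hgoal' hD0
  -- assemble: the product bound for every finite set
  have final : ∀ T : Finset (Fin n),
      (∏ j ∈ T, (1 - y j)) * (Module.finrank K V : ℝ)
        ≤ (Module.finrank K ↥(⨅ j ∈ T, X j) : ℝ) := by
    intro T
    induction T using Finset.induction_on with
    | empty =>
      have he : (⨅ j ∈ (∅ : Finset (Fin n)), X j) = ⊤ := by simp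
      rw [he, finrank_top, Finset.prod_empty, one_mul]
    | @insert a T haT ih =>
      have hq := (key T.card T rfl).2 a haT
      rw [Finset.prod_insert haT, mul_assoc]
      exact le_trans (mul_le_mul_of_nonneg_left ih (hy1' a).le) hq
  have hfin := final Finset.univ
  have huniv : (⨅ j ∈ Finset.univ, X j) = ⨅ i, X i := by simp
  rw [huniv] at hfin
  have hcast : ((relDim K (⨅ i, X i) : ℚ) : ℝ)
      = (Module.finrank K ↥(⨅ i, X i) : ℝ) / (Module.finrank K V : ℝ) := by
    unfold relDim; push_cast; ring
  rw [hcast, le_div_iff₀ hD0]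
  exact hfin
end

section
/- Let X_1, X_2, …, X_n be subspaces of a finite-dimensional vector space V with dependency graph G = ([n], E), and suppose there exist real numbers 0 ≤ y_1, …, y_n < 1 such that R(X_i) ≥ 1 − y_i · ∏_{j : (i,j) ∈ E} (1 − y_j) for every i. Then for every subset S ⊆ [n] and every i ∈ [n], the intersection ⋂_{j ∈ S} X_j is a nonzero subspace and R(X_i | ⋂_{j ∈ S} X_j) ≥ 1 − y_i. -/
/-- Key lemma of the quantum Lovász Local Lemma: under the hypotheses of the asymmetric
QLLL, for every subset `S` of the indices and every `i`, the intersection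
`⋂_{j ∈ S} X j` is a nonzero subspace and `R(X i | ⋂_{j ∈ S} X j) ≥ 1 - y i`. -/
theorem quantum_LLL_key_lemma {K V : Type*} [Field K] [AddCommGroup V] [Module K V]
    [FiniteDimensional K V] [Nontrivial V]
    (n : ℕ) (X : Fin n → Submodule K V) (E : Finset (Fin n × Fin n))
    (hdep : ∀ i : Fin n, ∀ S : Finset (Fin n), (∀ j ∈ S, (i, j) ∉ E) →
        condDim K (X i) (⨅ j ∈ S, X j) = relDim K (X i))
    (y : Fin n → ℝ) (hy0 : ∀ i, 0 ≤ y i) (hy1 : ∀ i, y i < 1)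
    (hR : ∀ i, 1 - y i * ∏ j ∈ Finset.univ.filter (fun j => (i, j) ∈ E), (1 - y j)
        ≤ ((relDim K (X i) : ℚ) : ℝ)) :
    ∀ S : Finset (Fin n), ∀ i : Fin n,
      (⨅ j ∈ S, X j) ≠ ⊥ ∧
      1 - y i ≤ ((condDim K (X i) (⨅ j ∈ S, X j) : ℚ) : ℝ) := by
  classical
  have hNpos : (0:ℝ) < (Module.finrank K V : ℝ) := by
    exact_mod_cast Module.finrank_pos (R := K) (M := V)
  have Dpos : ∀ T : Finset (Fin n), (⨅ j ∈ T, X j) ≠ ⊥ →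
      (0:ℝ) < (Module.finrank K ↥(⨅ j ∈ T, X j) : ℝ) := by
    intro T hT
    have h0 : Module.finrank K ↥(⨅ j ∈ T, X j) ≠ 0 := fun h =>
      hT (Submodule.finrank_eq_zero.mp h)
    exact_mod_cast Nat.pos_of_ne_zero h0
  have hcond : ∀ (A B : Submodule K V), ((condDim K A B : ℚ) : ℝ)
      = (Module.finrank K ↥(A ⊓ B) : ℝ) / (Module.finrank K ↥B : ℝ) := by
    intro A B
    unfold condDim
    push_cast
    ring
  intro S
  induction S using Finset.strongInduction with
  | _ S ih =>
    -- from the induction hypothesis: intersecting with one more subspace over a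
    -- strict subset loses at most a factor (1 - y j)
    have key : ∀ T, T ⊂ S → ∀ j : Fin n,
        (1 - y j) * (Module.finrank K ↥(⨅ k ∈ T, X k) : ℝ)
          ≤ (Module.finrank K ↥(X j ⊓ ⨅ k ∈ T, X k) : ℝ) := by
      intro T hT j
      obtain ⟨hTb, hTc⟩ := ih T hT j
      have hDT := Dpos T hTb
      rw [hcond] at hTc
      exact (le_div_iff₀ hDT).mp hTc
    have hbot : (⨅ j ∈ S, X j) ≠ ⊥ := by
      rcases S.eq_empty_or_nonempty with rfl | ⟨i0, hi0⟩
      · simp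
      · have hsub := Finset.erase_ssubset hi0
        have h1 := key _ hsub i0
        have hDT := Dpos _ (ih _ hsub i0).1
        have hrw : (⨅ j ∈ S, X j) = X i0 ⊓ ⨅ j ∈ S.erase i0, X j := by
          conv_lhs => rw [← Finset.insert_erase hi0]
          rw [Finset.iInf_insert]
        rw [hrw]
        intro hb
        rw [hb] at h1
        rw [show Module.finrank K (↥(⊥ : Submodule K V)) = 0 from finrank_bot K V, Nat.cast_zero] at h1
        nlinarith [hy1 i0]
    intro i
    refine ⟨hbot, ?_⟩
    have hDS := Dpos _ hbot
    set S1 : Finset (Fin n) := S.filter (fun j => (i, j) ∈ E) with hS1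
    set S2 : Finset (Fin n) := S.filter (fun j => (i, j) ∉ E) with hS2
    have hU : S1 ∪ S2 = S := Finset.filter_union_filter_not_eq _ S
    have hS2sub : S2 ⊆ S := Finset.filter_subset _ _
    have hY2bot : (⨅ j ∈ S2, X j) ≠ ⊥ := by
      rcases eq_or_ne S2 S with h | h
      · rw [h]; exact hbot
      · exact (ih S2 (lt_of_le_of_ne hS2sub h) i).1
    have hD2 := Dpos _ hY2bot
    -- peeling: the intersection over T ∪ S2 has dimension at least
    -- (∏_{j ∈ T} (1 - y j)) times that over S2
    have peel : ∀ T : Finset (Fin n), T ⊆ S1 →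
        (∏ j ∈ T, (1 - y j)) * (Module.finrank K ↥(⨅ j ∈ S2, X j) : ℝ)
          ≤ (Module.finrank K ↥(⨅ j ∈ T ∪ S2, X j) : ℝ) := by
      intro T
      induction T using Finset.induction_on with
      | empty => intro _; rw [Finset.empty_union, Finset.prod_empty, one_mul]
      | @insert a T ha ihT =>
        intro hsub
        have haS1 : a ∈ S1 := hsub (Finset.mem_insert_self a T)
        have hTsub : T ⊆ S1 := fun x hx => hsub (Finset.mem_insert_of_mem hx)
        have haE : (i, a) ∈ E := (Finset.mem_filter.mp haS1).2
        have haS : a ∈ S := (Finset.mem_filter.mp haS1).1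
        have haS2 : a ∉ S2 := fun h => (Finset.mem_filter.mp h).2 haE
        have hTS2 : T ∪ S2 ⊂ S := by
          refine Finset.ssubset_iff_of_subset ?_ |>.mpr ⟨a, haS, ?_⟩
          · exact Finset.union_subset (hTsub.trans (Finset.filter_subset _ _)) hS2sub
          · simp only [Finset.mem_union, not_or]
            exact ⟨ha, haS2⟩
        have hrw : (⨅ j ∈ insert a T ∪ S2, X j) = X a ⊓ ⨅ j ∈ T ∪ S2, X j := by
          rw [Finset.insert_union, Finset.iInf_insert]
        have h1 := key _ hTS2 a
        have h2 := ihT hTsub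
        have hya : (0:ℝ) ≤ 1 - y a := by linarith [hy1 a]
        rw [hrw, Finset.prod_insert ha, mul_assoc]
        exact le_trans (mul_le_mul_of_nonneg_left h2 hya) h1
    have hpeelS := peel S1 (subset_refl _)
    rw [hU] at hpeelS
    -- the product over S1
    have hp0 : (0:ℝ) < ∏ j ∈ S1, (1 - y j) :=
      Finset.prod_pos fun j _ => by linarith [hy1 j]
    -- the dependency hypothesis applied to S2
    have hdep2 := hdep i S2 (fun j hj => (Finset.mem_filter.mp hj).2)
    have hdep2' : (Module.finrank K ↥(X i ⊓ ⨅ j ∈ S2, X j) : ℝ)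
        = (Module.finrank K ↥(X i) : ℝ) / (Module.finrank K V : ℝ)
          * (Module.finrank K ↥(⨅ j ∈ S2, X j) : ℝ) := by
      have hcast : ((condDim K (X i) (⨅ j ∈ S2, X j) : ℚ) : ℝ)
          = ((relDim K (X i) : ℚ) : ℝ) := by rw [hdep2]
      have hrel : ((relDim K (X i) : ℚ) : ℝ)
          = (Module.finrank K ↥(X i) : ℝ) / (Module.finrank K V : ℝ) := by
        unfold relDim; push_cast; ring
      rw [hcond, hrel] at hcast
      exact (div_eq_iff hD2.ne').mp hcast
    -- hR bound, with the product restricted to S1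
    have hrprod : ∏ j ∈ Finset.univ.filter (fun j => (i, j) ∈ E), (1 - y j)
        ≤ ∏ j ∈ S1, (1 - y j) := by
      have hsub : S1 ⊆ Finset.univ.filter (fun j => (i, j) ∈ E) := fun j hj =>
        Finset.mem_filter.mpr ⟨Finset.mem_univ j, (Finset.mem_filter.mp hj).2⟩
      rw [← Finset.prod_sdiff hsub]
      have h1 : ∏ j ∈ Finset.univ.filter (fun j => (i, j) ∈ E) \ S1, (1 - y j) ≤ 1 :=
        Finset.prod_le_one (fun j _ => by linarith [hy1 j]) (fun j _ => by linarith [hy0 j])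
      nlinarith [mul_le_mul_of_nonneg_right h1 hp0.le]
    have hr : 1 - y i * ∏ j ∈ S1, (1 - y j)
        ≤ (Module.finrank K ↥(X i) : ℝ) / (Module.finrank K V : ℝ) := by
      have h0 := hR i
      have hrel : ((relDim K (X i) : ℚ) : ℝ)
          = (Module.finrank K ↥(X i) : ℝ) / (Module.finrank K V : ℝ) := by
        unfold relDim; push_cast; ring
      rw [hrel] at h0
      nlinarith [mul_le_mul_of_nonneg_left hrprod (hy0 i)]
    -- the submodule dimension formula
    have hle : (⨅ j ∈ S, X j) ≤ ⨅ j ∈ S2, X j := by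
      conv_lhs => rw [← hU]
      rw [Finset.iInf_union]
      exact inf_le_right
    have hAB : (X i ⊓ ⨅ j ∈ S2, X j) ⊓ ⨅ j ∈ S, X j = X i ⊓ ⨅ j ∈ S, X j := by
      rw [inf_assoc, inf_eq_right.mpr hle]
    have heq := Submodule.finrank_sup_add_finrank_inf_eq
      (X i ⊓ ⨅ j ∈ S2, X j) (⨅ j ∈ S, X j)
    rw [hAB] at heq
    have hsuple : (X i ⊓ ⨅ j ∈ S2, X j) ⊔ ⨅ j ∈ S, X j ≤ ⨅ j ∈ S2, X j :=
      sup_le inf_le_right hle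
    have hsupd : (Module.finrank K ↥((X i ⊓ ⨅ j ∈ S2, X j) ⊔ ⨅ j ∈ S, X j) : ℝ)
        ≤ (Module.finrank K ↥(⨅ j ∈ S2, X j) : ℝ) := by
      exact_mod_cast Submodule.finrank_mono hsuple
    have heqR : (Module.finrank K ↥((X i ⊓ ⨅ j ∈ S2, X j) ⊔ ⨅ j ∈ S, X j) : ℝ)
        + (Module.finrank K ↥(X i ⊓ ⨅ j ∈ S, X j) : ℝ)
        = (Module.finrank K ↥(X i ⊓ ⨅ j ∈ S2, X j) : ℝ)
        + (Module.finrank K ↥(⨅ j ∈ S, X j) : ℝ) := by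
      exact_mod_cast heq
    -- put everything together
    rw [hcond, le_div_iff₀ hDS]
    nlinarith [mul_le_mul_of_nonneg_right hr hD2.le,
      mul_le_mul_of_nonneg_left hpeelS (hy0 i), hy0 i, hD2, hDS, hp0, heqR, hsupd, hdep2']
end

section
/- Let X_1, X_2, …, X_n be subspaces of a finite-dimensional vector space V such that R(X_i) ≥ 1 − p for every i, and such that each X_i is mutually R-independent of all but at most d of the other subspaces, where d ≥ 1. If p · e · (d+1) ≤ 1, then R(⋂_{i=1}^n X_i) ≥ (1 − 1/(d+1))^n. -/
open Module

section Aux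

variable {K V : Type*} [Field K] [AddCommGroup V] [Module K V] [FiniteDimensional K V]

/-- codimension monotonicity -/
lemma aux_codim_mono (U : Submodule K V) {A B : Submodule K V} (h : A ≤ B) :
    (finrank K A : ℝ) + (finrank K ↥(U ⊓ B) : ℝ) ≤
      (finrank K B : ℝ) + (finrank K ↥(U ⊓ A) : ℝ) := by
  have h1 := Submodule.finrank_sup_add_finrank_inf_eq U A
  have h2 := Submodule.finrank_sup_add_finrank_inf_eq U B
  have h3 : finrank K ↥(U ⊔ A) ≤ finrank K ↥(U ⊔ B) :=
    Submodule.finrank_mono (sup_le_sup_left h U)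
  have : finrank K A + finrank K ↥(U ⊓ B) ≤ finrank K B + finrank K ↥(U ⊓ A) := by omega
  exact_mod_cast this

end Aux

lemma aux_num (d : ℕ) (hd : 1 ≤ d) (p : ℝ) (hpd : p * Real.exp 1 * (d + 1) ≤ 1) :
    p ≤ (1 / ((d : ℝ) + 1)) * (1 - 1 / ((d : ℝ) + 1)) ^ d := by
  have hd0 : (0 : ℝ) < d := by exact_mod_cast hd
  have hd1 : (0 : ℝ) < (d : ℝ) + 1 := by linarith
  have he : (0 : ℝ) < Real.exp 1 := Real.exp_pos 1
  have h1 : (1 + 1 / (d : ℝ)) ^ d ≤ Real.exp 1 := by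
    have h2 : 1 + 1 / (d : ℝ) ≤ Real.exp (1 / d) := by
      have := Real.add_one_le_exp (1 / (d : ℝ)); linarith
    calc (1 + 1 / (d : ℝ)) ^ d ≤ (Real.exp (1 / d)) ^ d := by
          apply pow_le_pow_left₀ (by positivity) h2
      _ = Real.exp ((d : ℝ) * (1 / d)) := (Real.exp_nat_mul _ d).symm
      _ = Real.exp 1 := by rw [mul_one_div_cancel (ne_of_gt hd0)]
  have hkey : (Real.exp 1)⁻¹ ≤ (1 - 1 / ((d : ℝ) + 1)) ^ d := by
    have heq : 1 - 1 / ((d : ℝ) + 1) = (1 + 1 / (d : ℝ))⁻¹ := by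
      field_simp; ring
    rw [heq, inv_pow]
    exact inv_anti₀ (by positivity) h1
  have hp1 : p ≤ 1 / (Real.exp 1 * ((d : ℝ) + 1)) := by
    rw [le_div_iff₀ (by positivity)]
    nlinarith
  calc p ≤ 1 / (Real.exp 1 * ((d : ℝ) + 1)) := hp1
    _ = (1 / ((d : ℝ) + 1)) * (Real.exp 1)⁻¹ := by field_simp
    _ ≤ (1 / ((d : ℝ) + 1)) * (1 - 1 / ((d : ℝ) + 1)) ^ d := by
        apply mul_le_mul_of_nonneg_left hkey (by positivity)
/-- Quantitative symmetric quantum Lovász local lemma: under the hypotheses of the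
symmetric QLLL (with `d ≥ 1`), `R(⋂ i, X i) ≥ (1 - 1/(d+1))^n`. -/
theorem symmetric_quantum_LLL_bound {K V : Type*} [Field K] [AddCommGroup V] [Module K V]
    [FiniteDimensional K V] [Nontrivial V]
    (n : ℕ) (X : Fin n → Submodule K V) (p : ℝ) (d : ℕ) (hd : 1 ≤ d)
    (hp : ∀ i, 1 - p ≤ ((relDim K (X i) : ℚ) : ℝ))
    (hdep : ∀ i : Fin n, ∃ J : Finset (Fin n), i ∉ J ∧ J.card ≤ d ∧
        ∀ S : Finset (Fin n), (∀ j ∈ S, j ∉ J ∧ j ≠ i) →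
          condDim K (X i) (⨅ j ∈ S, X j) = relDim K (X i))
    (hpd : p * Real.exp 1 * (d + 1) ≤ 1) :
    (1 - 1 / ((d : ℝ) + 1)) ^ n ≤ ((relDim K (⨅ i, X i) : ℚ) : ℝ) := by
  classical
  set x : ℝ := 1 / ((d : ℝ) + 1) with hxdef
  have hd1 : (0 : ℝ) < (d : ℝ) + 1 := by positivity
  have hdR : (1 : ℝ) ≤ (d : ℝ) := by exact_mod_cast hd
  have hx0 : 0 < x := by positivity
  have hx1 : x < 1 := by
    rw [hxdef, div_lt_one hd1]; linarith
  have h1x0 : 0 < 1 - x := by linarith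
  have h1x1 : 1 - x ≤ 1 := by linarith
  have hxp : p ≤ x * (1 - x) ^ d := aux_num d hd p hpd
  have hV : (0 : ℝ) < (Module.finrank K V : ℝ) := by
    exact_mod_cast Module.finrank_pos (R := K) (M := V)
  -- notation
  set f : Submodule K V → ℝ := fun U => (Module.finrank K ↥U : ℝ) with hfdef
  have hf0 : ∀ U : Submodule K V, 0 ≤ f U := fun U => Nat.cast_nonneg _
  have hfmono : ∀ {A B : Submodule K V}, A ≤ B → f A ≤ f B := fun h =>
    Nat.cast_le.2 (Submodule.finrank_mono h)
  set W : Finset (Fin n) → Submodule K V := fun S => ⨅ j ∈ S, X j with hWdef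
  have hWmono : ∀ {S T : Finset (Fin n)}, S ⊆ T → W T ≤ W S := by
    intro S T hST
    exact le_iInf fun j => le_iInf fun hj => iInf₂_le j (hST hj)
  have hWempty : W ∅ = ⊤ := by simp [hWdef]
  have hWinsert : ∀ (k : Fin n) (S : Finset (Fin n)), W (insert k S) = X k ⊓ W S := by
    intro k S; simp [hWdef, Finset.iInf_insert]
  have hftop : f ⊤ = (Module.finrank K V : ℝ) := by
    simp [hfdef, finrank_top]
  -- relDim / condDim casts
  have hrelcast : ∀ U : Submodule K V, ((relDim K U : ℚ) : ℝ) = f U / (Module.finrank K V : ℝ) := by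
    intro U; rw [hfdef]; push_cast [relDim]; ring
  have hcondcast : ∀ U Y : Submodule K V, ((condDim K U Y : ℚ) : ℝ) = f (U ⊓ Y) / f Y := by
    intro U Y; rw [hfdef]; push_cast [condDim]; ring
  -- p is nonneg (given any index; used only when an index exists)
  have hp0 : ∀ _ : Fin n, 0 ≤ p := by
    intro i
    have h1 := hp i
    rw [hrelcast] at h1
    have h2 : f (X i) ≤ (Module.finrank K V : ℝ) :=
      Nat.cast_le.2 (Submodule.finrank_le (X i))
    have h3 : f (X i) / (Module.finrank K V : ℝ) ≤ 1 := by
      rw [div_le_one hV]; exact h2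
    linarith
  -- the main inductive claim
  have hchain : ∀ (j m : ℕ),
      (∀ S : Finset (Fin n), S.card ≤ m →
        0 < f (W S) ∧ ∀ i ∉ S, (1 - x) * f (W S) ≤ f (X i ⊓ W S)) →
      ∀ A B : Finset (Fin n), A ⊆ B → B.card ≤ m + 1 → B.card ≤ A.card + j →
      (1 - x) ^ j * f (W A) ≤ f (W B) := by
    intro j
    induction j with
    | zero =>
      intro m _ A B hAB _ hcard
      have hle := Finset.card_le_card hAB
      obtain rfl : A = B := Finset.eq_of_subset_of_card_le hAB (by omega)
      simp
    | succ j ihj =>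
      intro m hPm A B hAB hBm hcard
      by_cases hc : B.card ≤ A.card + j
      · calc (1 - x) ^ (j + 1) * f (W A) ≤ (1 - x) ^ j * f (W A) := by
              apply mul_le_mul_of_nonneg_right _ (hf0 _)
              exact pow_le_pow_of_le_one (le_of_lt h1x0) h1x1 (Nat.le_succ j)
          _ ≤ f (W B) := ihj m hPm A B hAB hBm hc
      · have hlt : A.card < B.card := by omega
        have hne : ∃ k, k ∈ B ∧ k ∉ A := by
          by_contra h
          push_neg at h
          have : B ⊆ A := fun k hk => h k hk
          have := Finset.card_le_card this; omega
        obtain ⟨k, hkB, hkA⟩ := hne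
        set B' := B.erase k with hB'
        have hAB' : A ⊆ B' := fun a ha => Finset.mem_erase.2 ⟨fun h => hkA (h ▸ ha), hAB ha⟩
        have hkB' : k ∉ B' := Finset.notMem_erase k B
        have hcardB' : B'.card = B.card - 1 := Finset.card_erase_of_mem hkB
        have hins : insert k B' = B := Finset.insert_erase hkB
        have hstep : (1 - x) * f (W B') ≤ f (X k ⊓ W B') :=
          (hPm B' (by omega)).2 k hkB'
        have hrec : (1 - x) ^ j * f (W A) ≤ f (W B') :=
          ihj m hPm A B' hAB' (by omega) (by omega)
        calc (1 - x) ^ (j + 1) * f (W A) = (1 - x) * ((1 - x) ^ j * f (W A)) := by ring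
          _ ≤ (1 - x) * f (W B') := by
              apply mul_le_mul_of_nonneg_left hrec (le_of_lt h1x0)
          _ ≤ f (X k ⊓ W B') := hstep
          _ = f (W B) := by rw [← hins, hWinsert]
  have main : ∀ m : ℕ, ∀ S : Finset (Fin n), S.card ≤ m →
      0 < f (W S) ∧ ∀ i ∉ S, (1 - x) * f (W S) ≤ f (X i ⊓ W S) := by
    intro m
    induction m with
    | zero =>
      intro S hS
      have hSe : S = ∅ := Finset.card_eq_zero.1 (Nat.le_zero.1 hS)
      subst hSe
      rw [hWempty, hftop]
      constructor
      · exact hV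
      · intro i _
        have h1 := hp i
        rw [hrelcast] at h1
        have h2 : (1 - p) * (Module.finrank K V : ℝ) ≤ f (X i) := by
          rw [← le_div_iff₀ hV] at *; exact h1
        have hpx : p ≤ x := le_trans hxp (by
          nlinarith [pow_le_one₀ (le_of_lt h1x0) h1x1 (n := d)])
        have : f (X i ⊓ ⊤) = f (X i) := by rw [inf_top_eq]
        rw [this]
        nlinarith
    | succ m ihm =>
      intro S hS
      have ha : 0 < f (W S) := by
        rcases Finset.eq_empty_or_nonempty S with hSe | ⟨k, hk⟩
        · subst hSe; rw [hWempty, hftop]; exact hV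
        · set S' := S.erase k with hS'
          have hins : insert k S' = S := Finset.insert_erase hk
          have hcard : S'.card ≤ m := by
            have h1 : S'.card = S.card - 1 := Finset.card_erase_of_mem hk
            have h2 : 0 < S.card := Finset.card_pos.2 ⟨k, hk⟩
            omega
          obtain ⟨hpos', hb'⟩ := ihm S' hcard
          have := hb' k (Finset.notMem_erase k S)
          have h2 : 0 < (1 - x) * f (W S') := by positivity
          have h3 : (0:ℝ) < f (X k ⊓ W S') := lt_of_lt_of_le h2 this
          rw [← hins, hWinsert]; exact h3
      refine ⟨ha, ?_⟩
      intro i hi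
      obtain ⟨J, hiJ, hJd, hJind⟩ := hdep i
      set S₂ := S \ J with hS₂
      have h2S : S₂ ⊆ S := Finset.sdiff_subset
      have hcond : condDim K (X i) (W S₂) = relDim K (X i) := by
        apply hJind
        intro j hj
        rcases Finset.mem_sdiff.1 hj with ⟨hjS, hjJ⟩
        exact ⟨hjJ, fun h => hi (h ▸ hjS)⟩
      have hpos2 : 0 < f (W S₂) := by
        by_cases h : S₂ = S
        · rw [h]; exact ha
        · have hss : S₂ ⊂ S := lt_of_le_of_ne h2S h
          have := Finset.card_lt_card hss
          exact (ihm S₂ (by omega)).1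
      -- (1-p) f(W S₂) ≤ f(X i ⊓ W S₂)
      have hXi2 : (1 - p) * f (W S₂) ≤ f (X i ⊓ W S₂) := by
        have h1 := congrArg (fun q : ℚ => (q : ℝ)) hcond
        rw [hcondcast, hrelcast] at h1
        have h2 := hp i
        rw [hrelcast] at h2
        rw [← h1] at h2
        rw [← le_div_iff₀ hpos2]; exact h2
      -- codim monotonicity
      have hcm := aux_codim_mono (X i) (hWmono h2S)
      -- chain bound:  (1-x)^d * f (W S₂) ≤ f (W S)
      have hcardS : S.card ≤ S₂.card + (S ∩ J).card := by
        have h5 : S₂.card + (S ∩ J).card = S.card := by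
          rw [hS₂]; exact Finset.card_sdiff_add_card_inter S J
        omega
      have hc1 : (1 - x) ^ (S ∩ J).card * f (W S₂) ≤ f (W S) :=
        hchain (S ∩ J).card m ihm S₂ S h2S hS hcardS
      have hcJ : (S ∩ J).card ≤ d := le_trans (Finset.card_le_card (Finset.inter_subset_right)) hJd
      have hc2 : (1 - x) ^ d * f (W S₂) ≤ f (W S) := by
        refine le_trans (mul_le_mul_of_nonneg_right ?_ (hf0 _)) hc1
        exact pow_le_pow_of_le_one (le_of_lt h1x0) h1x1 hcJ
      -- put it together
      have hp0' := hp0 i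
      have hkey : p * f (W S₂) ≤ x * f (W S) :=
        calc p * f (W S₂) ≤ (x * (1 - x) ^ d) * f (W S₂) :=
              mul_le_mul_of_nonneg_right hxp (hf0 _)
          _ = x * ((1 - x) ^ d * f (W S₂)) := by ring
          _ ≤ x * f (W S) := mul_le_mul_of_nonneg_left hc2 (le_of_lt hx0)
      -- f(W S₂) - f(X i ⊓ W S₂) ≤ p f(W S₂)
      have hdiff : f (W S) - f (X i ⊓ W S) ≤ p * f (W S₂) := by
        have : f (W S₂) - f (X i ⊓ W S₂) ≤ p * f (W S₂) := by nlinarith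
        have h4 := hcm  -- f(W S) + f(Xi ⊓ W S₂) ≤ f(W S₂) + f(Xi ⊓ W S)
        simp only [hfdef] at *
        linarith
      linarith
  -- conclusion
  have huniv : W Finset.univ = ⨅ i, X i := by
    apply le_antisymm
    · exact le_iInf fun i => iInf₂_le i (Finset.mem_univ i)
    · exact le_iInf fun i => le_iInf fun _ => iInf_le _ i
  have hfin : (1 - x) ^ n * f (W ∅) ≤ f (W Finset.univ) := by
    apply hchain n n (main n) ∅ Finset.univ (Finset.empty_subset _)
    · simp
    · simp
  rw [hWempty, hftop, huniv] at hfin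
  rw [hrelcast, le_div_iff₀ hV]
  exact hfin
end

section
/- Let {Π_1, …, Π_m} be a k-QSAT instance on n qubits in which every projector Π_i has rank 1 and acts on a set S_i of exactly k qubits. If every qubit appears in at most 2^k/(e · k) of the sets S_1, …, S_m, then the instance is satisfiable: there exists a nonzero state |Ψ⟩ ∈ V with Π_i |Ψ⟩ = 0 for all 1 ≤ i ≤ m. -/
/-- The Hilbert space of `n` qubits, identified with functions from computational-basis
configurations `Fin n → Fin 2` to `ℂ` (i.e. the `n`-fold tensor product of `ℂ²`),
with operators represented as matrices in the computational basis. -/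
abbrev QubitConfig (n : ℕ) := Fin n → Fin 2

/-- The matrix (in the computational basis of `n` qubits) of the operator `π ⊗ I`, where
`π` is an operator on the qubits in `S` with matrix `A` and `I` is the identity on the
remaining qubits: the entry at `(x, y)` is `A (x|_S) (y|_S)` if `x` and `y` agree outside
`S`, and `0` otherwise. -/
def extendMatrix (n : ℕ) (S : Finset (Fin n))
    (A : Matrix ({j : Fin n // j ∈ S} → Fin 2) ({j : Fin n // j ∈ S} → Fin 2) ℂ) :
    Matrix (QubitConfig n) (QubitConfig n) ℂ :=
  Matrix.of fun x y =>
    if ∀ j ∉ S, x j = y j then A (fun j => x j.1) (fun j => y j.1) else 0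

/-- `P` is a `k`-local projector of rank `r` acting on the set `S` of qubits: `P = π ⊗ I`
where `π` is an orthogonal projection (a Hermitian idempotent) of rank `r` on the qubits
in `S`. -/
def IsLocalProjector (n : ℕ) (S : Finset (Fin n)) (r : ℕ)
    (P : Matrix (QubitConfig n) (QubitConfig n) ℂ) : Prop :=
  ∃ A : Matrix ({j : Fin n // j ∈ S} → Fin 2) ({j : Fin n // j ∈ S} → Fin 2) ℂ,
    A.IsHermitian ∧ A * A = A ∧ A.rank = r ∧ P = extendMatrix n S A

namespace QLLL

open Module Finset

variable {n : ℕ}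

/-- configurations of qubits inside `S` -/
abbrev In (S : Finset (Fin n)) := {j : Fin n // j ∈ S} → Fin 2
/-- configurations of qubits outside `S` -/
abbrev Out (S : Finset (Fin n)) := {j : Fin n // j ∉ S} → Fin 2

def glue (S : Finset (Fin n)) (a : In S) (b : Out S) : QubitConfig n :=
  fun j => if h : j ∈ S then a ⟨j, h⟩ else b ⟨j, h⟩

lemma glue_in {S : Finset (Fin n)} (a : In S) (b : Out S) {j : Fin n} (h : j ∈ S) :
    glue S a b j = a ⟨j, h⟩ := dif_pos h

lemma glue_out {S : Finset (Fin n)} (a : In S) (b : Out S) {j : Fin n} (h : j ∉ S) :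
    glue S a b j = b ⟨j, h⟩ := dif_neg h

lemma glue_self {S : Finset (Fin n)} (x : QubitConfig n) :
    glue S (fun j => x j.1) (fun j => x j.1) = x := by
  funext j; by_cases h : j ∈ S <;> simp [glue, h]

lemma restrIn_glue {S : Finset (Fin n)} (a : In S) (b : Out S) :
    (fun j : {j : Fin n // j ∈ S} => glue S a b j.1) = a := by
  funext j; exact glue_in a b j.2

lemma restrOut_glue {S : Finset (Fin n)} (a : In S) (b : Out S) :
    (fun j : {j : Fin n // j ∉ S} => glue S a b j.1) = b := by
  funext j; exact glue_out a b j.2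

def configEquiv (S : Finset (Fin n)) : QubitConfig n ≃ In S × Out S where
  toFun x := (fun j => x j.1, fun j => x j.1)
  invFun p := glue S p.1 p.2
  left_inv x := glue_self x
  right_inv p := by cases p with
  | mk a b => simp [restrIn_glue, restrOut_glue]

/-- slicing a state at in-configuration `a` -/
def sliceL (S : Finset (Fin n)) (a : In S) : (QubitConfig n → ℂ) →ₗ[ℂ] (Out S → ℂ) where
  toFun ψ := fun b => ψ (glue S a b)
  map_add' _ _ := rfl
  map_smul' _ _ := rfl

lemma sliceL_apply {S : Finset (Fin n)} (a : In S) (ψ : QubitConfig n → ℂ) (b : Out S) :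
    sliceL S a ψ b = ψ (glue S a b) := rfl

lemma eq_zero_of_slices_zero {S : Finset (Fin n)} {ψ : QubitConfig n → ℂ}
    (h : ∀ a, sliceL S a ψ = 0) : ψ = 0 := by
  funext x
  have := congrFun (h (fun j => x j.1)) (fun j => x j.1)
  simpa [sliceL_apply, glue_self] using this

/-- the cylinder over a subspace `Z` of states of the qubits outside `S` -/
noncomputable def cyl (S : Finset (Fin n)) (Z : Submodule ℂ (Out S → ℂ)) :
    Submodule ℂ (QubitConfig n → ℂ) := ⨅ a : In S, Z.comap (sliceL S a)

lemma mem_cyl {S : Finset (Fin n)} {Z : Submodule ℂ (Out S → ℂ)} {ψ : QubitConfig n → ℂ} :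
    ψ ∈ cyl S Z ↔ ∀ a, sliceL S a ψ ∈ Z := by
  simp [cyl, Submodule.mem_iInf]

lemma cyl_top (S : Finset (Fin n)) : cyl S (⊤ : Submodule ℂ (Out S → ℂ)) = ⊤ := by
  ext ψ; simp [mem_cyl]

lemma cyl_inf (S : Finset (Fin n)) (Z₁ Z₂ : Submodule ℂ (Out S → ℂ)) :
    cyl S Z₁ ⊓ cyl S Z₂ = cyl S (Z₁ ⊓ Z₂) := by
  ext ψ; simp [mem_cyl, forall_and]

/-- `Y` is a cylinder in the direction of `S` -/
def IsCyl (S : Finset (Fin n)) (Y : Submodule ℂ (QubitConfig n → ℂ)) : Prop :=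
  ∃ Z, Y = cyl S Z

end QLLL

namespace QLLL
open Module Finset
variable {n : ℕ}

/-- reconstructing a state from its slices -/
def unsliceL (S : Finset (Fin n)) : (In S → Out S → ℂ) →ₗ[ℂ] (QubitConfig n → ℂ) where
  toFun f := fun x => f (fun j => x j.1) (fun j => x j.1)
  map_add' _ _ := rfl
  map_smul' _ _ := rfl

lemma sliceL_unsliceL {S : Finset (Fin n)} (f : In S → Out S → ℂ) (a : In S) :
    sliceL S a (unsliceL S f) = f a := by
  funext b
  simp [sliceL_apply, unsliceL, restrIn_glue, restrOut_glue]

lemma unsliceL_sliceL {S : Finset (Fin n)} (ψ : QubitConfig n → ℂ) :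
    unsliceL S (fun a => sliceL S a ψ) = ψ := by
  funext x
  simp [unsliceL, sliceL_apply, glue_self]

/-- a cylinder is linearly equivalent to `In S → Z` -/
noncomputable def cylEquiv (S : Finset (Fin n)) (Z : Submodule ℂ (Out S → ℂ)) :
    cyl S Z ≃ₗ[ℂ] (In S → Z) := by
  refine LinearEquiv.ofLinear
    (LinearMap.pi fun a => LinearMap.codRestrict Z
      ((sliceL S a).comp (cyl S Z).subtype) (fun ψ => mem_cyl.mp ψ.2 a))
    (LinearMap.codRestrict (cyl S Z)
      ((unsliceL S).comp (LinearMap.pi fun a => Z.subtype.comp (LinearMap.proj a)))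
      (fun f => ?_)) ?_ ?_
  · rw [mem_cyl]
    intro a
    simpa [sliceL_unsliceL] using (f a).2
  · ext f a
    rename_i a' b
    exact congrFun (sliceL_unsliceL (S := S) (fun a'' => (((Pi.single f a : In S → Z) a'' : Z) : Out S → ℂ)) a') b
  · ext ψ x
    have : (unsliceL S) (fun a => sliceL S a (ψ : QubitConfig n → ℂ)) x = (ψ : QubitConfig n → ℂ) x := by
      rw [unsliceL_sliceL]
    exact this

lemma card_In (S : Finset (Fin n)) : Fintype.card (In S) = 2 ^ S.card := by
  simp [Fintype.card_fun, Fintype.card_coe]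

lemma finrank_cyl (S : Finset (Fin n)) (Z : Submodule ℂ (Out S → ℂ)) :
    finrank ℂ (cyl S Z) = 2 ^ S.card * finrank ℂ Z := by
  rw [(cylEquiv S Z).finrank_eq, Module.finrank_pi_fintype, Finset.sum_const, card_univ,
    card_In, smul_eq_mul]
end QLLL

namespace QLLL
open Module Finset
variable {n : ℕ}

lemma sum_config {S : Finset (Fin n)} (g : QubitConfig n → ℂ) :
    ∑ y : QubitConfig n, g y = ∑ a : In S, ∑ b : Out S, g (glue S a b) := by
  rw [← Equiv.sum_comp (configEquiv S).symm g, Fintype.sum_prod_type]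
  rfl

/-- slicing intertwines `extendMatrix n S A` with `A` -/
lemma slice_mulVec_extend {S : Finset (Fin n)} (A : Matrix (In S) (In S) ℂ)
    (ψ : QubitConfig n → ℂ) (a : In S) :
    sliceL S a ((extendMatrix n S A).mulVec ψ) = ∑ a' : In S, A a a' • sliceL S a' ψ := by
  funext b
  rw [sliceL_apply, Matrix.mulVec, dotProduct, sum_config (S := S)]
  have key : ∀ (a' : In S) (b' : Out S),
      extendMatrix n S A (glue S a b) (glue S a' b') * ψ (glue S a' b')
        = (if b' = b then A a a' * ψ (glue S a' b') else 0) := by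
    intro a' b'
    rw [extendMatrix]
    have hiff : (∀ j ∉ S, glue S a b j = glue S a' b' j) ↔ b' = b := by
      constructor
      · intro h
        funext j
        have := h j.1 j.2
        rw [glue_out a b j.2, glue_out a' b' j.2] at this
        exact this.symm
      · intro h j hj
        rw [glue_out a b hj, glue_out a' b' hj, h]
    simp only [Matrix.of_apply, restrIn_glue]
    by_cases hb : b' = b
    · rw [if_pos (hiff.mpr hb), if_pos hb]
    · rw [if_neg (fun hc => hb (hiff.mp hc)), if_neg hb, zero_mul]
  simp only [key]
  rw [Finset.sum_comm]
  simp [sliceL_apply]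

/-- the action on the outside qubits of a matrix supported on `S'` disjoint from `S` -/
def outMatrix (S S' : Finset (Fin n)) (hdis : ∀ j ∈ S', j ∉ S)
    (A' : Matrix (In S') (In S') ℂ) : Matrix (Out S) (Out S) ℂ :=
  Matrix.of fun b b' =>
    if ∀ j : {j : Fin n // j ∉ S}, j.1 ∉ S' → b j = b' j then
      A' (fun j => b ⟨j.1, hdis j.1 j.2⟩) (fun j => b' ⟨j.1, hdis j.1 j.2⟩) else 0

lemma slice_mulVec_extend_disjoint {S S' : Finset (Fin n)} (hdis : ∀ j ∈ S', j ∉ S)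
    (A' : Matrix (In S') (In S') ℂ) (ψ : QubitConfig n → ℂ) (a : In S) :
    sliceL S a ((extendMatrix n S' A').mulVec ψ)
      = (outMatrix S S' hdis A').mulVec (sliceL S a ψ) := by
  funext b
  rw [sliceL_apply, Matrix.mulVec, dotProduct, sum_config (S := S)]
  have key : ∀ (a' : In S) (b' : Out S),
      extendMatrix n S' A' (glue S a b) (glue S a' b') * ψ (glue S a' b')
        = (if a' = a then outMatrix S S' hdis A' b b' * ψ (glue S a' b') else 0) := by
    intro a' b'
    have hiff : (∀ j ∉ S', glue S a b j = glue S a' b' j)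
        ↔ (a' = a ∧ ∀ j : {j : Fin n // j ∉ S}, j.1 ∉ S' → b j = b' j) := by
      constructor
      · intro h
        refine ⟨?_, ?_⟩
        · funext j
          have hnot : j.1 ∉ S' := fun hc => (hdis j.1 hc) j.2
          have := h j.1 hnot
          rw [glue_in a b j.2, glue_in a' b' j.2] at this
          exact this.symm
        · intro j hj
          have := h j.1 hj
          rw [glue_out a b j.2, glue_out a' b' j.2] at this
          exact this
      · rintro ⟨rfl, h⟩ j hj
        by_cases hjS : j ∈ S
        · rw [glue_in _ b hjS, glue_in _ b' hjS]
        · rw [glue_out _ b hjS, glue_out _ b' hjS]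
          exact h ⟨j, hjS⟩ hj
    have harg1 : (fun j : {j : Fin n // j ∈ S'} => glue S a b j.1)
        = fun j : {j : Fin n // j ∈ S'} => b ⟨j.1, hdis j.1 j.2⟩ := by
      funext j
      exact glue_out a b (hdis j.1 j.2)
    have harg2 : (fun j : {j : Fin n // j ∈ S'} => glue S a' b' j.1)
        = fun j : {j : Fin n // j ∈ S'} => b' ⟨j.1, hdis j.1 j.2⟩ := by
      funext j
      exact glue_out a' b' (hdis j.1 j.2)
    rw [extendMatrix, outMatrix]
    simp only [Matrix.of_apply, harg1, harg2]
    by_cases ha : a' = a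
    · by_cases hQ : ∀ j : {j : Fin n // j ∉ S}, j.1 ∉ S' → b j = b' j
      · rw [if_pos (hiff.mpr ⟨ha, hQ⟩), if_pos ha, if_pos hQ]
      · rw [if_neg (fun hc => hQ (hiff.mp hc).2), if_pos ha, if_neg hQ, zero_mul]
    · rw [if_neg (fun hc => ha (hiff.mp hc).1), if_neg ha, zero_mul]
  simp only [key]
  have hswap : ∀ a' : In S, (∑ b' : Out S,
      if a' = a then outMatrix S S' hdis A' b b' * ψ (glue S a' b') else 0)
      = if a' = a then ∑ b' : Out S, outMatrix S S' hdis A' b b' * ψ (glue S a' b') else 0 := by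
    intro a'; split <;> simp
  rw [Finset.sum_congr rfl (fun a' _ => hswap a'), Finset.sum_ite_eq' Finset.univ a]
  simp [Matrix.mulVec, dotProduct, sliceL_apply]

/-- kernels of operators supported away from `S` are cylinders over `S` -/
lemma isCyl_ker_extend_disjoint {S S' : Finset (Fin n)} (hdis : ∀ j ∈ S', j ∉ S)
    (A' : Matrix (In S') (In S') ℂ) :
    IsCyl S (LinearMap.ker (extendMatrix n S' A').mulVecLin) := by
  refine ⟨LinearMap.ker (outMatrix S S' hdis A').mulVecLin, ?_⟩
  ext ψ
  simp only [LinearMap.mem_ker, Matrix.mulVecLin_apply, mem_cyl]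
  constructor
  · intro h a
    have hs := slice_mulVec_extend_disjoint hdis A' ψ a
    rw [h, map_zero] at hs
    exact hs.symm
  · intro h
    refine eq_zero_of_slices_zero (S := S) (fun a => ?_)
    rw [slice_mulVec_extend_disjoint hdis A' ψ a]
    exact h a
end QLLL

namespace QLLL
open Module Finset

/-- a rank one matrix is an outer product of two nonzero vectors -/
lemma rank_one_outer {α β : Type*} [Fintype α] [Fintype β] [DecidableEq β]
    (A : Matrix α β ℂ) (h : A.rank = 1) :
    ∃ (u : α → ℂ) (w : β → ℂ), u ≠ 0 ∧ w ≠ 0 ∧ ∀ a b, A a b = u a * w b := by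
  have hfr : finrank ℂ (LinearMap.range A.mulVecLin) = 1 := h
  obtain ⟨v, hv0, hv⟩ := finrank_eq_one_iff'.mp hfr
  have hcol : ∀ b : β, ∃ c : ℂ, c • v = ⟨A.mulVec (Pi.single b 1), ⟨Pi.single b 1, rfl⟩⟩ :=
    fun b => hv _
  choose w hwv using hcol
  refine ⟨(v : α → ℂ), w, by simpa using hv0, ?_, ?_⟩
  · intro hw0
    have hA0 : A = 0 := by
      ext a b
      have := congrArg (fun z : ↥(LinearMap.range A.mulVecLin) => (z : α → ℂ) a) (hwv b)
      simp only [Matrix.mulVec_single, mul_one] at this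
      rw [hw0] at this
      simpa using this.symm
    rw [hA0, Matrix.rank_zero] at h
    exact one_ne_zero h.symm
  · intro a b
    have := congrArg (fun z : ↥(LinearMap.range A.mulVecLin) => (z : α → ℂ) a) (hwv b)
    simp only [Matrix.mulVec_single, mul_one, MulOpposite.op_one, one_smul, Matrix.col_apply] at this
    rw [← this]
    simp [mul_comm]

variable {n : ℕ}

/-- the key dimension count: intersecting a cylinder with the kernel of a rank one
projector acting inside `S` removes exactly a `2 ^ S.card` fraction of its dimension -/
lemma finrank_ker_inf_cyl {S : Finset (Fin n)} (A : Matrix (In S) (In S) ℂ)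
    (hA : A.rank = 1) (Z : Submodule ℂ (Out S → ℂ)) :
    finrank ℂ ↥(LinearMap.ker (extendMatrix n S A).mulVecLin ⊓ cyl S Z)
      + finrank ℂ Z = 2 ^ S.card * finrank ℂ Z := by
  classical
  obtain ⟨u, w, hu, hw, hAuw⟩ := rank_one_outer A hA
  obtain ⟨a₀, ha₀⟩ := Function.ne_iff.mp hw
  -- the kernel membership in terms of slices
  have hker : ∀ ψ : QubitConfig n → ℂ,
      (extendMatrix n S A).mulVec ψ = 0 ↔ ∑ a : In S, w a • sliceL S a ψ = 0 := by
    intro ψ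
    have hslice : ∀ a, sliceL S a ((extendMatrix n S A).mulVec ψ)
        = u a • ∑ a' : In S, w a' • sliceL S a' ψ := by
      intro a
      rw [slice_mulVec_extend, Finset.smul_sum]
      refine Finset.sum_congr rfl (fun a' _ => ?_)
      rw [hAuw, mul_smul]
    constructor
    · intro h
      obtain ⟨au, hau⟩ := Function.ne_iff.mp hu
      have := hslice au
      rw [h, map_zero] at this
      rcases smul_eq_zero.mp this.symm with h' | h'
      · exact absurd h' hau
      · exact h'
    · intro h
      refine eq_zero_of_slices_zero (S := S) (fun a => ?_)
      rw [hslice a, h, smul_zero]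
  -- the linear functional on the slices
  set T : (In S → Z) →ₗ[ℂ] Z := ∑ a : In S, w a • LinearMap.proj a with hT
  have hTapp : ∀ f : In S → Z, T f = ∑ a : In S, w a • f a := by
    intro f
    rw [hT]
    simp
  set T' : cyl S Z →ₗ[ℂ] Z := T ∘ₗ (cylEquiv S Z : cyl S Z →ₗ[ℂ] (In S → Z)) with hT'
  have hcoe : ∀ ψ : cyl S Z, (T' ψ : Out S → ℂ) = ∑ a : In S, w a • sliceL S a (ψ : QubitConfig n → ℂ) := by
    intro ψ
    have h1 : T' ψ = ∑ a : In S, w a • (cylEquiv S Z) ψ a := by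
      rw [hT', LinearMap.comp_apply, hTapp]
      rfl
    rw [h1]
    push_cast [Submodule.coe_sum]
    rfl
  have hsurj : Function.Surjective T' := by
    intro z
    refine ⟨(cylEquiv S Z).symm (Pi.single a₀ ((w a₀)⁻¹ • z)), ?_⟩
    rw [hT', LinearMap.comp_apply]
    have : ((cylEquiv S Z) : cyl S Z →ₗ[ℂ] (In S → Z)) ((cylEquiv S Z).symm (Pi.single a₀ ((w a₀)⁻¹ • z)))
        = Pi.single a₀ ((w a₀)⁻¹ • z) := (cylEquiv S Z).apply_symm_apply _
    rw [this, hTapp, Finset.sum_eq_single a₀]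
    · rw [Pi.single_eq_same, smul_smul, mul_inv_cancel₀ ha₀, one_smul]
    · intro a _ ha
      rw [Pi.single_eq_of_ne ha, smul_zero]
    · intro h
      exact absurd (Finset.mem_univ a₀) h
  have hcount : finrank ℂ (LinearMap.ker T') + finrank ℂ Z = finrank ℂ (cyl S Z) := by
    have := LinearMap.finrank_range_add_finrank_ker T'
    rw [LinearMap.range_eq_top.mpr hsurj, finrank_top] at this
    omega
  have hmap : Submodule.map (cyl S Z).subtype (LinearMap.ker T')
      = LinearMap.ker (extendMatrix n S A).mulVecLin ⊓ cyl S Z := by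
    ext ψ
    simp only [Submodule.mem_map, LinearMap.mem_ker, Submodule.mem_inf,
      Matrix.mulVecLin_apply, Submodule.coe_subtype]
    constructor
    · rintro ⟨ψ', hψ', rfl⟩
      refine ⟨(hker _).mpr ?_, ψ'.2⟩
      rw [← hcoe ψ']
      rw [hψ']
      rfl
    · rintro ⟨hk, hc⟩
      refine ⟨⟨ψ, hc⟩, ?_, rfl⟩
      have : (T' ⟨ψ, hc⟩ : Out S → ℂ) = 0 := by
        rw [hcoe]
        exact (hker ψ).mp hk
      exact_mod_cast Subtype.ext this
  rw [← hmap, Submodule.finrank_map_subtype_eq, hcount, finrank_cyl]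
end QLLL

namespace QLLL
open Module Finset

/-- the standard local lemma estimate `(1-x)^s ≥ 1/e` for `s ≤ 1/x - 1` -/
lemma exp_neg_one_le_pow {x : ℝ} (hx0 : 0 < x) (hx1 : x < 1) {s : ℕ} (hs : (s : ℝ) ≤ 1/x - 1) :
    Real.exp (-1) ≤ (1 - x) ^ s := by
  have h1x : 0 < 1 - x := by linarith
  have hlog : -(x / (1-x)) ≤ Real.log (1-x) := by
    have h2 : 1 / (1-x) ≤ Real.exp (x/(1-x)) := by
      have h := Real.add_one_le_exp (x/(1-x))
      have he : x/(1-x) + 1 = 1/(1-x) := by field_simp; ring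
      linarith
    have h3 : Real.log (1/(1-x)) ≤ x/(1-x) :=
      (Real.log_le_iff_le_exp (by positivity)).mpr h2
    rw [Real.log_div one_ne_zero (ne_of_gt h1x), Real.log_one] at h3
    linarith
  have hfac : 0 ≤ 1/x - 1 := le_trans (Nat.cast_nonneg s) hs
  have hmain : -1 ≤ (1/x - 1) * Real.log (1-x) := by
    have hmul := mul_le_mul_of_nonneg_left hlog hfac
    have hcalc : (1/x - 1) * -(x/(1-x)) = -1 := by
      field_simp
    linarith
  have hrw : (1-x) ^ (1/x - 1 : ℝ) = Real.exp ((1/x-1) * Real.log (1-x)) := by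
    rw [Real.rpow_def_of_pos h1x, mul_comm]
  calc Real.exp (-1) ≤ Real.exp ((1/x-1) * Real.log (1-x)) := Real.exp_le_exp.mpr hmain
    _ = (1-x) ^ (1/x - 1 : ℝ) := hrw.symm
    _ ≤ (1-x) ^ (s : ℝ) := Real.rpow_le_rpow_of_exponent_ge h1x (by linarith) hs
    _ = (1-x) ^ s := Real.rpow_natCast _ s

variable {n m : ℕ} (P : Fin m → Matrix (QubitConfig n) (QubitConfig n) ℂ)

/-- the joint kernel of the projectors indexed by `T` -/
noncomputable def KK (T : Finset (Fin m)) : Submodule ℂ (QubitConfig n → ℂ) :=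
  T.inf fun i => LinearMap.ker (P i).mulVecLin

lemma KK_empty : KK P ∅ = ⊤ := Finset.inf_empty

lemma KK_insert (i : Fin m) (T : Finset (Fin m)) :
    KK P (insert i T) = LinearMap.ker (P i).mulVecLin ⊓ KK P T := Finset.inf_insert

lemma KK_mono {T T' : Finset (Fin m)} (h : T' ⊆ T) : KK P T ≤ KK P T' :=
  Finset.inf_mono h

lemma KK_le (i : Fin m) {T : Finset (Fin m)} (h : i ∈ T) :
    KK P T ≤ LinearMap.ker (P i).mulVecLin := Finset.inf_le h

end QLLL

namespace QLLL
open Module Finset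

variable {n m k : ℕ}

/-- joint kernels of projectors acting away from `S0` are cylinders over `S0` -/
lemma isCyl_KK (S : Fin m → Finset (Fin n))
    (P : Fin m → Matrix (QubitConfig n) (QubitConfig n) ℂ)
    (hP : ∀ i, IsLocalProjector n (S i) 1 (P i))
    (S0 : Finset (Fin n)) (U : Finset (Fin m))
    (hU : ∀ j ∈ U, ∀ q ∈ S j, q ∉ S0) :
    IsCyl S0 (KK P U) := by
  classical
  revert hU
  induction U using Finset.induction_on with
  | empty =>
    intro _
    rw [KK_empty]
    exact ⟨⊤, (cyl_top S0).symm⟩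
  | insert _ _ hjU ih =>
    rename_i j U
    intro hU
    obtain ⟨Z₂, hZ₂⟩ := ih (fun j' hj' => hU j' (Finset.mem_insert_of_mem hj'))
    obtain ⟨A, _, _, _, hPA⟩ := hP j
    have hdis : ∀ q ∈ S j, q ∉ S0 := hU j (Finset.mem_insert_self j U)
    obtain ⟨Z₁, hZ₁⟩ := isCyl_ker_extend_disjoint (S := S0) hdis A
    rw [KK_insert, hPA, hZ₁, hZ₂, cyl_inf]
    exact ⟨Z₁ ⊓ Z₂, rfl⟩

set_option maxHeartbeats 1000000 in
/-- the core inductive step of the quantum local lemma -/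
lemma step_lemma (hk : 0 < k) (hk2 : 2 ≤ k)
    (S : Fin m → Finset (Fin n)) (hcard : ∀ i, (S i).card = k)
    (P : Fin m → Matrix (QubitConfig n) (QubitConfig n) ℂ)
    (hP : ∀ i, IsLocalProjector n (S i) 1 (P i))
    (hdeg : ∀ q : Fin n, ((Finset.univ.filter fun i => q ∈ S i).card : ℝ)
        ≤ 2 ^ k / (Real.exp 1 * k)) :
    ∀ T : Finset (Fin m), ∀ i ∉ T,
      (1 - Real.exp 1 / 2 ^ k) * (finrank ℂ (KK P T) : ℝ)
        ≤ (finrank ℂ (KK P (insert i T)) : ℝ) := by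
  classical
  set E : ℝ := Real.exp 1 with hE
  have hE0 : 0 < E := Real.exp_pos 1
  have hElt : E < 2.7182818286 := Real.exp_one_lt_d9
  have h2k4 : (4 : ℝ) ≤ 2 ^ k := by
    calc (4 : ℝ) = 2 ^ 2 := by norm_num
      _ ≤ 2 ^ k := by
        apply pow_le_pow_right₀ (by norm_num) hk2
  have h2k0 : (0 : ℝ) < 2 ^ k := by positivity
  set x : ℝ := E / 2 ^ k with hx
  have hx0 : 0 < x := by positivity
  have hx1 : x < 1 := by
    rw [hx, div_lt_one h2k0]
    linarith
  intro T
  induction T using Finset.strongInduction with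
  | _ T ih =>
    intro i hi
    obtain ⟨A, _, _, hArank, hPA⟩ := hP i
    set T1 : Finset (Fin m) := T.filter (fun j => ((S j) ∩ (S i)).Nonempty) with hT1
    set T2 : Finset (Fin m) := T.filter (fun j => ¬ ((S j) ∩ (S i)).Nonempty) with hT2
    have hT12 : T1 ∪ T2 = T := Finset.filter_union_filter_not_eq _ T
    have hT2T : T2 ⊆ T := Finset.filter_subset _ T
    have hT1T : T1 ⊆ T := Finset.filter_subset _ T
    -- K T2 is a cylinder over S i
    obtain ⟨Z, hZ⟩ := isCyl_KK S P hP (S i) T2 (by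
      intro j hj q hqj hqi
      have hnon := (Finset.mem_filter.mp hj).2
      exact hnon ⟨q, Finset.mem_inter.mpr ⟨hqj, hqi⟩⟩)
    -- dimension bookkeeping, all in ℕ first
    have hrT2 : finrank ℂ (KK P T2) = 2 ^ k * finrank ℂ Z := by
      rw [hZ, finrank_cyl, hcard i]
    have hkerc : finrank ℂ ↥(LinearMap.ker (P i).mulVecLin ⊓ KK P T2) + finrank ℂ Z
        = 2 ^ k * finrank ℂ Z := by
      rw [hZ, hPA]
      have := finrank_ker_inf_cyl A (by exact_mod_cast hArank) Z
      rw [hcard i] at this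
      exact this
    have hXY : (LinearMap.ker (P i).mulVecLin ⊓ KK P T2) ⊓ KK P T = KK P (insert i T) := by
      rw [KK_insert, inf_assoc]
      congr 1
      exact inf_eq_right.mpr (KK_mono P hT2T)
    have hL1 : finrank ℂ ↥(LinearMap.ker (P i).mulVecLin ⊓ KK P T2) + finrank ℂ (KK P T)
        ≤ finrank ℂ (KK P (insert i T)) + finrank ℂ (KK P T2) := by
      have hfr := Submodule.finrank_sup_add_finrank_inf_eq
        (LinearMap.ker (P i).mulVecLin ⊓ KK P T2) (KK P T)
      have hsup : finrank ℂ ↥((LinearMap.ker (P i).mulVecLin ⊓ KK P T2) ⊔ KK P T)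
          ≤ finrank ℂ (KK P T2) :=
        Submodule.finrank_mono (sup_le inf_le_right (KK_mono P hT2T))
      rw [hXY] at hfr
      omega
    have hnatkey : finrank ℂ (KK P T) ≤ finrank ℂ (KK P (insert i T)) + finrank ℂ Z := by
      set c := 2 ^ k * finrank ℂ Z with hc
      omega
    -- the chain estimate
    have h1xnn : (0 : ℝ) ≤ 1 - x := by linarith
    have chain : ∀ s : ℕ, ∀ U ⊆ T1, U.card = s →
        (1-x) ^ s * (finrank ℂ (KK P T2) : ℝ) ≤ (finrank ℂ (KK P (T2 ∪ U)) : ℝ) := by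
      intro s
      induction s with
      | zero =>
        intro U _ hU0
        rw [Finset.card_eq_zero.mp hU0, Finset.union_empty, pow_zero, one_mul]
      | succ s ihs =>
        intro U hUT1 hUcard
        obtain ⟨j, hjU⟩ : U.Nonempty := Finset.card_pos.mp (by omega)
        have hjT1 : j ∈ T1 := hUT1 hjU
        have hjT2 : j ∉ T2 := by
          intro hc
          exact (Finset.mem_filter.mp hc).2 (Finset.mem_filter.mp hjT1).2
        have hjU' : j ∉ U.erase j := Finset.notMem_erase j U
        have hjnot : j ∉ T2 ∪ U.erase j := by
          simp [Finset.mem_union, hjT2, hjU']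
        have hunion : T2 ∪ U = insert j (T2 ∪ U.erase j) := by
          conv_lhs => rw [← Finset.insert_erase hjU]
          rw [Finset.union_insert]
        have hsubT : T2 ∪ U.erase j ⊂ T := by
          refine Finset.ssubset_iff_of_subset ?_ |>.mpr ⟨j, (Finset.mem_filter.mp hjT1).1, hjnot⟩
          exact Finset.union_subset hT2T (((Finset.erase_subset j U).trans hUT1).trans hT1T)
        have hstep := ih _ hsubT j hjnot
        have hchain := ihs (U.erase j) ((Finset.erase_subset j U).trans hUT1)
          (by rw [Finset.card_erase_of_mem hjU, hUcard]; rfl)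
        calc (1-x) ^ (s+1) * (finrank ℂ (KK P T2) : ℝ)
            = (1-x) * ((1-x) ^ s * (finrank ℂ (KK P T2) : ℝ)) := by ring
          _ ≤ (1-x) * (finrank ℂ (KK P (T2 ∪ U.erase j)) : ℝ) :=
              mul_le_mul_of_nonneg_left hchain h1xnn
          _ ≤ (finrank ℂ (KK P (insert j (T2 ∪ U.erase j))) : ℝ) := hstep
          _ = (finrank ℂ (KK P (T2 ∪ U)) : ℝ) := by rw [← hunion]
    -- the degree bound on T1
    have hT1card : (T1.card : ℝ) ≤ 1/x - 1 := by
      have hsumN : T1.card ≤ ∑ q ∈ S i, (T1.filter fun j => q ∈ S j).card := by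
        refine le_trans (Finset.card_le_card ?_) Finset.card_biUnion_le
        intro j hj
        obtain ⟨q, hq⟩ := (Finset.mem_filter.mp hj).2
        obtain ⟨hqj, hqi⟩ := Finset.mem_inter.mp hq
        exact Finset.mem_biUnion.mpr ⟨q, hqi, Finset.mem_filter.mpr ⟨hj, hqj⟩⟩
      have hperq : ∀ q ∈ S i, ((T1.filter fun j => q ∈ S j).card : ℝ)
          ≤ 2 ^ k / (E * k) - 1 := by
        intro q hq
        have hins : insert i (T1.filter fun j => q ∈ S j)
            ⊆ Finset.univ.filter fun j => q ∈ S j := by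
          intro j hj
          rcases Finset.mem_insert.mp hj with rfl | hj'
          · exact Finset.mem_filter.mpr ⟨Finset.mem_univ _, hq⟩
          · exact Finset.mem_filter.mpr ⟨Finset.mem_univ _, (Finset.mem_filter.mp hj').2⟩
        have hinotin : i ∉ (T1.filter fun j => q ∈ S j) := by
          intro hc
          exact hi (hT1T (Finset.mem_filter.mp hc).1)
        have hcardle := Finset.card_le_card hins
        rw [Finset.card_insert_of_notMem hinotin] at hcardle
        have hcast : ((T1.filter fun j => q ∈ S j).card : ℝ) + 1
            ≤ ((Finset.univ.filter fun j => q ∈ S j).card : ℝ) := by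
          exact_mod_cast hcardle
        have := hdeg q
        linarith
      have hsumR : (T1.card : ℝ) ≤ ∑ q ∈ S i, (2 ^ k / (E * k) - 1 : ℝ) := by
        calc (T1.card : ℝ) ≤ (∑ q ∈ S i, ((T1.filter fun j => q ∈ S j).card) : ℕ) := by
              exact_mod_cast hsumN
          _ = ∑ q ∈ S i, (((T1.filter fun j => q ∈ S j).card : ℝ)) := by
              push_cast
              rfl
          _ ≤ ∑ q ∈ S i, (2 ^ k / (E * k) - 1 : ℝ) := Finset.sum_le_sum hperq
      rw [Finset.sum_const, hcard i, nsmul_eq_mul] at hsumR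
      have hk0R : (k : ℝ) ≠ 0 := by
        exact_mod_cast hk.ne'
      have hsimp : (k : ℝ) * (2 ^ k / (E * k) - 1) = 2 ^ k / E - k := by
        field_simp
      have hxinv : 1/x = 2 ^ k / E := by
        rw [hx, one_div_div]
      have hkge1 : (1 : ℝ) ≤ k := by
        exact_mod_cast hk
      rw [hsimp] at hsumR
      rw [hxinv]
      linarith
    -- putting it together
    have hexp : Real.exp (-1) ≤ (1-x) ^ T1.card := exp_neg_one_le_pow hx0 hx1 hT1card
    have hchainT : (1-x) ^ T1.card * (finrank ℂ (KK P T2) : ℝ) ≤ (finrank ℂ (KK P T) : ℝ) := by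
      have := chain T1.card T1 (Finset.Subset.refl T1) rfl
      rw [Finset.union_comm, hT12] at this
      exact this
    have hT2nn : (0 : ℝ) ≤ (finrank ℂ (KK P T2) : ℝ) := Nat.cast_nonneg _
    have hZnn : (0 : ℝ) ≤ (finrank ℂ Z : ℝ) := Nat.cast_nonneg _
    have hrT2R : (finrank ℂ (KK P T2) : ℝ) = 2 ^ k * (finrank ℂ Z : ℝ) := by
      exact_mod_cast hrT2
    have hxe : x * (Real.exp (-1) * (2 ^ k : ℝ)) = 1 := by
      rw [hx, Real.exp_neg, ← hE]
      field_simp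
    have hdZ : (finrank ℂ Z : ℝ) ≤ x * (finrank ℂ (KK P T) : ℝ) := by
      have h1 : Real.exp (-1) * (finrank ℂ (KK P T2) : ℝ)
          ≤ (1-x) ^ T1.card * (finrank ℂ (KK P T2) : ℝ) :=
        mul_le_mul_of_nonneg_right hexp hT2nn
      have h2 : Real.exp (-1) * (finrank ℂ (KK P T2) : ℝ) ≤ (finrank ℂ (KK P T) : ℝ) :=
        le_trans h1 hchainT
      have h3 := mul_le_mul_of_nonneg_left h2 hx0.le
      calc (finrank ℂ Z : ℝ) = (x * (Real.exp (-1) * (2 ^ k : ℝ))) * (finrank ℂ Z : ℝ) := by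
            rw [hxe, one_mul]
        _ = x * (Real.exp (-1) * (finrank ℂ (KK P T2) : ℝ)) := by
            rw [hrT2R]; ring
        _ ≤ x * (finrank ℂ (KK P T) : ℝ) := h3
    have hnatkeyR : (finrank ℂ (KK P T) : ℝ)
        ≤ (finrank ℂ (KK P (insert i T)) : ℝ) + (finrank ℂ Z : ℝ) := by
      exact_mod_cast hnatkey
    linarith
end QLLL

namespace QLLL
open Module Finset

lemma finrank_KK_empty {n m : ℕ} (P : Fin m → Matrix (QubitConfig n) (QubitConfig n) ℂ) :
    finrank ℂ (KK P ∅) = 2 ^ n := by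
  rw [KK_empty, finrank_top, Module.finrank_pi]
  simp [Fintype.card_fun]

end QLLL


open Module in
/-- k-QSAT via the quantum Lovász local lemma: if every projector `P i` has rank `1` and
acts on a set `S i` of exactly `k` qubits, and every qubit appears in at most
`2^k / (e·k)` of the sets `S i`, then there is a nonzero state `ψ` with `P i ψ = 0` for
all `i`. -/
theorem qsat_satisfiable_of_low_degree (n m k : ℕ) (hk : 0 < k)
    (S : Fin m → Finset (Fin n)) (hcard : ∀ i, (S i).card = k)
    (P : Fin m → Matrix (QubitConfig n) (QubitConfig n) ℂ)
    (hP : ∀ i, IsLocalProjector n (S i) 1 (P i))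
    (hdeg : ∀ q : Fin n, ((Finset.univ.filter fun i => q ∈ S i).card : ℝ)
        ≤ 2 ^ k / (Real.exp 1 * k)) :
    ∃ ψ : QubitConfig n → ℂ, ψ ≠ 0 ∧ ∀ i, (P i).mulVec ψ = 0 := by
  classical
  by_cases hm : m = 0
  · subst hm
    refine ⟨fun _ => 1, ?_, fun i => Fin.elim0 i⟩
    intro h
    simpa using congrFun h (fun _ => 0)
  · have hk2 : 2 ≤ k := by
      rcases Nat.lt_or_ge k 2 with h | h
      · exfalso
        have hk1 : k = 1 := by omega
        set i : Fin m := ⟨0, Nat.pos_of_ne_zero hm⟩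
        obtain ⟨q, hq⟩ : (S i).Nonempty := Finset.card_pos.mp (by rw [hcard i, hk1]; norm_num)
        have h1 : (1 : ℝ) ≤ ((Finset.univ.filter fun j => q ∈ S j).card : ℝ) := by
          have hmem : i ∈ Finset.univ.filter fun j => q ∈ S j :=
            Finset.mem_filter.mpr ⟨Finset.mem_univ _, hq⟩
          exact_mod_cast Finset.card_pos.mpr ⟨i, hmem⟩
        have h2 := hdeg q
        rw [hk1] at h2
        push_cast at h2
        norm_num at h2
        have hegt : (2.7182818283 : ℝ) < Real.exp 1 := Real.exp_one_gt_d9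
        have hepos : (0 : ℝ) < Real.exp 1 := Real.exp_pos 1
        have : (2 : ℝ) / Real.exp 1 < 1 := by
          rw [div_lt_one hepos]
          linarith
        linarith
      · exact h
    set x : ℝ := Real.exp 1 / 2 ^ k with hx
    have h2k4 : (4 : ℝ) ≤ 2 ^ k := by
      calc (4 : ℝ) = 2 ^ 2 := by norm_num
        _ ≤ 2 ^ k := by apply pow_le_pow_right₀ (by norm_num) hk2
    have h2k0 : (0 : ℝ) < 2 ^ k := by positivity
    have hElt : Real.exp 1 < 2.7182818286 := Real.exp_one_lt_d9
    have hx1 : x < 1 := by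
      rw [hx, div_lt_one h2k0]
      linarith
    have hx0 : 0 < x := by positivity
    have hstep := QLLL.step_lemma hk hk2 S hcard P hP hdeg
    have hgrow : ∀ T : Finset (Fin m),
        (1 - x) ^ T.card * (2 ^ n : ℝ) ≤ (finrank ℂ (QLLL.KK P T) : ℝ) := by
      intro T
      induction T using Finset.induction_on with
      | empty =>
        rw [QLLL.finrank_KK_empty P]
        simp
      | insert _ _ hjT ihT =>
        rename_i j T
        rw [Finset.card_insert_of_notMem hjT]
        have h1 := hstep T j hjT
        calc (1-x) ^ (T.card + 1) * (2 ^ n : ℝ)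
            = (1-x) * ((1-x) ^ T.card * (2 ^ n : ℝ)) := by ring
          _ ≤ (1-x) * (finrank ℂ (QLLL.KK P T) : ℝ) :=
              mul_le_mul_of_nonneg_left ihT (by linarith)
          _ ≤ (finrank ℂ (QLLL.KK P (insert j T)) : ℝ) := h1
    have hpos : (0 : ℝ) < (finrank ℂ (QLLL.KK P Finset.univ) : ℝ) := by
      refine lt_of_lt_of_le ?_ (hgrow Finset.univ)
      have : (0:ℝ) < 1 - x := by linarith
      positivity
    have hne : QLLL.KK P Finset.univ ≠ ⊥ := by
      intro h
      rw [h] at hpos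
      simp [finrank_bot] at hpos
    obtain ⟨ψ, hmem, hne0⟩ := Submodule.exists_mem_ne_zero_of_ne_bot hne
    refine ⟨ψ, hne0, fun i => ?_⟩
    have hker := QLLL.KK_le P i (Finset.mem_univ i) hmem
    rw [LinearMap.mem_ker, Matrix.mulVecLin_apply] at hker
    exact hker
end

section
/- Let {Π_1, …, Π_m} be a k-QSAT instance on n qubits in which every projector Π_i has rank at most r and acts on a set S_i of exactly k qubits. If every qubit appears in at most D = 2^k/(e · r · k) of the sets S_1, …, S_m, then the instance is satisfiable: there exists a nonzero state |Ψ⟩ ∈ V with Π_i |Ψ⟩ = 0 for all 1 ≤ i ≤ m. -/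
/-- `P` is a `k`-local projector of rank at most `r` acting on the set `S` of qubits:
`P = π ⊗ I` where `π` is an orthogonal projection (a Hermitian idempotent) of rank at
most `r` on the qubits in `S`. -/
def IsLocalProjectorRankLE (n : ℕ) (S : Finset (Fin n)) (r : ℕ)
    (P : Matrix (QubitConfig n) (QubitConfig n) ℂ) : Prop :=
  ∃ A : Matrix ({j : Fin n // j ∈ S} → Fin 2) ({j : Fin n // j ∈ S} → Fin 2) ℂ,
    A.IsHermitian ∧ A * A = A ∧ A.rank ≤ r ∧ P = extendMatrix n S A

namespace QLLL

variable {n : ℕ}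

/-- configurations on the qubits in `S`. -/
abbrev Sconf (S : Finset (Fin n)) := {j : Fin n // j ∈ S} → Fin 2
/-- configurations on the qubits outside `S`. -/
abbrev Cconf (S : Finset (Fin n)) := {j : Fin n // j ∉ S} → Fin 2

def merge (S : Finset (Fin n)) (a : Sconf S) (b : Cconf S) : QubitConfig n :=
  fun j => if h : j ∈ S then a ⟨j, h⟩ else b ⟨j, h⟩

def resS (S : Finset (Fin n)) (x : QubitConfig n) : Sconf S := fun j => x j.1
def resC (S : Finset (Fin n)) (x : QubitConfig n) : Cconf S := fun j => x j.1

@[simp] lemma resS_merge (S : Finset (Fin n)) (a : Sconf S) (b : Cconf S) :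
    resS S (merge S a b) = a := by
  funext j; simp [resS, merge, j.2]

@[simp] lemma resC_merge (S : Finset (Fin n)) (a : Sconf S) (b : Cconf S) :
    resC S (merge S a b) = b := by
  funext j; simp [resC, merge, j.2]

@[simp] lemma merge_res (S : Finset (Fin n)) (x : QubitConfig n) :
    merge S (resS S x) (resC S x) = x := by
  funext j; by_cases h : j ∈ S <;> simp [merge, resS, resC, h]

lemma merge_mem_S (S : Finset (Fin n)) (a : Sconf S) (b : Cconf S) {j : Fin n} (h : j ∈ S) :
    merge S a b j = a ⟨j, h⟩ := by simp [merge, h]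

lemma merge_not_mem_S (S : Finset (Fin n)) (a : Sconf S) (b : Cconf S) {j : Fin n} (h : j ∉ S) :
    merge S a b j = b ⟨j, h⟩ := by simp [merge, h]

/-- slicing a state along a configuration of the qubits in `S`. -/
def slice (S : Finset (Fin n)) (f : QubitConfig n → ℂ) (a : Sconf S) : Cconf S → ℂ :=
  fun b => f (merge S a b)

lemma slice_add (S : Finset (Fin n)) (f g : QubitConfig n → ℂ) (a : Sconf S) :
    slice S (f + g) a = slice S f a + slice S g a := rfl

lemma slice_smul (S : Finset (Fin n)) (c : ℂ) (f : QubitConfig n → ℂ) (a : Sconf S) :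
    slice S (c • f) a = c • slice S f a := rfl

lemma eq_zero_of_slices (S : Finset (Fin n)) (f : QubitConfig n → ℂ)
    (h : ∀ a, slice S f a = 0) : f = 0 := by
  funext x
  have := congrFun (h (resS S x)) (resC S x)
  simpa [slice] using this

/-- the subspace `W ⊗ H_S` of states all of whose `S`-slices lie in `W`. -/
noncomputable def prodSub (S : Finset (Fin n)) (W : Submodule ℂ (Cconf S → ℂ)) :
    Submodule ℂ (QubitConfig n → ℂ) where
  carrier := {f | ∀ a, slice S f a ∈ W}
  add_mem' := fun hf hg a => by rw [slice_add]; exact W.add_mem (hf a) (hg a)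
  zero_mem' := fun a => by
    have : slice S (0 : QubitConfig n → ℂ) a = 0 := rfl
    rw [this]; exact W.zero_mem
  smul_mem' := fun c f hf a => by rw [slice_smul]; exact W.smul_mem c (hf a)

lemma mem_prodSub {S : Finset (Fin n)} {W : Submodule ℂ (Cconf S → ℂ)}
    {f : QubitConfig n → ℂ} : f ∈ prodSub S W ↔ ∀ a, slice S f a ∈ W := Iff.rfl

/-- `prodSub S W` is linearly equivalent to `Sconf S → W`. -/
noncomputable def prodSubEquiv (S : Finset (Fin n)) (W : Submodule ℂ (Cconf S → ℂ)) :
    prodSub S W ≃ₗ[ℂ] (Sconf S → W) where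
  toFun f := fun a => ⟨slice S f.1 a, f.2 a⟩
  map_add' f g := by funext a; ext b; rfl
  map_smul' c f := by funext a; ext b; rfl
  invFun g := ⟨fun x => (g (resS S x) : Cconf S → ℂ) (resC S x), by
    intro a
    have : slice S (fun x => (g (resS S x) : Cconf S → ℂ) (resC S x)) a
        = (g a : Cconf S → ℂ) := by
      funext b; simp [slice]
    rw [this]; exact (g a).2⟩
  left_inv f := by ext x; simp [slice]
  right_inv g := by funext a; ext b; simp [slice]

lemma finrank_prodSub (S : Finset (Fin n)) (W : Submodule ℂ (Cconf S → ℂ)) :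
    Module.finrank ℂ (prodSub S W) = 2 ^ S.card * Module.finrank ℂ W := by
  rw [(prodSubEquiv S W).finrank_eq, Module.finrank_pi_fintype,
    Finset.sum_const, Finset.card_univ, smul_eq_mul]
  congr 1
  rw [Fintype.card_fun, Fintype.card_fin, Fintype.card_coe]

end QLLL

namespace QLLL

variable {n : ℕ}

/-- The matrix of a clause on `S'` restricted to the complement of a disjoint set `S`. -/
noncomputable def restMatrix (S S' : Finset (Fin n)) (hd : ∀ j ∈ S', j ∉ S)
    (A : Matrix (Sconf S') (Sconf S') ℂ) : Matrix (Cconf S) (Cconf S) ℂ :=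
  Matrix.of fun u u' =>
    if ∀ j : {j : Fin n // j ∉ S}, j.1 ∉ S' → u j = u' j then
      A (fun s => u ⟨s.1, hd s.1 s.2⟩) (fun s => u' ⟨s.1, hd s.1 s.2⟩) else 0

/-- the configuration-space equivalence splitting along `S`. -/
def splitEquiv (S : Finset (Fin n)) : QubitConfig n ≃ Sconf S × Cconf S where
  toFun x := (resS S x, resC S x)
  invFun p := merge S p.1 p.2
  left_inv x := merge_res S x
  right_inv p := by simp

lemma slice_mulVec (S S' : Finset (Fin n)) (hd : ∀ j ∈ S', j ∉ S)
    (A : Matrix (Sconf S') (Sconf S') ℂ) (f : QubitConfig n → ℂ) (a : Sconf S) :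
    slice S ((extendMatrix n S' A).mulVec f) a
      = (restMatrix S S' hd A).mulVec (slice S f a) := by
  funext u
  show ((extendMatrix n S' A).mulVec f) (merge S a u) = _
  rw [Matrix.mulVec, dotProduct]
  rw [← Equiv.sum_comp (splitEquiv S).symm (fun y => extendMatrix n S' A (merge S a u) y * f y)]
  rw [Fintype.sum_prod_type]
  rw [show (restMatrix S S' hd A).mulVec (slice S f a) u
      = ∑ a' : Sconf S, if a' = a then
          ∑ u' : Cconf S, restMatrix S S' hd A u u' * slice S f a' u' else 0 by
    rw [Finset.sum_ite_eq' Finset.univ a]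
    simp [Matrix.mulVec, dotProduct]]
  refine Finset.sum_congr rfl fun a' _ => ?_
  by_cases ha : a' = a
  · subst ha
    rw [if_pos rfl]
    refine Finset.sum_congr rfl fun u' _ => ?_
    show extendMatrix n S' A (merge S a' u) (merge S a' u') * f (merge S a' u')
        = restMatrix S S' hd A u u' * f (merge S a' u')
    congr 1
    show (if ∀ j ∉ S', merge S a' u j = merge S a' u' j then _ else 0) = _
    by_cases hc : ∀ j : {j : Fin n // j ∉ S}, j.1 ∉ S' → u j = u' j
    · rw [if_pos, restMatrix, Matrix.of_apply, if_pos hc]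
      · congr 1 <;> funext s <;>
          simp [merge_not_mem_S S _ _ (hd s.1 s.2)]
      · intro j hj
        by_cases hjS : j ∈ S
        · rw [merge_mem_S S _ _ hjS, merge_mem_S S _ _ hjS]
        · rw [merge_not_mem_S S _ _ hjS, merge_not_mem_S S _ _ hjS]
          exact hc ⟨j, hjS⟩ hj
    · rw [if_neg, restMatrix, Matrix.of_apply, if_neg hc]
      intro hcontra
      apply hc
      intro j hj
      have := hcontra j.1 hj
      rwa [merge_not_mem_S S _ _ j.2, merge_not_mem_S S _ _ j.2] at this
  · rw [if_neg ha]
    apply Finset.sum_eq_zero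
    intro u' _
    show extendMatrix n S' A (merge S a u) (merge S a' u') * f (merge S a' u') = 0
    have : ¬ ∀ j ∉ S', merge S a u j = merge S a' u' j := by
      intro hcontra
      apply ha
      funext s
      have hs : s.1 ∉ S' := fun h => hd s.1 h s.2
      have h2 := hcontra s.1 hs
      rw [merge_mem_S S _ _ s.2, merge_mem_S S _ _ s.2] at h2
      exact h2.symm
    rw [show extendMatrix n S' A (merge S a u) (merge S a' u') = 0 from if_neg this, zero_mul]

end QLLL

namespace QLLL

variable {n : ℕ}

/-- a subspace has `S`-product structure. -/
def IsProd (S : Finset (Fin n)) (Y : Submodule ℂ (QubitConfig n → ℂ)) : Prop :=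
  ∃ W, Y = prodSub S W

lemma isProd_top (S : Finset (Fin n)) : IsProd S ⊤ :=
  ⟨⊤, by ext f; simp [mem_prodSub]⟩

lemma IsProd.inf {S : Finset (Fin n)} {Y₁ Y₂ : Submodule ℂ (QubitConfig n → ℂ)}
    (h₁ : IsProd S Y₁) (h₂ : IsProd S Y₂) : IsProd S (Y₁ ⊓ Y₂) := by
  obtain ⟨W₁, rfl⟩ := h₁
  obtain ⟨W₂, rfl⟩ := h₂
  refine ⟨W₁ ⊓ W₂, ?_⟩
  ext f
  simp only [Submodule.mem_inf, mem_prodSub]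
  exact ⟨fun h a => ⟨h.1 a, h.2 a⟩, fun h => ⟨fun a => (h a).1, fun a => (h a).2⟩⟩

lemma isProd_ker (S S' : Finset (Fin n)) (hd : ∀ j ∈ S', j ∉ S)
    (A : Matrix (Sconf S') (Sconf S') ℂ) :
    IsProd S (LinearMap.ker (extendMatrix n S' A).mulVecLin) := by
  refine ⟨LinearMap.ker (restMatrix S S' hd A).mulVecLin, ?_⟩
  ext f
  simp only [LinearMap.mem_ker, Matrix.mulVecLin_apply, mem_prodSub]
  constructor
  · intro h a
    rw [← slice_mulVec S S' hd A f a, h]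
    rfl
  · intro h
    apply eq_zero_of_slices S
    intro a
    rw [slice_mulVec S S' hd A f a]
    exact h a

end QLLL

namespace QLLL

variable {n : ℕ}

lemma mulVec_family (S : Finset (Fin n)) (A : Matrix (Sconf S) (Sconf S) ℂ)
    (g : Sconf S → ℂ) (w : Cconf S → ℂ) :
    (extendMatrix n S A).mulVec (fun x => g (resS S x) * w (resC S x))
      = fun x => (A.mulVec g) (resS S x) * w (resC S x) := by
  funext x
  rw [Matrix.mulVec, dotProduct,
    ← Equiv.sum_comp (splitEquiv S).symm
      (fun y => extendMatrix n S A x y * (g (resS S y) * w (resC S y))),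
    Fintype.sum_prod_type]
  have hterm : ∀ (a' : Sconf S) (u' : Cconf S),
      extendMatrix n S A x ((splitEquiv S).symm (a', u'))
          * (g (resS S ((splitEquiv S).symm (a', u')))
            * w (resC S ((splitEquiv S).symm (a', u'))))
        = if u' = resC S x then A (resS S x) a' * g a' * w (resC S x) else 0 := by
    intro a' u'
    show extendMatrix n S A x (merge S a' u') * (g (resS S (merge S a' u'))
        * w (resC S (merge S a' u'))) = _
    rw [resS_merge, resC_merge]
    show (if ∀ j ∉ S, x j = merge S a' u' j then
        A (fun j => x j.1) (fun j => merge S a' u' j.1) else 0) * (g a' * w u') = _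
    have hfun : (fun j : {j : Fin n // j ∈ S} => merge S a' u' j.1) = a' := by
      funext s; exact merge_mem_S S a' u' s.2
    by_cases hc : u' = resC S x
    · subst hc
      rw [if_pos, if_pos rfl, hfun]
      · show A (resS S x) a' * (g a' * w (resC S x)) = _
        ring
      · intro j hj
        rw [merge_not_mem_S S a' _ hj]; rfl
    · rw [if_neg, if_neg hc, zero_mul]
      intro hcontra
      apply hc
      funext j
      have := hcontra j.1 j.2
      rw [merge_not_mem_S S a' u' j.2] at this
      exact this.symm
  calc ∑ a' : Sconf S, ∑ u' : Cconf S,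
        extendMatrix n S A x ((splitEquiv S).symm (a', u'))
          * (g (resS S ((splitEquiv S).symm (a', u')))
            * w (resC S ((splitEquiv S).symm (a', u'))))
      = ∑ a' : Sconf S, ∑ u' : Cconf S,
          if u' = resC S x then A (resS S x) a' * g a' * w (resC S x) else 0 := by
        refine Finset.sum_congr rfl fun a' _ => Finset.sum_congr rfl fun u' _ => hterm a' u'
    _ = ∑ a' : Sconf S, A (resS S x) a' * g a' * w (resC S x) := by
        refine Finset.sum_congr rfl fun a' _ => ?_
        rw [Finset.sum_ite_eq' Finset.univ (resC S x)
          (fun _ => A (resS S x) a' * g a' * w (resC S x))]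
        simp
    _ = (A.mulVec g) (resS S x) * w (resC S x) := by
        rw [Matrix.mulVec, dotProduct, Finset.sum_mul]

set_option maxHeartbeats 1000000 in
lemma finrank_ker_inf_prodSub (S : Finset (Fin n)) (A : Matrix (Sconf S) (Sconf S) ℂ)
    (W : Submodule ℂ (Cconf S → ℂ)) :
    Module.finrank ℂ W * Module.finrank ℂ (LinearMap.ker A.mulVecLin)
      ≤ Module.finrank ℂ ↥(LinearMap.ker (extendMatrix n S A).mulVecLin ⊓ prodSub S W) := by
  set K := LinearMap.ker A.mulVecLin with hK
  let bW := Module.finBasis ℂ ↥W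
  let bK := Module.finBasis ℂ ↥K
  set F : (Fin (Module.finrank ℂ ↥W) × Fin (Module.finrank ℂ ↥K)) → (QubitConfig n → ℂ) :=
    fun p x => (bK p.2 : Sconf S → ℂ) (resS S x) * (bW p.1 : Cconf S → ℂ) (resC S x) with hF
  have hmem : ∀ p, F p ∈ LinearMap.ker (extendMatrix n S A).mulVecLin ⊓ prodSub S W := by
    intro p
    refine Submodule.mem_inf.mpr ⟨?_, ?_⟩
    · rw [LinearMap.mem_ker, Matrix.mulVecLin_apply]
      show (extendMatrix n S A).mulVec
        (fun x => (bK p.2 : Sconf S → ℂ) (resS S x) * (bW p.1 : Cconf S → ℂ) (resC S x)) = 0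
      rw [mulVec_family]
      have : A.mulVec (bK p.2 : Sconf S → ℂ) = 0 := (bK p.2).2
      rw [this]
      funext x; simp
    · intro a
      have : slice S (F p) a = (bK p.2 : Sconf S → ℂ) a • ((bW p.1 : ↥W) : Cconf S → ℂ) := by
        funext u; simp [slice, hF, smul_eq_mul]
      rw [this]
      exact W.smul_mem _ (bW p.1).2
  have hli : LinearIndependent ℂ F := by
    rw [Fintype.linearIndependent_iff]
    intro c hc p
    have hKli : LinearIndependent ℂ (fun b => ((bK b : ↥K) : Sconf S → ℂ)) :=
      bK.linearIndependent.map' K.subtype (Submodule.ker_subtype K)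
    have hWli : LinearIndependent ℂ (fun a => ((bW a : ↥W) : Cconf S → ℂ)) :=
      bW.linearIndependent.map' W.subtype (Submodule.ker_subtype W)
    have step1 : ∀ u : Cconf S, ∀ b,
        (∑ a, c (a, b) * (bW a : Cconf S → ℂ) u) = 0 := by
      intro u
      have hsum : ∑ b, (∑ a, c (a, b) * (bW a : Cconf S → ℂ) u)
          • (fun y => ((bK b : ↥K) : Sconf S → ℂ) y) = 0 := by
        funext y
        have := congrFun hc (merge S y u)
        simp only [Finset.sum_apply, Pi.smul_apply, Pi.zero_apply, smul_eq_mul] at this ⊢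
        rw [← this]
        rw [Fintype.sum_prod_type_right]
        refine Finset.sum_congr rfl fun b _ => ?_
        rw [Finset.sum_mul]
        refine Finset.sum_congr rfl fun a _ => ?_
        simp only [hF, resS_merge, resC_merge]
        ring
      exact fun b => (Fintype.linearIndependent_iff.mp hKli) _ hsum b
    have step2 : ∀ b, ∑ a, c (a, b) • ((bW a : ↥W) : Cconf S → ℂ) = 0 := by
      intro b
      funext u
      simpa using step1 u b
    obtain ⟨a, b⟩ := p
    exact (Fintype.linearIndependent_iff.mp hWli) _ (step2 b) a
  have hli' : LinearIndependent ℂ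
      (fun p => (⟨F p, hmem p⟩ : ↥(LinearMap.ker (extendMatrix n S A).mulVecLin ⊓ prodSub S W))) := by
    apply LinearIndependent.of_comp
      (LinearMap.ker (extendMatrix n S A).mulVecLin ⊓ prodSub S W).subtype
    exact hli
  calc Module.finrank ℂ ↥W * Module.finrank ℂ ↥K
      = Fintype.card (Fin (Module.finrank ℂ ↥W) × Fin (Module.finrank ℂ ↥K)) := by
        simp
    _ ≤ _ := hli'.fintype_card_le_finrank

end QLLL

namespace QLLL

variable {V : Type*} [AddCommGroup V] [Module ℂ V] [FiniteDimensional ℂ V]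

lemma finrank_eq_map_add_inf (X U : Submodule ℂ V) :
    Module.finrank ℂ ↥U
      = Module.finrank ℂ ↥(U.map X.mkQ) + Module.finrank ℂ ↥(X ⊓ U) := by
  have h := LinearMap.finrank_range_add_finrank_ker (X.mkQ.comp U.subtype)
  rw [LinearMap.range_comp, Submodule.range_subtype, LinearMap.ker_comp, Submodule.ker_mkQ] at h
  rw [← h]
  congr 1
  have e1 : Submodule.comap U.subtype X = Submodule.comap U.subtype (X ⊓ U) := by
    rw [Submodule.comap_inf, Submodule.comap_subtype_self, inf_top_eq]
  rw [e1]
  exact (Submodule.comapSubtypeEquivOfLe inf_le_right).finrank_eq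

lemma codim_mono {X U U' : Submodule ℂ V} (h : U ≤ U') :
    Module.finrank ℂ ↥U + Module.finrank ℂ ↥(X ⊓ U')
      ≤ Module.finrank ℂ ↥U' + Module.finrank ℂ ↥(X ⊓ U) := by
  rw [finrank_eq_map_add_inf X U, finrank_eq_map_add_inf X U']
  have : Module.finrank ℂ ↥(U.map X.mkQ) ≤ Module.finrank ℂ ↥(U'.map X.mkQ) :=
    Submodule.finrank_mono (Submodule.map_mono h)
  omega

end QLLL

namespace QLLL

lemma numeric_key {d : ℝ} (hd : 2 ≤ d) {t : ℕ} (ht : (t : ℝ) ≤ d - 1) :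
    1 / (Real.exp 1 * d) ≤ (1 / d) * (1 - 1 / d) ^ t := by
  have hd0 : 0 < d := by linarith
  have hd1 : 0 < d - 1 := by linarith
  have hb0 : 0 < 1 - 1 / d := by
    have : 1 / d ≤ 1 / 2 := by
      apply one_div_le_one_div_of_le <;> linarith
    linarith
  have hb1 : 1 - 1 / d ≤ 1 := by
    have : 0 < 1 / d := by positivity
    linarith
  -- step 1 : exp (-1) ≤ (1 - 1/d) ^ (d - 1) (rpow)
  have hlog : Real.log (d / (d - 1)) ≤ 1 / (d - 1) := by
    have h1 : Real.log (d / (d - 1)) ≤ d / (d - 1) - 1 :=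
      Real.log_le_sub_one_of_pos (by positivity)
    have h2 : d / (d - 1) - 1 = 1 / (d - 1) := by field_simp; ring
    linarith
  have hlogb : Real.log (1 - 1 / d) = - Real.log (d / (d - 1)) := by
    have h1 : 1 - 1 / d = (d / (d - 1))⁻¹ := by field_simp
    rw [h1, Real.log_inv]
  have hexp : Real.exp (-1) ≤ (1 - 1 / d) ^ (d - 1 : ℝ) := by
    rw [Real.rpow_def_of_pos hb0]
    apply Real.exp_le_exp.mpr
    rw [hlogb]
    have : (d - 1) * Real.log (d / (d - 1)) ≤ (d - 1) * (1 / (d - 1)) :=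
      mul_le_mul_of_nonneg_left hlog (le_of_lt hd1)
    have h2 : (d - 1) * (1 / (d - 1)) = 1 := by field_simp
    rw [h2] at this
    nlinarith [this]
  -- step 2 : (1-1/d)^(d-1) ≤ (1-1/d)^t
  have hpow : (1 - 1 / d) ^ (d - 1 : ℝ) ≤ (1 - 1 / d) ^ t := by
    rw [← Real.rpow_natCast (1 - 1 / d) t]
    exact Real.rpow_le_rpow_of_exponent_ge hb0 hb1 ht
  have hexp1 : Real.exp (-1) = 1 / Real.exp 1 := by
    rw [Real.exp_neg]; exact inv_eq_one_div _
  calc 1 / (Real.exp 1 * d) = (1 / d) * Real.exp (-1) := by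
        rw [hexp1]; field_simp
    _ ≤ (1 / d) * (1 - 1 / d) ^ t := by
        apply mul_le_mul_of_nonneg_left (le_trans hexp hpow) (by positivity)

end QLLL


open QLLL

set_option maxHeartbeats 1000000 in
/-- k-QSAT via the quantum Lovász local lemma, higher-rank version: if every projector
`P i` has rank at most `r` and acts on a set `S i` of exactly `k` qubits, and every qubit
appears in at most `2^k / (e·r·k)` of the sets `S i`, then there is a nonzero state `ψ`
with `P i ψ = 0` for all `i`. -/
theorem qsat_satisfiable_of_low_degree_rank (n m k r : ℕ) (hk : 0 < k)
    (S : Fin m → Finset (Fin n)) (hcard : ∀ i, (S i).card = k)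
    (P : Fin m → Matrix (QubitConfig n) (QubitConfig n) ℂ)
    (hP : ∀ i, IsLocalProjectorRankLE n (S i) r (P i))
    (hdeg : ∀ q : Fin n, ((Finset.univ.filter fun i => q ∈ S i).card : ℝ)
        ≤ 2 ^ k / (Real.exp 1 * r * k)) :
    ∃ ψ : QubitConfig n → ℂ, ψ ≠ 0 ∧ ∀ i, (P i).mulVec ψ = 0 := by
  classical
  choose A hherm hidem hrank hPA using hP
  by_cases hm : m = 0
  · subst hm
    refine ⟨fun _ => 1, ?_, fun i => i.elim0⟩
    intro h
    have := congrFun h (fun _ => 0)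
    simp at this
  -- nontrivial case
  have i0 : Fin m := ⟨0, Nat.pos_of_ne_zero hm⟩
  obtain ⟨q0, hq0⟩ : ∃ q, q ∈ S i0 := by
    have : 0 < (S i0).card := by rw [hcard i0]; exact hk
    obtain ⟨q, hq⟩ := Finset.card_pos.mp this
    exact ⟨q, hq⟩
  have hdeg1 : ∀ {q : Fin n} {i : Fin m}, q ∈ S i →
      (1 : ℝ) ≤ ((Finset.univ.filter fun j => q ∈ S j).card : ℝ) := by
    intro q i hq
    have h1 : i ∈ Finset.univ.filter fun j => q ∈ S j :=
      Finset.mem_filter.mpr ⟨Finset.mem_univ _, hq⟩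
    have := Finset.card_pos.mpr ⟨i, h1⟩
    exact_mod_cast this
  have hr : 1 ≤ r := by
    by_contra h
    push_neg at h
    have hr0 : r = 0 := by omega
    have h0 := hdeg q0
    rw [hr0] at h0
    simp only [Nat.cast_zero, mul_zero, zero_mul, div_zero] at h0
    linarith [hdeg1 hq0]
  set D : ℝ := 2 ^ k / (Real.exp 1 * r * k) with hD
  have hD1 : 1 ≤ D := le_trans (hdeg1 hq0) (hdeg q0)
  have he : (2 : ℝ) < Real.exp 1 := lt_trans (by norm_num) Real.exp_one_gt_d9
  have hrR : (1 : ℝ) ≤ (r : ℝ) := by exact_mod_cast hr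
  have hkR : (1 : ℝ) ≤ (k : ℝ) := by exact_mod_cast hk
  have hk2 : 2 ≤ k := by
    by_contra h
    push_neg at h
    have hk1 : k = 1 := by omega
    have hDlt : D < 1 := by
      rw [hD, hk1]
      rw [div_lt_one (by positivity)]
      push_cast
      nlinarith
    linarith
  have hk2R : (2 : ℝ) ≤ (k : ℝ) := by exact_mod_cast hk2
  set d : ℝ := k * D with hd
  have hd2 : 2 ≤ d := by rw [hd]; nlinarith
  set x : ℝ := 1 / d with hx
  have hx0 : 0 < x := by rw [hx]; positivity
  have hxhalf : x ≤ 1 / 2 := by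
    rw [hx]
    apply one_div_le_one_div_of_le <;> linarith
  have hb : 0 < 1 - x := by linarith
  have h2k : (0 : ℝ) < 2 ^ k := by positivity
  have hp_eq : (r : ℝ) / 2 ^ k = 1 / (Real.exp 1 * d) := by
    rw [hd, hD]
    have h1 : Real.exp 1 ≠ 0 := by positivity
    have h2 : (r : ℝ) ≠ 0 := by positivity
    have h3 : (k : ℝ) ≠ 0 := by positivity
    field_simp
  set X : Fin m → Submodule ℂ (QubitConfig n → ℂ) :=
    (fun i => LinearMap.ker (P i).mulVecLin) with hXdef
  -- product structure for families of clauses disjoint from S i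
  have hprod : ∀ (i : Fin m) (J : Finset (Fin m)),
      (∀ j ∈ J, Disjoint (S j) (S i)) → IsProd (S i) (J.inf X) := by
    intro i J
    induction J using Finset.induction_on with
    | empty => intro _; rw [Finset.inf_empty]; exact isProd_top _
    | @insert j J hjJ IH =>
      intro hdisj
      rw [Finset.inf_insert]
      apply IsProd.inf
      · have hdj : ∀ q ∈ S j, q ∉ S i := by
          have h1 := hdisj j (Finset.mem_insert_self _ _)
          exact fun q hq hq' => (Finset.disjoint_left.mp h1 hq) hq'
        show IsProd (S i) (LinearMap.ker (P j).mulVecLin)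
        rw [hPA j]
        exact isProd_ker (S i) (S j) hdj (A j)
      · exact IH (fun j' hj' => hdisj j' (Finset.mem_insert_of_mem hj'))
  -- the single-clause conditional bound
  have hstep2 : ∀ (i : Fin m) (J : Finset (Fin m)), (∀ j ∈ J, Disjoint (S j) (S i)) →
      (1 - (r : ℝ) / 2 ^ k) * (Module.finrank ℂ ↥(J.inf X) : ℝ)
        ≤ (Module.finrank ℂ ↥((insert i J).inf X) : ℝ) := by
    intro i J hJ
    obtain ⟨W, hW⟩ := hprod i J hJ
    have hcardS : Fintype.card (Sconf (S i)) = 2 ^ k := by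
      rw [Fintype.card_fun, Fintype.card_coe, hcard i, Fintype.card_fin]
    have hK : ((A i).rank : ℝ)
        + (Module.finrank ℂ ↥(LinearMap.ker (A i).mulVecLin) : ℝ) = 2 ^ k := by
      have h1 := LinearMap.finrank_range_add_finrank_ker (A i).mulVecLin
      rw [Module.finrank_fintype_fun_eq_card, hcardS] at h1
      have h2 : (A i).rank = Module.finrank ℂ ↥(LinearMap.range (A i).mulVecLin) := rfl
      rw [h2]
      exact_mod_cast h1
    have hinf : (insert i J).inf X
        = LinearMap.ker (extendMatrix n (S i) (A i)).mulVecLin ⊓ prodSub (S i) W := by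
      rw [Finset.inf_insert, hW]
      congr 1
      show LinearMap.ker (P i).mulVecLin = _
      rw [hPA i]
    have h1 : Module.finrank ℂ ↥W
          * Module.finrank ℂ ↥(LinearMap.ker (A i).mulVecLin)
        ≤ Module.finrank ℂ ↥((insert i J).inf X) := by
      rw [hinf]
      exact finrank_ker_inf_prodSub (S i) (A i) W
    have h2 : Module.finrank ℂ ↥(J.inf X) = 2 ^ k * Module.finrank ℂ ↥W := by
      rw [hW, finrank_prodSub, hcard i]
    have hw0 : (0 : ℝ) ≤ (Module.finrank ℂ ↥W : ℝ) := Nat.cast_nonneg _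
    have hrankR : ((A i).rank : ℝ) ≤ (r : ℝ) := by exact_mod_cast hrank i
    have h1R : (Module.finrank ℂ ↥W : ℝ)
          * (Module.finrank ℂ ↥(LinearMap.ker (A i).mulVecLin) : ℝ)
        ≤ (Module.finrank ℂ ↥((insert i J).inf X) : ℝ) := by exact_mod_cast h1
    have h2R : (Module.finrank ℂ ↥(J.inf X) : ℝ)
        = 2 ^ k * (Module.finrank ℂ ↥W : ℝ) := by exact_mod_cast h2
    rw [h2R]
    have e1 : (1 - (r : ℝ) / 2 ^ k) * ((2 : ℝ) ^ k * (Module.finrank ℂ ↥W : ℝ))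
        = ((2 : ℝ) ^ k - r) * (Module.finrank ℂ ↥W : ℝ) := by
      field_simp
    rw [e1]
    calc ((2 : ℝ) ^ k - r) * (Module.finrank ℂ ↥W : ℝ)
        ≤ (Module.finrank ℂ ↥(LinearMap.ker (A i).mulVecLin) : ℝ)
          * (Module.finrank ℂ ↥W : ℝ) := by
          apply mul_le_mul_of_nonneg_right _ hw0
          linarith
      _ ≤ _ := by rw [mul_comm]; exact h1R
  -- counting neighbours
  have hcount : ∀ (i : Fin m) (I : Finset (Fin m)), i ∉ I →
      (((I.filter fun j => ¬ Disjoint (S j) (S i)).card : ℝ)) ≤ d - 1 := by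
    intro i I hiI
    set I1 := I.filter fun j => ¬ Disjoint (S j) (S i) with hI1
    have step1 : I1.card ≤ ∑ q ∈ S i, (I1.filter fun j => q ∈ S j).card := by
      have h1 : ∀ j ∈ I1, 1 ≤ (S j ∩ S i).card := by
        intro j hj
        exact Finset.card_pos.mpr
          (Finset.not_disjoint_iff_nonempty_inter.mp (Finset.mem_filter.mp hj).2)
      calc I1.card = ∑ _j ∈ I1, 1 := by simp
        _ ≤ ∑ j ∈ I1, (S j ∩ S i).card := Finset.sum_le_sum h1
        _ = ∑ j ∈ I1, ∑ q ∈ S i, (if q ∈ S j then 1 else 0) := by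
            refine Finset.sum_congr rfl fun j _ => ?_
            rw [show S j ∩ S i = (S i).filter (· ∈ S j) by
              rw [Finset.filter_mem_eq_inter, Finset.inter_comm]]
            exact Finset.card_filter _ _
        _ = ∑ q ∈ S i, ∑ j ∈ I1, (if q ∈ S j then 1 else 0) := Finset.sum_comm
        _ = ∑ q ∈ S i, (I1.filter fun j => q ∈ S j).card := by
            refine Finset.sum_congr rfl fun q _ => (Finset.card_filter _ _).symm
    have step2 : ∀ q ∈ S i, ((I1.filter fun j => q ∈ S j).card : ℝ) ≤ D - 1 := by
      intro q hq
      set T := Finset.univ.filter fun j => q ∈ S j with hT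
      have hiT : i ∈ T := Finset.mem_filter.mpr ⟨Finset.mem_univ _, hq⟩
      have hsub : I1.filter (fun j => q ∈ S j) ⊆ T.erase i := by
        intro j hj
        have hj1 := Finset.mem_filter.mp hj
        have hjI : j ∈ I := Finset.mem_of_mem_filter j hj1.1
        refine Finset.mem_erase.mpr ⟨?_, Finset.mem_filter.mpr ⟨Finset.mem_univ _, hj1.2⟩⟩
        intro hji
        exact hiI (hji ▸ hjI)
      have hcard1 : (I1.filter fun j => q ∈ S j).card ≤ T.card - 1 :=
        le_trans (Finset.card_le_card hsub) (le_of_eq (Finset.card_erase_of_mem hiT))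
      have hTpos : 1 ≤ T.card := Finset.card_pos.mpr ⟨i, hiT⟩
      have hTD : (T.card : ℝ) ≤ D := hdeg q
      have hc : ((I1.filter fun j => q ∈ S j).card : ℝ) ≤ (T.card : ℝ) - 1 := by
        have h5 : ((I1.filter fun j => q ∈ S j).card : ℝ) ≤ ((T.card - 1 : ℕ) : ℝ) := by
          exact_mod_cast hcard1
        rwa [Nat.cast_sub hTpos, Nat.cast_one] at h5
      linarith
    calc (I1.card : ℝ) ≤ ∑ q ∈ S i, ((I1.filter fun j => q ∈ S j).card : ℝ) := by
          exact_mod_cast step1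
      _ ≤ ∑ _q ∈ S i, (D - 1) := Finset.sum_le_sum step2
      _ = k * (D - 1) := by
          rw [Finset.sum_const, hcard i, nsmul_eq_mul]
      _ = d - k := by rw [hd]; ring
      _ ≤ d - 1 := by linarith
  -- the local lemma induction
  have key : ∀ I : Finset (Fin m), ∀ i,
      (1 - x) * (Module.finrank ℂ ↥(I.inf X) : ℝ)
        ≤ (Module.finrank ℂ ↥((insert i I).inf X) : ℝ) := by
    intro I
    induction I using Finset.strongInduction with
    | _ I IH =>
      intro i
      by_cases hiI : i ∈ I
      · rw [Finset.insert_eq_self.mpr hiI]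
        nlinarith [Nat.cast_nonneg (α := ℝ) (Module.finrank ℂ ↥(I.inf X))]
      · set I1 := I.filter (fun j => ¬ Disjoint (S j) (S i)) with hI1
        set I2 := I.filter (fun j => Disjoint (S j) (S i)) with hI2
        have hI12 : I2 ∪ I1 = I := by
          rw [hI1, hI2]
          exact Finset.filter_union_filter_not_eq _ I
        have hdisjI2 : ∀ j ∈ I2, Disjoint (S j) (S i) :=
          fun j hj => (Finset.mem_filter.mp hj).2
        have hpeel : ∀ J : Finset (Fin m), J ⊆ I1 →
            (1 - x) ^ J.card * (Module.finrank ℂ ↥(I2.inf X) : ℝ)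
              ≤ (Module.finrank ℂ ↥((I2 ∪ J).inf X) : ℝ) := by
          intro J
          induction J using Finset.induction_on with
          | empty => intro _; rw [Finset.union_empty]; simp
          | @insert j J hjJ IHJ =>
            intro hsub
            have hj1 : j ∈ I1 := hsub (Finset.mem_insert_self _ _)
            have hJ1 : J ⊆ I1 := fun a ha => hsub (Finset.mem_insert_of_mem ha)
            have hUsub : I2 ∪ J ⊂ I := by
              rw [Finset.ssubset_iff_of_subset]
              · refine ⟨j, Finset.mem_of_mem_filter j hj1, ?_⟩
                intro hmem
                rcases Finset.mem_union.mp hmem with h | h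
                · exact (Finset.mem_filter.mp hj1).2 (Finset.mem_filter.mp h).2
                · exact hjJ h
              · exact Finset.union_subset (Finset.filter_subset _ _)
                  (hJ1.trans (Finset.filter_subset _ _))
            have hrec := IH (I2 ∪ J) hUsub j
            calc (1 - x) ^ (insert j J).card * (Module.finrank ℂ ↥(I2.inf X) : ℝ)
                = (1 - x) * ((1 - x) ^ J.card
                    * (Module.finrank ℂ ↥(I2.inf X) : ℝ)) := by
                  rw [Finset.card_insert_of_notMem hjJ, pow_succ]; ring
              _ ≤ (1 - x) * (Module.finrank ℂ ↥((I2 ∪ J).inf X) : ℝ) :=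
                  mul_le_mul_of_nonneg_left (IHJ hJ1) hb.le
              _ ≤ (Module.finrank ℂ ↥((insert j (I2 ∪ J)).inf X) : ℝ) := hrec
              _ = (Module.finrank ℂ ↥((I2 ∪ insert j J).inf X) : ℝ) := by
                  rw [Finset.union_insert]
        have hA2 := hstep2 i I2 hdisjI2
        have hA1 : (Module.finrank ℂ ↥(I.inf X) : ℝ)
              + (Module.finrank ℂ ↥((insert i I2).inf X) : ℝ)
            ≤ (Module.finrank ℂ ↥(I2.inf X) : ℝ)
              + (Module.finrank ℂ ↥((insert i I).inf X) : ℝ) := by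
          have hle : I.inf X ≤ I2.inf X :=
            Finset.inf_mono (by rw [hI2]; exact Finset.filter_subset _ _)
          have hc := codim_mono (X := X i) hle
          rw [← Finset.inf_insert, ← Finset.inf_insert] at hc
          exact_mod_cast hc
        have hpeelI : (1 - x) ^ I1.card * (Module.finrank ℂ ↥(I2.inf X) : ℝ)
            ≤ (Module.finrank ℂ ↥(I.inf X) : ℝ) := by
          have h6 := hpeel I1 (subset_refl I1)
          rwa [hI12] at h6
        have hnum : (r : ℝ) / 2 ^ k ≤ x * (1 - x) ^ I1.card := by
          rw [hp_eq, hx]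
          exact numeric_key hd2 (hcount i I hiI)
        have hNI2 : (0 : ℝ) ≤ (Module.finrank ℂ ↥(I2.inf X) : ℝ) := Nat.cast_nonneg _
        have h5 : (r : ℝ) / 2 ^ k * (Module.finrank ℂ ↥(I2.inf X) : ℝ)
            ≤ x * (Module.finrank ℂ ↥(I.inf X) : ℝ) := by
          calc (r : ℝ) / 2 ^ k * (Module.finrank ℂ ↥(I2.inf X) : ℝ)
              ≤ (x * (1 - x) ^ I1.card) * (Module.finrank ℂ ↥(I2.inf X) : ℝ) :=
                mul_le_mul_of_nonneg_right hnum hNI2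
            _ = x * ((1 - x) ^ I1.card * (Module.finrank ℂ ↥(I2.inf X) : ℝ)) := by ring
            _ ≤ x * (Module.finrank ℂ ↥(I.inf X) : ℝ) :=
                mul_le_mul_of_nonneg_left hpeelI hx0.le
        linarith [hA2, h5, hA1]
  -- conclusion
  have grow : ∀ J : Finset (Fin m),
      (1 - x) ^ J.card * (Module.finrank ℂ ↥((∅ : Finset (Fin m)).inf X) : ℝ)
        ≤ (Module.finrank ℂ ↥(J.inf X) : ℝ) := by
    intro J
    induction J using Finset.induction_on with
    | empty => simp
    | @insert j J hjJ IHJ =>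
      calc (1 - x) ^ (insert j J).card
            * (Module.finrank ℂ ↥((∅ : Finset (Fin m)).inf X) : ℝ)
          = (1 - x) * ((1 - x) ^ J.card
              * (Module.finrank ℂ ↥((∅ : Finset (Fin m)).inf X) : ℝ)) := by
            rw [Finset.card_insert_of_notMem hjJ, pow_succ]; ring
        _ ≤ (1 - x) * (Module.finrank ℂ ↥(J.inf X) : ℝ) :=
            mul_le_mul_of_nonneg_left IHJ hb.le
        _ ≤ _ := key J j
  have hNempty : 0 < Module.finrank ℂ ↥((∅ : Finset (Fin m)).inf X) := by
    rw [Finset.inf_empty]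
    rw [finrank_top]
    rw [Module.finrank_fintype_fun_eq_card]
    exact Fintype.card_pos
  have hNuniv : 0 < Module.finrank ℂ ↥((Finset.univ : Finset (Fin m)).inf X) := by
    have h7 := grow Finset.univ
    have h8 : (0 : ℝ) < (1 - x) ^ (Finset.univ : Finset (Fin m)).card
        * (Module.finrank ℂ ↥((∅ : Finset (Fin m)).inf X) : ℝ) := by
      apply mul_pos (pow_pos hb _)
      exact_mod_cast hNempty
    have : (0 : ℝ) < (Module.finrank ℂ ↥((Finset.univ : Finset (Fin m)).inf X) : ℝ) :=
      lt_of_lt_of_le h8 h7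
    exact_mod_cast this
  have hne : (Finset.univ : Finset (Fin m)).inf X ≠ ⊥ := by
    intro h
    rw [h, finrank_bot] at hNuniv
    exact lt_irrefl 0 hNuniv
  obtain ⟨ψ, hψmem, hψne⟩ := (Submodule.ne_bot_iff _).mp hne
  refine ⟨ψ, hψne, fun i => ?_⟩
  have hle : Finset.univ.inf X ≤ X i := Finset.inf_le (Finset.mem_univ i)
  have hmem : ψ ∈ X i := hle hψmem
  have : (P i).mulVecLin ψ = 0 := hmem
  rwa [Matrix.mulVecLin_apply] at this
end

section
/- Let X be a random variable distributed according to a Poisson distribution with mean λ > 0, and let k > 1 be such that c := k·λ is a positive integer. Then the conditional expectation of X given X ≥ c satisfies E[X | X ≥ c] ≤ (k+1)·λ; equivalently, ∑_{j=c}^{∞} j · P(X = j) ≤ (k+1)·λ · P(X ≥ c). -/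
/-- For `X` Poisson distributed with mean `λ > 0` (so `P(X = j) = e^{-λ} λ^j / j!`) and
`k > 1` with `c = k·λ` a positive integer, the conditional expectation of `X` given
`X ≥ c` is at most `(k+1)·λ`; equivalently
`∑_{j ≥ c} j·P(X = j) ≤ (k+1)·λ·P(X ≥ c)`. -/
theorem poisson_conditional_expectation_bound (lam : ℝ) (hlam : 0 < lam)
    (k : ℝ) (hk : 1 < k) (c : ℕ) (hc : 0 < c) (hck : (c : ℝ) = k * lam) :
    (∑' j : ℕ, if c ≤ j then (j : ℝ) * (Real.exp (-lam) * lam ^ j / (Nat.factorial j)) else 0)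
      ≤ (k + 1) * lam *
        ∑' j : ℕ, if c ≤ j then Real.exp (-lam) * lam ^ j / (Nat.factorial j) else 0 := by
  set p : ℕ → ℝ := fun j => Real.exp (-lam) * lam ^ j / (Nat.factorial j) with hpdef
  have hppos : ∀ j, 0 < p j := by
    intro j
    have : (0:ℝ) < (Nat.factorial j : ℝ) := by positivity
    positivity
  have hpsum : Summable p := by
    have := (Real.summable_pow_div_factorial lam).mul_left (Real.exp (-lam))
    simpa [hpdef, mul_div_assoc] using this
  -- summability of truncated tails
  have htail : ∀ m : ℕ, Summable (fun j => if m ≤ j then p j else 0) := by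
    intro m
    refine Summable.of_nonneg_of_le ?_ ?_ hpsum
    · intro j; split
      · exact (hppos j).le
      · exact le_rfl
    · intro j; split
      · exact le_rfl
      · exact (hppos j).le
  set T : ℝ := ∑' j : ℕ, if c ≤ j then p j else 0 with hTdef
  have hTnn : 0 ≤ T := by
    apply tsum_nonneg
    intro j; split
    · exact (hppos j).le
    · exact le_rfl
  -- the key pointwise shift identity
  have hF1 : ∀ n : ℕ, (if c ≤ n + 1 then ((n+1 : ℕ) : ℝ) * p (n+1) else 0)
      = lam * (if c - 1 ≤ n then p n else 0) := by
    intro n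
    have hiff : c ≤ n + 1 ↔ c - 1 ≤ n := by omega
    by_cases h : c ≤ n + 1
    · rw [if_pos h, if_pos (hiff.mp h)]
      have hfact : ((Nat.factorial (n+1) : ℝ)) = (n+1) * Nat.factorial n := by
        rw [Nat.factorial_succ]; push_cast; ring
      have hf0 : (Nat.factorial n : ℝ) ≠ 0 := by positivity
      simp only [hpdef, hfact]
      push_cast
      field_simp
      ring
    · rw [if_neg h, if_neg (fun hh => h (hiff.mpr hh)), mul_zero]
  have hsum1 : Summable (fun n : ℕ => (if c ≤ n + 1 then ((n+1 : ℕ) : ℝ) * p (n+1) else 0)) := by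
    simpa only [hF1] using (htail (c-1)).mul_left lam
  have hFsum : Summable (fun j : ℕ => if c ≤ j then (j : ℝ) * p j else 0) := by
    rw [← summable_nat_add_iff 1]
    exact hsum1
  -- compute LHS
  have hL : (∑' j : ℕ, if c ≤ j then (j : ℝ) * p j else 0)
      = lam * ∑' n : ℕ, (if c - 1 ≤ n then p n else 0) := by
    rw [Summable.tsum_eq_zero_add hFsum]
    have h0 : (if c ≤ 0 then ((0:ℕ) : ℝ) * p 0 else 0) = 0 := by
      rw [if_neg (by omega)]
    push_cast at h0 ⊢
    rw [h0, zero_add]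
    rw [← tsum_mul_left]
    congr 1
    funext n
    have := hF1 n
    push_cast at this
    exact this
  -- split off the term at c-1
  have hsplit : (∑' n : ℕ, (if c - 1 ≤ n then p n else 0)) = p (c-1) + T := by
    have hpt : ∀ n : ℕ, (if c - 1 ≤ n then p n else 0)
        = (if n = c - 1 then p (c-1) else 0) + (if c ≤ n then p n else 0) := by
      intro n
      rcases Nat.lt_or_ge n c with h | h
      · rcases eq_or_ne n (c-1) with rfl | hne
        · rw [if_pos le_rfl, if_pos rfl, if_neg (by omega), add_zero]
        · rw [if_neg (by omega), if_neg hne, if_neg (by omega), add_zero]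
      · rw [if_pos (by omega), if_neg (by omega), if_pos h, zero_add]
    calc (∑' n : ℕ, (if c - 1 ≤ n then p n else 0))
        = ∑' n : ℕ, ((if n = c - 1 then p (c-1) else 0) + (if c ≤ n then p n else 0)) := by
          exact tsum_congr hpt
      _ = (∑' n : ℕ, (if n = c - 1 then p (c-1) else 0)) + T := by
          rw [Summable.tsum_add ?_ (htail c)]
          exact summable_of_ne_finset_zero (s := {c-1}) (by
            intro n hn
            rw [if_neg (by simpa using hn)])
      _ = p (c-1) + T := by rw [tsum_ite_eq]
  -- p (c-1) = k * p c
  obtain ⟨m, rfl⟩ : ∃ m, c = m + 1 := ⟨c - 1, by omega⟩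
  have hkpc : p m = k * p (m+1) := by
    have hfact : ((Nat.factorial (m+1) : ℝ)) = (m+1) * Nat.factorial m := by
      rw [Nat.factorial_succ]; push_cast; ring
    have hf0 : (Nat.factorial m : ℝ) ≠ 0 := by positivity
    have hm1 : ((m:ℝ) + 1) = k * lam := by push_cast at hck ⊢; linarith
    simp only [hpdef, hfact]
    have hm0 : ((m:ℝ) + 1) ≠ 0 := by positivity
    field_simp
    rw [pow_succ]
    linear_combination lam ^ m * hm1
  have hpcT : p (m+1) ≤ T := by
    have := Summable.le_tsum (htail (m+1)) (m+1) (fun j _ => by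
      split
      · exact (hppos j).le
      · exact le_rfl)
    simpa [hTdef] using this
  have hkey : p ((m+1) - 1) ≤ k * T := by
    simp only [Nat.add_sub_cancel]
    rw [hkpc]
    exact mul_le_mul_of_nonneg_left hpcT (by linarith)
  rw [hL, hsplit]
  have h1 : p ((m+1)-1) + T ≤ (k+1) * T := by linarith
  calc lam * (p ((m+1)-1) + T) ≤ lam * ((k+1) * T) :=
        mul_le_mul_of_nonneg_left h1 hlam.le
    _ = (k+1) * lam * T := by ring
end

section
/- Let n, m, k be positive integers with k ≥ 2, and let e_1, …, e_m be independent random edges, each chosen uniformly at random from the set of all k-element subsets of {1,…,n}. Then for every real number γ > 0, the probability that there exist an integer t with 1 ≤ t ≤ γ·n and a set S ⊆ {1,…,n} with |S| = t − 1 such that at least t of the edges e_1, …, e_m are contained in S is at most ∑_{t=1}^{⌊γn⌋} C(n, t−1) · C(m, t) · ((t−1)/n)^{k·t}, where C(a,b) denotes the binomial coefficient. -/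
open scoped Classical

lemma choose_mul_pow_le_aux {a n : ℕ} (k : ℕ) (h : a ≤ n) :
    a.choose k * n ^ k ≤ n.choose k * a ^ k := by
  have hfac : 0 < k.factorial := Nat.factorial_pos k
  have key : k.factorial * (a.choose k * n ^ k) ≤ k.factorial * (n.choose k * a ^ k) := by
    rw [← Nat.mul_assoc, ← Nat.mul_assoc,
      ← Nat.descFactorial_eq_factorial_mul_choose, ← Nat.descFactorial_eq_factorial_mul_choose,
      Nat.descFactorial_eq_prod_range, Nat.descFactorial_eq_prod_range]
    calc (∏ i ∈ Finset.range k, (a - i)) * n ^ k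
        = ∏ i ∈ Finset.range k, ((a - i) * n) := by
          rw [Finset.prod_mul_distrib, Finset.prod_const, Finset.card_range]
      _ ≤ ∏ i ∈ Finset.range k, ((n - i) * a) := by
          refine Finset.prod_le_prod' fun i _ => ?_
          rw [Nat.sub_mul, Nat.sub_mul, Nat.mul_comm n a]
          exact Nat.sub_le_sub_left (Nat.mul_le_mul_left i h) _
      _ = (∏ i ∈ Finset.range k, (n - i)) * a ^ k := by
          rw [Finset.prod_mul_distrib, Finset.prod_const, Finset.card_range]
  exact Nat.le_of_mul_le_mul_left key hfac

lemma card_filter_forall {m : ℕ} {E : Type*} [Fintype E] (T : Finset (Fin m)) (P : E → Prop) [DecidablePred P] [∀ ω : Fin m → E, Decidable (∀ i ∈ T, P (ω i))] :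
    (Finset.univ.filter (fun ω : Fin m → E => ∀ i ∈ T, P (ω i))).card
      = (Finset.univ.filter P).card ^ T.card * (Fintype.card E) ^ (m - T.card) := by
  classical
  rw [← Fintype.card_subtype]
  have e : {ω : Fin m → E // ∀ i ∈ T, P (ω i)} ≃ (∀ i : Fin m, {e : E // i ∈ T → P e}) :=
    Equiv.subtypePiEquivPi (p := fun i e => i ∈ T → P e)
  rw [Fintype.card_congr e, Fintype.card_pi]
  have hcard : ∀ i : Fin m, Fintype.card {e : E // i ∈ T → P e}
      = if i ∈ T then (Finset.univ.filter P).card else Fintype.card E := by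
    intro i
    by_cases h : i ∈ T
    · simp only [h, if_true, Fintype.card_subtype]
      congr 1
      ext e
      simp [h]
    · simp only [h, if_false, Fintype.card_subtype]
      simp [h]
  calc ∏ i : Fin m, Fintype.card {e : E // i ∈ T → P e}
      = ∏ i : Fin m, (if i ∈ T then (Finset.univ.filter P).card else Fintype.card E) :=
        Finset.prod_congr rfl (fun i _ => hcard i)
    _ = (∏ i ∈ T, (if i ∈ T then (Finset.univ.filter P).card else Fintype.card E))
        * ∏ i ∈ Tᶜ, (if i ∈ T then (Finset.univ.filter P).card else Fintype.card E) :=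
        (Finset.prod_mul_prod_compl T _).symm
    _ = (Finset.univ.filter P).card ^ T.card * (Fintype.card E) ^ (m - T.card) := by
        rw [Finset.prod_congr rfl (fun i hi => if_pos hi),
          Finset.prod_congr rfl (fun i (hi : i ∈ Tᶜ) => if_neg (Finset.mem_compl.mp hi)),
          Finset.prod_const, Finset.prod_const, Finset.card_compl, Fintype.card_fin]

lemma card_filter_subset_edges {n k : ℕ} (S : Finset (Fin n)) :
    (Finset.univ.filter (fun e : {s : Finset (Fin n) // s.card = k} =>
      (e : Finset (Fin n)) ⊆ S)).card = S.card.choose k := by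
  classical
  rw [← Finset.card_powersetCard k S]
  refine Finset.card_bij (fun e _ => (e : Finset (Fin n))) ?_ ?_ ?_
  · intro e he
    rw [Finset.mem_powersetCard]
    exact ⟨(Finset.mem_filter.mp he).2, e.2⟩
  · intro e₁ _ e₂ _ h
    exact Subtype.ext h
  · intro s hs
    rw [Finset.mem_powersetCard] at hs
    exact ⟨⟨s, hs.2⟩, Finset.mem_filter.mpr ⟨Finset.mem_univ _, hs.1⟩, rfl⟩

/-- Union bound for "bad" subsets in a random hypergraph from `G_k(n, m)`: with `m` edges
drawn independently and uniformly from the `k`-element subsets of `{1,…,n}`, the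
probability that some set `S` of `t - 1` vertices (for some `1 ≤ t ≤ γ·n`) contains at
least `t` of the edges is at most
`∑_{t=1}^{⌊γn⌋} C(n, t-1) · C(m, t) · ((t-1)/n)^{k·t}`. -/
theorem random_hypergraph_bad_subset_bound (n m k : ℕ) (hn : 0 < n) (hm : 0 < m)
    (hk : 2 ≤ k) (hkn : k ≤ n) (γ : ℝ) (hγ : 0 < γ) :
    ((Finset.univ.filter (fun ω : Fin m → {s : Finset (Fin n) // s.card = k} =>
          ∃ t : ℕ, 1 ≤ t ∧ (t : ℝ) ≤ γ * n ∧
            ∃ S : Finset (Fin n), S.card = t - 1 ∧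
              t ≤ (Finset.univ.filter (fun i : Fin m => (ω i : Finset (Fin n)) ⊆ S)).card)).card
        : ℝ)
      / (Fintype.card (Fin m → {s : Finset (Fin n) // s.card = k}) : ℝ)
    ≤ ∑ t ∈ Finset.Icc 1 ⌊γ * (n : ℝ)⌋₊,
        (n.choose (t - 1) : ℝ) * (m.choose t : ℝ) * (((t - 1 : ℕ) : ℝ) / n) ^ (k * t) := by
  classical
  have hN : Fintype.card {s : Finset (Fin n) // s.card = k} = n.choose k := by
    simpa using Fintype.card_finset_len (α := Fin n) k
  have hNpos : 0 < n.choose k := Nat.choose_pos hkn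
  -- Step 1: union bound in ℕ
  have hsub : (Finset.univ.filter (fun ω : Fin m → {s : Finset (Fin n) // s.card = k} =>
        ∃ t : ℕ, 1 ≤ t ∧ (t : ℝ) ≤ γ * n ∧
          ∃ S : Finset (Fin n), S.card = t - 1 ∧
            t ≤ (Finset.univ.filter (fun i : Fin m => (ω i : Finset (Fin n)) ⊆ S)).card))
      ⊆ (Finset.Icc 1 ⌊γ * (n : ℝ)⌋₊).biUnion (fun t =>
          ((Finset.univ : Finset (Fin n)).powersetCard (t - 1)).biUnion (fun S =>
            ((Finset.univ : Finset (Fin m)).powersetCard t).biUnion (fun T =>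
              Finset.univ.filter (fun ω : Fin m → {s : Finset (Fin n) // s.card = k} =>
                ∀ i ∈ T, (ω i : Finset (Fin n)) ⊆ S)))) := by
    intro ω hω
    simp only [Finset.mem_filter, Finset.mem_univ, true_and] at hω
    obtain ⟨t, ht1, htγ, S, hS, hcount⟩ := hω
    obtain ⟨T, hTsub, hTcard⟩ := Finset.exists_subset_card_eq hcount
    refine Finset.mem_biUnion.mpr ⟨t, Finset.mem_Icc.mpr ⟨ht1, Nat.le_floor htγ⟩,
      Finset.mem_biUnion.mpr ⟨S, ?_, Finset.mem_biUnion.mpr ⟨T, ?_, ?_⟩⟩⟩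
    · exact Finset.mem_powersetCard.mpr ⟨Finset.subset_univ _, hS⟩
    · exact Finset.mem_powersetCard.mpr ⟨Finset.subset_univ _, hTcard⟩
    · exact Finset.mem_filter.mpr ⟨Finset.mem_univ _,
        fun i hi => (Finset.mem_filter.mp (hTsub hi)).2⟩
  have step1 : (Finset.univ.filter (fun ω : Fin m → {s : Finset (Fin n) // s.card = k} =>
        ∃ t : ℕ, 1 ≤ t ∧ (t : ℝ) ≤ γ * n ∧
          ∃ S : Finset (Fin n), S.card = t - 1 ∧
            t ≤ (Finset.univ.filter (fun i : Fin m => (ω i : Finset (Fin n)) ⊆ S)).card)).card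
      ≤ ∑ t ∈ Finset.Icc 1 ⌊γ * (n : ℝ)⌋₊,
          n.choose (t - 1) * (m.choose t * (((t - 1).choose k) ^ t * (n.choose k) ^ (m - t))) := by
    calc _ ≤ _ := Finset.card_le_card hsub
      _ ≤ ∑ t ∈ Finset.Icc 1 ⌊γ * (n : ℝ)⌋₊,
            (((Finset.univ : Finset (Fin n)).powersetCard (t - 1)).biUnion
            (fun S => ((Finset.univ : Finset (Fin m)).powersetCard t).biUnion (fun T =>
              Finset.univ.filter (fun ω : Fin m → {s : Finset (Fin n) // s.card = k} =>
                ∀ i ∈ T, (ω i : Finset (Fin n)) ⊆ S)))).card := Finset.card_biUnion_le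
      _ ≤ ∑ t ∈ Finset.Icc 1 ⌊γ * (n : ℝ)⌋₊,
            ∑ S ∈ (Finset.univ : Finset (Fin n)).powersetCard (t - 1),
              (((Finset.univ : Finset (Fin m)).powersetCard t).biUnion (fun T =>
                Finset.univ.filter (fun ω : Fin m → {s : Finset (Fin n) // s.card = k} =>
                  ∀ i ∈ T, (ω i : Finset (Fin n)) ⊆ S))).card :=
        Finset.sum_le_sum fun t _ => Finset.card_biUnion_le
      _ ≤ ∑ t ∈ Finset.Icc 1 ⌊γ * (n : ℝ)⌋₊,
            ∑ S ∈ (Finset.univ : Finset (Fin n)).powersetCard (t - 1),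
              ∑ T ∈ (Finset.univ : Finset (Fin m)).powersetCard t,
                (Finset.univ.filter (fun ω : Fin m → {s : Finset (Fin n) // s.card = k} =>
                  ∀ i ∈ T, (ω i : Finset (Fin n)) ⊆ S)).card :=
        Finset.sum_le_sum fun t _ => Finset.sum_le_sum fun S _ => Finset.card_biUnion_le
      _ = _ := by
        refine Finset.sum_congr rfl fun t _ => ?_
        have hinner : ∀ S ∈ (Finset.univ : Finset (Fin n)).powersetCard (t - 1),
            ∑ T ∈ (Finset.univ : Finset (Fin m)).powersetCard t,
                (Finset.univ.filter (fun ω : Fin m → {s : Finset (Fin n) // s.card = k} =>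
                  ∀ i ∈ T, (ω i : Finset (Fin n)) ⊆ S)).card
              = m.choose t * (((t - 1).choose k) ^ t * (n.choose k) ^ (m - t)) := by
          intro S hS
          have hScard : S.card = t - 1 := (Finset.mem_powersetCard.mp hS).2
          have hterm : ∀ T ∈ (Finset.univ : Finset (Fin m)).powersetCard t,
              (Finset.univ.filter (fun ω : Fin m → {s : Finset (Fin n) // s.card = k} =>
                ∀ i ∈ T, (ω i : Finset (Fin n)) ⊆ S)).card
                = ((t - 1).choose k) ^ t * (n.choose k) ^ (m - t) := by
            intro T hT
            have hTcard : T.card = t := (Finset.mem_powersetCard.mp hT).2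
            have hc' : (Finset.univ.filter (fun e : {s : Finset (Fin n) // s.card = k} =>
                (e : Finset (Fin n)) ⊆ S)).card = (t - 1).choose k := by
              rw [card_filter_subset_edges, hScard]
            have h := card_filter_forall T
              (fun e : {s : Finset (Fin n) // s.card = k} => (e : Finset (Fin n)) ⊆ S)
            rw [hTcard, hN] at h
            refine h.trans ?_
            rw [hc']
          rw [Finset.sum_congr rfl hterm, Finset.sum_const, Finset.card_powersetCard,
            Finset.card_univ, Fintype.card_fin, smul_eq_mul]
        rw [Finset.sum_congr rfl hinner, Finset.sum_const, Finset.card_powersetCard,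
          Finset.card_univ, Fintype.card_fin, smul_eq_mul]
  -- Step 2: pass to reals and bound each term
  have hΩ : (Fintype.card (Fin m → {s : Finset (Fin n) // s.card = k}) : ℝ)
      = ((n.choose k : ℝ)) ^ m := by
    rw [Fintype.card_fun, hN, Fintype.card_fin, Nat.cast_pow]
  rw [hΩ]
  have hNmpos : (0 : ℝ) < ((n.choose k : ℝ)) ^ m := by positivity
  calc _ ≤ ((∑ t ∈ Finset.Icc 1 ⌊γ * (n : ℝ)⌋₊,
          n.choose (t - 1) * (m.choose t * (((t - 1).choose k) ^ t * (n.choose k) ^ (m - t)))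
          : ℕ) : ℝ) / ((n.choose k : ℝ)) ^ m := by
        gcongr <;> exact_mod_cast step1
    _ = ∑ t ∈ Finset.Icc 1 ⌊γ * (n : ℝ)⌋₊,
          ((n.choose (t - 1) * (m.choose t * (((t - 1).choose k) ^ t * (n.choose k) ^ (m - t)))
            : ℕ) : ℝ) / ((n.choose k : ℝ)) ^ m := by
        rw [Nat.cast_sum, Finset.sum_div]
    _ ≤ _ := by
        refine Finset.sum_le_sum fun t ht => ?_
        have ht1 : 1 ≤ t := (Finset.mem_Icc.mp ht).1
        push_cast
        by_cases hmt : t ≤ m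
        · by_cases hnt : t - 1 ≤ n
          · have hkey : (((t - 1).choose k : ℝ)) / ((n.choose k : ℝ))
                ≤ (((t - 1 : ℕ) : ℝ) / n) ^ k := by
              rw [div_pow, div_le_div_iff₀ (by exact_mod_cast hNpos) (by positivity)]
              have hc := choose_mul_pow_le_aux k hnt
              calc ((t - 1).choose k : ℝ) * (n : ℝ) ^ k
                  ≤ ((n.choose k : ℝ)) * ((t - 1 : ℕ) : ℝ) ^ k := by exact_mod_cast hc
                _ = ((t - 1 : ℕ) : ℝ) ^ k * ((n.choose k : ℝ)) := by ring
            have h2 : (((t - 1).choose k : ℝ) ^ t * ((n.choose k : ℝ)) ^ (m - t))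
                  / ((n.choose k : ℝ)) ^ m
                ≤ (((t - 1 : ℕ) : ℝ) / n) ^ (k * t) := by
              have hsplit : ((n.choose k : ℝ)) ^ m
                  = ((n.choose k : ℝ)) ^ t * ((n.choose k : ℝ)) ^ (m - t) := by
                rw [← pow_add, Nat.add_sub_cancel' hmt]
              have hne : ((n.choose k : ℝ)) ^ (m - t) ≠ 0 := by positivity
              rw [hsplit, mul_div_mul_right _ _ hne, ← div_pow, pow_mul]
              exact pow_le_pow_left₀ (by positivity) hkey t
            calc (n.choose (t - 1) : ℝ) * ((m.choose t : ℝ) *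
                  (((t - 1).choose k : ℝ) ^ t * ((n.choose k : ℝ)) ^ (m - t)))
                  / ((n.choose k : ℝ)) ^ m
                = (n.choose (t - 1) : ℝ) * (m.choose t : ℝ) *
                  ((((t - 1).choose k : ℝ) ^ t * ((n.choose k : ℝ)) ^ (m - t))
                    / ((n.choose k : ℝ)) ^ m) := by
                  ring
              _ ≤ (n.choose (t - 1) : ℝ) * (m.choose t : ℝ) *
                  (((t - 1 : ℕ) : ℝ) / n) ^ (k * t) :=
                  mul_le_mul_of_nonneg_left h2 (by positivity)
          · rw [Nat.choose_eq_zero_of_lt (not_le.mp hnt)]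
            simp only [Nat.cast_zero, mul_zero, zero_mul, zero_div]
            positivity
        · rw [Nat.choose_eq_zero_of_lt (not_le.mp hmt)]
          simp only [Nat.cast_zero, mul_zero, zero_mul, zero_div]
          positivity
end

section
/- (Symmetric Lovász Local Lemma.) Let B_1, B_2, …, B_n be events in a probability space with P(B_i) ≤ p for every i, and such that each B_i is mutually independent of all but at most d of the other events. If p · e · (d+1) ≤ 1, then P(⋂_{i=1}^n B_i^c) > 0, where B_i^c denotes the complement of B_i. -/
open MeasureTheory

/-- Independence extends to complements: if `B i` is independent of all intersections
of the `B j` (j satisfying a condition), then it is independent of mixed intersections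
of `B j`'s and complements. -/
lemma LLL_indep_compl {Ω : Type*} [MeasurableSpace Ω] (μ : Measure Ω)
    [IsProbabilityMeasure μ] {n : ℕ} (B : Fin n → Set Ω) (hmB : ∀ i, MeasurableSet (B i))
    (i : Fin n) (J : Finset (Fin n))
    (hJind : ∀ S : Finset (Fin n), (∀ j ∈ S, j ∉ J ∧ j ≠ i) →
      μ (B i ∩ ⋂ j ∈ S, B j) = μ (B i) * μ (⋂ j ∈ S, B j)) :
    ∀ S : Finset (Fin n), (∀ j ∈ S, j ∉ J ∧ j ≠ i) →
    ∀ T : Finset (Fin n), (∀ j ∈ T, j ∉ J ∧ j ≠ i) →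
      μ (B i ∩ ((⋂ j ∈ T, B j) ∩ ⋂ j ∈ S, (B j)ᶜ)) =
        μ (B i) * μ ((⋂ j ∈ T, B j) ∩ ⋂ j ∈ S, (B j)ᶜ) := by
  intro S
  induction S using Finset.induction_on with
  | empty =>
      intro _ T hT
      simpa [Set.inter_comm] using hJind T hT
  | @insert k S' hk ih =>
      intro hS T hT
      have hS' : ∀ j ∈ S', j ∉ J ∧ j ≠ i := fun j hj => hS j (Finset.mem_insert_of_mem hj)
      have hkJ : k ∉ J ∧ k ≠ i := hS k (Finset.mem_insert_self k S')
      have hT' : ∀ j ∈ insert k T, j ∉ J ∧ j ≠ i := by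
        intro j hj
        rcases Finset.mem_insert.mp hj with rfl | hj
        · exact hkJ
        · exact hT j hj
      have hE := ih hS' T hT
      have hEk := ih hS' (insert k T) hT'
      rw [Finset.set_biInter_insert] at hEk
      simp only [Finset.set_biInter_insert]
      set A := ⋂ j ∈ T, B j with hA
      set D := ⋂ j ∈ S', (B j)ᶜ with hD
      have hset1 : B i ∩ (A ∩ ((B k)ᶜ ∩ D)) = (B i ∩ (A ∩ D)) \ B k := by
        ext ω; simp only [Set.mem_inter_iff, Set.mem_diff, Set.mem_compl_iff]; tauto
      have hset2 : A ∩ ((B k)ᶜ ∩ D) = (A ∩ D) \ B k := by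
        ext ω; simp only [Set.mem_inter_iff, Set.mem_diff, Set.mem_compl_iff]; tauto
      have hset3 : (B i ∩ (A ∩ D)) ∩ B k = B i ∩ (B k ∩ A ∩ D) := by
        ext ω; simp only [Set.mem_inter_iff]; tauto
      have hset4 : (A ∩ D) ∩ B k = B k ∩ A ∩ D := by
        ext ω; simp only [Set.mem_inter_iff]; tauto
      have hEk' : μ ((B i ∩ (A ∩ D)) ∩ B k) = μ (B i) * μ ((A ∩ D) ∩ B k) := by
        rw [hset3, hset4]
        simpa [Set.inter_assoc] using hEk
      have haddE : μ ((B i ∩ (A ∩ D)) ∩ B k) + μ ((B i ∩ (A ∩ D)) \ B k) = μ (B i ∩ (A ∩ D)) :=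
        measure_inter_add_diff _ (hmB k)
      have haddF : μ ((A ∩ D) ∩ B k) + μ ((A ∩ D) \ B k) = μ (A ∩ D) :=
        measure_inter_add_diff _ (hmB k)
      rw [hset1, hset2]
      have key : μ (B i) * μ ((A ∩ D) ∩ B k) + μ ((B i ∩ (A ∩ D)) \ B k)
          = μ (B i) * μ ((A ∩ D) ∩ B k) + μ (B i) * μ ((A ∩ D) \ B k) := by
        calc μ (B i) * μ ((A ∩ D) ∩ B k) + μ ((B i ∩ (A ∩ D)) \ B k)
            = μ ((B i ∩ (A ∩ D)) ∩ B k) + μ ((B i ∩ (A ∩ D)) \ B k) := by rw [hEk']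
          _ = μ (B i ∩ (A ∩ D)) := haddE
          _ = μ (B i) * μ (A ∩ D) := hE
          _ = μ (B i) * (μ ((A ∩ D) ∩ B k) + μ ((A ∩ D) \ B k)) := by rw [haddF]
          _ = μ (B i) * μ ((A ∩ D) ∩ B k) + μ (B i) * μ ((A ∩ D) \ B k) := mul_add _ _ _
      exact (ENNReal.add_right_inj (ENNReal.mul_ne_top (measure_ne_top μ _)
        (measure_ne_top μ _))).mp key

/-- The key elementary inequality `(d+2)^(d+1) ≤ e * (d+1)^(d+1)`. -/
lemma LLL_key_ineq (d : ℕ) : (d + 2 : ℝ) ^ (d + 1) ≤ Real.exp 1 * (d + 1) ^ (d + 1) := by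
  have hd1 : (0 : ℝ) < d + 1 := by positivity
  have h1 : (1 : ℝ) + 1 / (d + 1) ≤ Real.exp (1 / (d + 1)) := by
    have := Real.add_one_le_exp (1 / (d + 1 : ℝ))
    linarith
  have h2 : ((1 : ℝ) + 1 / (d + 1)) ^ (d + 1) ≤ Real.exp (1 / (d + 1)) ^ (d + 1) := by
    apply pow_le_pow_left₀ (by positivity) h1
  have h3 : Real.exp (1 / (d + 1 : ℝ)) ^ (d + 1) = Real.exp 1 := by
    rw [← Real.exp_nat_mul]
    congr 1
    field_simp
    norm_num
  have h4 : ((1 : ℝ) + 1 / (d + 1)) = (d + 2) / (d + 1) := by field_simp; ring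
  rw [h4, h3, div_pow] at h2
  have h5 : (0 : ℝ) < (d + 1 : ℝ) ^ (d + 1) := by positivity
  calc (d + 2 : ℝ) ^ (d + 1) = ((d + 2 : ℝ) ^ (d + 1) / (d + 1) ^ (d + 1)) * (d + 1) ^ (d + 1) := by
        field_simp
    _ ≤ Real.exp 1 * (d + 1) ^ (d + 1) := by
        apply mul_le_mul_of_nonneg_right h2 (le_of_lt h5)

/-- Symmetric Lovász Local Lemma: if `P(B i) ≤ p` for all `i`, each `B i` is mutually
independent of all but at most `d` of the other events, and `p · e · (d+1) ≤ 1`, then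
`P(⋂ i, (B i)ᶜ) > 0`. -/
theorem symmetric_LLL {Ω : Type*} [MeasurableSpace Ω] (μ : Measure Ω)
    [IsProbabilityMeasure μ]
    (n : ℕ) (B : Fin n → Set Ω) (hmB : ∀ i, MeasurableSet (B i))
    (p : ℝ) (d : ℕ)
    (hp : ∀ i, μ (B i) ≤ ENNReal.ofReal p)
    (hdep : ∀ i : Fin n, ∃ J : Finset (Fin n), i ∉ J ∧ J.card ≤ d ∧
        ∀ S : Finset (Fin n), (∀ j ∈ S, j ∉ J ∧ j ≠ i) →
          μ (B i ∩ ⋂ j ∈ S, B j) = μ (B i) * μ (⋂ j ∈ S, B j))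
    (hpd : p * Real.exp 1 * (d + 1) ≤ 1) :
    0 < μ (⋂ i, (B i)ᶜ) := by
  classical
  -- Real-valued probability
  set Pr : Set Ω → ℝ := fun s => (μ s).toReal with hPrdef
  have Pr_nonneg : ∀ s, 0 ≤ Pr s := fun s => ENNReal.toReal_nonneg
  have Pr_mono : ∀ {s t : Set Ω}, s ⊆ t → Pr s ≤ Pr t := fun {s t} h =>
    ENNReal.toReal_mono (measure_ne_top μ t) (measure_mono h)
  have Pr_univ : Pr Set.univ = 1 := by simp [hPrdef]
  have Pr_diff : ∀ (s t : Set Ω), MeasurableSet t → Pr (s \ t) = Pr s - Pr (s ∩ t) := by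
    intro s t ht
    have h := measure_inter_add_diff (μ := μ) s ht
    have h1 : (μ (s ∩ t)).toReal + (μ (s \ t)).toReal = (μ s).toReal := by
      rw [← ENNReal.toReal_add (measure_ne_top μ _) (measure_ne_top μ _), h]
    simp only [hPrdef]
    linarith
  -- the parameter x
  set x : ℝ := 1 / (d + 2) with hxdef
  have hd2 : (0 : ℝ) < d + 2 := by positivity
  have hx_pos : 0 < x := by positivity
  have hx_lt_one : x < 1 := by
    rw [hxdef, div_lt_one hd2]; linarith
  have h1x_pos : 0 < 1 - x := by linarith
  have h1x_le_one : 1 - x ≤ 1 := by linarith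
  -- p' := max p 0 satisfies Pr (B i) ≤ p' and p' ≤ x * (1-x)^d
  set p' : ℝ := max p 0 with hp'def
  have hPrB : ∀ i, Pr (B i) ≤ p' := by
    intro i
    by_cases hp0 : 0 ≤ p
    · calc Pr (B i) ≤ (ENNReal.ofReal p).toReal :=
            ENNReal.toReal_mono (by simp [ENNReal.ofReal_ne_top]) (hp i)
        _ = p := ENNReal.toReal_ofReal hp0
        _ ≤ p' := le_max_left _ _
    · have : μ (B i) = 0 := by
        have := hp i
        rwa [ENNReal.ofReal_of_nonpos (le_of_not_ge hp0), nonpos_iff_eq_zero] at this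
      simp [hPrdef, this, hp'def, le_max_right]
  have hkey : p' ≤ x * (1 - x) ^ d := by
    have hxd : (1 : ℝ) - x = (d + 1) / (d + 2) := by
      rw [hxdef]; field_simp; ring
    have hrhs : x * (1 - x) ^ d = (d + 1 : ℝ) ^ d / (d + 2) ^ (d + 1) := by
      rw [hxd, hxdef, div_pow, pow_succ]
      field_simp
    have hpos : (0 : ℝ) < (d + 1 : ℝ) ^ d / (d + 2) ^ (d + 1) := by positivity
    rcases le_or_gt p 0 with hple | hpgt
    · have : p' = 0 := by rw [hp'def]; exact max_eq_right hple
      rw [this, hrhs]; exact le_of_lt hpos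
    · have hp'p : p' = p := max_eq_left (le_of_lt hpgt)
      have he : (0 : ℝ) < Real.exp 1 := Real.exp_pos 1
      have hd1 : (0 : ℝ) < d + 1 := by positivity
      have hple' : p ≤ 1 / (Real.exp 1 * (d + 1)) := by
        rw [le_div_iff₀ (by positivity)]
        nlinarith [hpd]
      have hstep : 1 / (Real.exp 1 * (d + 1)) ≤ (d + 1 : ℝ) ^ d / (d + 2) ^ (d + 1) := by
        rw [div_le_div_iff₀ (by positivity) (by positivity)]
        have := LLL_key_ineq d
        have h1 : (d + 1 : ℝ) ^ (d + 1) = (d + 1 : ℝ) ^ d * (d + 1) := by rw [pow_succ]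
        nlinarith [this]
      rw [hp'p, hrhs]
      exact hple'.trans hstep
  -- the family of intersections of complements
  set C : Finset (Fin n) → Set Ω := fun S => ⋂ j ∈ S, (B j)ᶜ with hCdef
  have hC_anti : ∀ {S T : Finset (Fin n)}, S ⊆ T → C T ⊆ C S := by
    intro S T hST ω hω
    simp only [hCdef, Set.mem_iInter] at *
    exact fun j hj => hω j (hST hj)
  have hC_empty : C ∅ = Set.univ := by simp [hCdef]
  have hC_erase : ∀ (S : Finset (Fin n)) (k : Fin n), k ∈ S → C S = C (S.erase k) \ B k := by
    intro S k hk
    ext ω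
    simp only [hCdef, Set.mem_iInter, Set.mem_diff, Set.mem_compl_iff, Finset.mem_erase]
    constructor
    · intro h
      exact ⟨fun j hj => h j hj.2, h k hk⟩
    · rintro ⟨h1, h2⟩ j hj
      by_cases hjk : j = k
      · subst hjk; exact h2
      · exact h1 j ⟨hjk, hj⟩
  -- Main induction
  have main : ∀ m : ℕ, ∀ S : Finset (Fin n), S.card ≤ m →
      (∀ T ⊆ S, (1 - x) ^ (S.card - T.card) * Pr (C T) ≤ Pr (C S)) ∧
      (∀ i, i ∉ S → Pr (B i ∩ C S) ≤ x * Pr (C S)) := by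
    intro m
    induction m with
    | zero =>
        intro S hS
        have hSempty : S = ∅ := Finset.card_eq_zero.mp (Nat.le_zero.mp hS)
        subst hSempty
        constructor
        · intro T hT
          have : T = ∅ := Finset.subset_empty.mp hT
          subst this
          simp
        · intro i _
          have h1 : Pr (B i ∩ C ∅) = Pr (B i) := by rw [hC_empty, Set.inter_univ]
          have h2 : Pr (C ∅) = 1 := by rw [hC_empty]; exact Pr_univ
          rw [h1, h2, mul_one]
          calc Pr (B i) ≤ p' := hPrB i
            _ ≤ x * (1 - x) ^ d := hkey
            _ ≤ x * 1 := by
                apply mul_le_mul_of_nonneg_left _ (le_of_lt hx_pos)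
                exact pow_le_one₀ (le_of_lt h1x_pos) h1x_le_one
            _ = x := mul_one x
    | succ m ih =>
        intro S hS
        by_cases hle : S.card ≤ m
        · exact ih S hle
        · have hcard : S.card = m + 1 := le_antisymm hS (not_le.mp hle)
          have part1 : ∀ T ⊆ S, (1 - x) ^ (S.card - T.card) * Pr (C T) ≤ Pr (C S) := by
            intro T hTS
            by_cases hTSeq : T = S
            · subst hTSeq; simp
            · obtain ⟨k, hkS, hkT⟩ := Finset.exists_of_ssubset (hTS.ssubset_of_ne hTSeq)
              set S' := S.erase k with hS'def
              have hS'card : S'.card = m := by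
                rw [hS'def, Finset.card_erase_of_mem hkS, hcard]; omega
              have hTS' : T ⊆ S' := Finset.subset_erase.mpr ⟨hTS, hkT⟩
              have hCSdiff : Pr (C S) = Pr (C S') - Pr (C S' ∩ B k) := by
                rw [hC_erase S k hkS]; exact Pr_diff _ _ (hmB k)
              have hcond : Pr (B k ∩ C S') ≤ x * Pr (C S') :=
                (ih S' (le_of_eq hS'card)).2 k (Finset.notMem_erase k S)
              have h5 : (1 - x) * Pr (C S') ≤ Pr (C S) := by
                rw [hCSdiff, Set.inter_comm (C S') (B k)]
                nlinarith [hcond]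
              have h6 := (ih S' (le_of_eq hS'card)).1 T hTS'
              have hTcard : T.card ≤ m := by
                rw [← hS'card]; exact Finset.card_le_card hTS'
              have hexp : S.card - T.card = (S'.card - T.card) + 1 := by omega
              rw [hexp, pow_succ]
              calc (1 - x) ^ (S'.card - T.card) * (1 - x) * Pr (C T)
                  = (1 - x) * ((1 - x) ^ (S'.card - T.card) * Pr (C T)) := by ring
                _ ≤ (1 - x) * Pr (C S') := mul_le_mul_of_nonneg_left h6 (le_of_lt h1x_pos)
                _ ≤ Pr (C S) := h5
          refine ⟨part1, ?_⟩
          intro i hiS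
          obtain ⟨J, hiJ, hJd, hJind⟩ := hdep i
          set S₂ := S \ J with hS₂def
          have hS₂sub : S₂ ⊆ S := Finset.sdiff_subset
          have hS₂cond : ∀ j ∈ S₂, j ∉ J ∧ j ≠ i := by
            intro j hj
            rw [hS₂def, Finset.mem_sdiff] at hj
            exact ⟨hj.2, fun h => hiS (h ▸ hj.1)⟩
          have hindep := LLL_indep_compl μ B hmB i J hJind S₂ hS₂cond ∅ (by simp)
          simp only [Finset.notMem_empty, Set.iInter_of_empty, Set.iInter_univ,
            Set.univ_inter] at hindep
          have hindepPr : Pr (B i ∩ C S₂) = Pr (B i) * Pr (C S₂) := by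
            simp only [hPrdef, hCdef]
            rw [hindep, ENNReal.toReal_mul]
          have hc1 : (S ∩ J).card + S₂.card = S.card := Finset.card_inter_add_card_sdiff S J
          have hc2 : (S ∩ J).card ≤ d :=
            le_trans (Finset.card_le_card Finset.inter_subset_right) hJd
          have hcd : S.card - S₂.card ≤ d := by omega
          calc Pr (B i ∩ C S)
              ≤ Pr (B i ∩ C S₂) :=
                Pr_mono (Set.inter_subset_inter_right _ (hC_anti hS₂sub))
            _ = Pr (B i) * Pr (C S₂) := hindepPr
            _ ≤ p' * Pr (C S₂) := mul_le_mul_of_nonneg_right (hPrB i) (Pr_nonneg _)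
            _ ≤ (x * (1 - x) ^ d) * Pr (C S₂) :=
                mul_le_mul_of_nonneg_right hkey (Pr_nonneg _)
            _ ≤ (x * (1 - x) ^ (S.card - S₂.card)) * Pr (C S₂) := by
                apply mul_le_mul_of_nonneg_right _ (Pr_nonneg _)
                apply mul_le_mul_of_nonneg_left _ (le_of_lt hx_pos)
                exact pow_le_pow_of_le_one (le_of_lt h1x_pos) h1x_le_one hcd
            _ = x * ((1 - x) ^ (S.card - S₂.card) * Pr (C S₂)) := by ring
            _ ≤ x * Pr (C S) :=
                mul_le_mul_of_nonneg_left (part1 S₂ hS₂sub) (le_of_lt hx_pos)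
  -- conclusion
  obtain ⟨h1, -⟩ := main n Finset.univ (by simp)
  have h2 := h1 ∅ (Finset.empty_subset _)
  have hCe : Pr (C ∅) = 1 := by rw [hC_empty]; exact Pr_univ
  rw [hCe, mul_one] at h2
  have h3 : (0 : ℝ) < Pr (C Finset.univ) :=
    lt_of_lt_of_le (pow_pos h1x_pos _) h2
  have hset : (⋂ i, (B i)ᶜ) = C Finset.univ := by
    simp [hCdef]
  rw [hset]
  rcases (zero_le : (0 : ENNReal) ≤ μ (C Finset.univ)).eq_or_lt with heq | hlt
  · exfalso
    rw [hPrdef] at h3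
    simp only [← heq, ENNReal.toReal_zero] at h3
    exact lt_irrefl 0 h3
  · exact hlt
end

section
/- (Asymmetric Lovász Local Lemma.) Let A_1, A_2, …, A_n be events in a probability space with dependency graph G = ([n], E). If there exist real numbers 0 ≤ y_1, …, y_n < 1 such that P(A_i) ≤ y_i · ∏_{j : (i,j) ∈ E} (1 − y_j) for every i ∈ [n], then P(⋂_{i=1}^n A_i^c) ≥ ∏_{i=1}^n (1 − y_i), where A_i^c denotes the complement of A_i. -/
open MeasureTheory

private def LLLC {Ω : Type*} {n : ℕ} (A : Fin n → Set Ω) (S : Finset (Fin n)) : Set Ω :=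
  ⋂ j ∈ S, (A j)ᶜ

/-- Asymmetric Lovász Local Lemma: `E` is (the edge set of) a dependency graph for the
events `A i`, i.e. each `A i` is mutually independent of `{A j : (i,j) ∉ E}`. If there
are `0 ≤ y i < 1` with `P(A i) ≤ y i · ∏_{j : (i,j) ∈ E} (1 - y j)` for all `i`, then
`P(⋂ i, (A i)ᶜ) ≥ ∏ i, (1 - y i)`. -/
theorem asymmetric_LLL {Ω : Type*} [MeasurableSpace Ω] (μ : Measure Ω)
    [IsProbabilityMeasure μ]
    (n : ℕ) (A : Fin n → Set Ω) (hmA : ∀ i, MeasurableSet (A i))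
    (E : Finset (Fin n × Fin n))
    (hdep : ∀ i : Fin n, ∀ S : Finset (Fin n), (∀ j ∈ S, (i, j) ∉ E) →
        μ (A i ∩ ⋂ j ∈ S, A j) = μ (A i) * μ (⋂ j ∈ S, A j))
    (y : Fin n → ℝ) (hy0 : ∀ i, 0 ≤ y i) (hy1 : ∀ i, y i < 1)
    (hPA : ∀ i, μ (A i) ≤ ENNReal.ofReal
        (y i * ∏ j ∈ Finset.univ.filter (fun j => (i, j) ∈ E), (1 - y j))) :
    ENNReal.ofReal (∏ i, (1 - y i)) ≤ μ (⋂ i, (A i)ᶜ) := by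
  classical
  set q : Fin n → ENNReal := fun j => ENNReal.ofReal (1 - y j) with hqdef
  have hq1 : ∀ j, q j ≤ 1 := fun j => by
    simp only [hqdef]
    rw [← ENNReal.ofReal_one]
    exact ENNReal.ofReal_le_ofReal (by linarith [hy0 j])
  -- independence extended to complements
  have indep : ∀ i : Fin n, ∀ T U : Finset (Fin n),
      (∀ j ∈ T, (i, j) ∉ E) → (∀ j ∈ U, (i, j) ∉ E) →
      μ (A i ∩ ((⋂ j ∈ T, (A j)ᶜ) ∩ ⋂ j ∈ U, A j)) =
        μ (A i) * μ ((⋂ j ∈ T, (A j)ᶜ) ∩ ⋂ j ∈ U, A j) := by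
    intro i T
    induction T using Finset.induction_on with
    | empty => intro U _ hU; simpa using hdep i U hU
    | @insert k T' hk ih =>
      intro U hT hU
      have hik : (i, k) ∉ E := hT k (Finset.mem_insert_self k T')
      have hT' : ∀ j ∈ T', (i, j) ∉ E := fun j hj => hT j (Finset.mem_insert_of_mem hj)
      have hU' : ∀ j ∈ insert k U, (i, j) ∉ E := by
        intro j hj
        rcases Finset.mem_insert.mp hj with h | h
        · subst h; exact hik
        · exact hU j h
      set B := (⋂ j ∈ T', (A j)ᶜ) ∩ ⋂ j ∈ U, A j with hB
      have e1 : (⋂ j ∈ insert k T', (A j)ᶜ) ∩ ⋂ j ∈ U, A j = B \ A k := by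
        simp only [Finset.set_biInter_insert, hB]
        ext x; simp only [Set.mem_inter_iff, Set.mem_diff, Set.mem_compl_iff]; tauto
      have e2 : (⋂ j ∈ T', (A j)ᶜ) ∩ ⋂ j ∈ insert k U, A j = B ∩ A k := by
        simp only [Finset.set_biInter_insert, hB]
        ext x; simp only [Set.mem_inter_iff]; tauto
      have e3 : A i ∩ (B \ A k) = (A i ∩ B) \ A k := by
        ext x; simp only [Set.mem_inter_iff, Set.mem_diff]; tauto
      have h1 : μ ((A i ∩ B) ∩ A k) + μ ((A i ∩ B) \ A k) = μ (A i ∩ B) :=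
        measure_inter_add_diff _ (hmA k)
      have h2 : μ (B ∩ A k) + μ (B \ A k) = μ B := measure_inter_add_diff _ (hmA k)
      have hXk : μ ((A i ∩ B) ∩ A k) = μ (A i) * μ (B ∩ A k) := by
        have e4 : (A i ∩ B) ∩ A k
            = A i ∩ ((⋂ j ∈ T', (A j)ᶜ) ∩ ⋂ j ∈ insert k U, A j) := by
          rw [e2, Set.inter_assoc]
        rw [e4, ih (insert k U) hT' hU', e2]
      have hX : μ (A i ∩ B) = μ (A i) * μ B := ih U hT' hU
      rw [e1, e3]
      have hcancel : μ ((A i ∩ B) ∩ A k) + μ ((A i ∩ B) \ A k)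
          = μ ((A i ∩ B) ∩ A k) + μ (A i) * μ (B \ A k) := by
        rw [h1, hX, ← h2, mul_add, hXk]
      exact (ENNReal.add_right_inj (measure_ne_top μ _)).mp hcancel
  -- complement step
  have step : ∀ (i : Fin n) (D : Set Ω), μ (A i ∩ D) ≤ ENNReal.ofReal (y i) * μ D →
      q i * μ D ≤ μ (D \ A i) := by
    intro i D h
    have hadd : μ (D ∩ A i) + μ (D \ A i) = μ D := measure_inter_add_diff _ (hmA i)
    have hq : q i = 1 - ENNReal.ofReal (y i) := by
      simp only [hqdef]
      rw [ENNReal.ofReal_sub _ (hy0 i), ENNReal.ofReal_one]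
    rw [hq, ENNReal.sub_mul (fun _ _ => measure_ne_top μ D), one_mul]
    calc μ D - ENNReal.ofReal (y i) * μ D
        ≤ μ D - μ (D ∩ A i) :=
          tsub_le_tsub_left (by rw [Set.inter_comm]; exact h) _
      _ ≤ μ (D \ A i) := by
          rw [← hadd]; exact tsub_le_iff_left.mpr le_rfl
  have hCins : ∀ (k : Fin n) (W : Finset (Fin n)),
      LLLC A (insert k W) = LLLC A W \ A k := by
    intro k W
    simp only [LLLC, Finset.set_biInter_insert]
    ext x; simp only [Set.mem_inter_iff, Set.mem_diff, Set.mem_compl_iff]; tauto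
  -- key inequality by strong induction on the size of S
  have key : ∀ m : ℕ, ∀ S : Finset (Fin n), S.card ≤ m → ∀ i : Fin n, i ∉ S →
      μ (A i ∩ LLLC A S) ≤ ENNReal.ofReal (y i) * μ (LLLC A S) := by
    intro m
    induction m with
    | zero =>
      intro S hS i _
      have hS0 : S = ∅ := Finset.card_eq_zero.mp (Nat.le_zero.mp hS)
      subst hS0
      have hCe : LLLC A (∅ : Finset (Fin n)) = Set.univ := by simp [LLLC]
      rw [hCe, Set.inter_univ, measure_univ, mul_one]
      refine (hPA i).trans (ENNReal.ofReal_le_ofReal ?_)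
      have hple : ∏ j ∈ Finset.univ.filter (fun j => (i, j) ∈ E), (1 - y j) ≤ 1 :=
        Finset.prod_le_one (fun j _ => by linarith [hy1 j]) (fun j _ => by linarith [hy0 j])
      exact mul_le_of_le_one_right (hy0 i) hple
    | succ m ih =>
      intro S hS i hiS
      set S₁ := S.filter (fun j => (i, j) ∈ E) with hS₁
      set S₂ := S.filter (fun j => ¬ (i, j) ∈ E) with hS₂
      have hunion : S₁ ∪ S₂ = S := Finset.filter_union_filter_not_eq _ S
      have hS₂E : ∀ j ∈ S₂, (i, j) ∉ E := fun j hj => (Finset.mem_filter.mp hj).2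
      -- Bound: adding elements of S₁ one by one
      have bound : ∀ T : Finset (Fin n), T ⊆ S₁ →
          (∏ j ∈ T, q j) * μ (LLLC A S₂) ≤ μ (LLLC A (S₂ ∪ T)) := by
        intro T
        induction T using Finset.induction_on with
        | empty => intro _; simp
        | @insert k T' hk ihT =>
          intro hsub
          have hkS₁ : k ∈ S₁ := hsub (Finset.mem_insert_self _ _)
          have hT'sub : T' ⊆ S₁ := fun j hj => hsub (Finset.mem_insert_of_mem hj)
          have hkW : k ∉ S₂ ∪ T' := by
            intro h
            rcases Finset.mem_union.mp h with h | h
            · exact (Finset.mem_filter.mp h).2 (Finset.mem_filter.mp hkS₁).2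
            · exact hk h
          have hWsub : insert k (S₂ ∪ T') ⊆ S := by
            intro j hj
            rcases Finset.mem_insert.mp hj with h | h
            · subst h; exact (Finset.mem_filter.mp hkS₁).1
            · rcases Finset.mem_union.mp h with h | h
              · exact (Finset.mem_filter.mp h).1
              · exact (Finset.mem_filter.mp (hT'sub h)).1
          have hcard : (S₂ ∪ T').card ≤ m := by
            have h1 : (insert k (S₂ ∪ T')).card ≤ S.card := Finset.card_le_card hWsub
            rw [Finset.card_insert_of_notMem hkW] at h1
            omega
          have hstep := step k (LLLC A (S₂ ∪ T')) (ih (S₂ ∪ T') hcard k hkW)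
          rw [Finset.union_insert, hCins k (S₂ ∪ T'), Finset.prod_insert hk, mul_assoc]
          calc q k * ((∏ j ∈ T', q j) * μ (LLLC A S₂))
              ≤ q k * μ (LLLC A (S₂ ∪ T')) := mul_le_mul_right (ihT hT'sub) _
            _ ≤ μ (LLLC A (S₂ ∪ T') \ A k) := hstep
      -- the main chain
      have hmono : μ (A i ∩ LLLC A S) ≤ μ (A i ∩ LLLC A S₂) := by
        refine measure_mono (Set.inter_subset_inter_right _ ?_)
        intro x hx
        simp only [LLLC, Set.mem_iInter] at hx ⊢
        exact fun j hj => hx j (Finset.filter_subset _ S hj)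
      have hindep : μ (A i ∩ LLLC A S₂) = μ (A i) * μ (LLLC A S₂) := by
        have h := indep i S₂ ∅ hS₂E (by simp)
        simpa [LLLC] using h
      have hPA' : μ (A i) ≤ ENNReal.ofReal (y i)
          * ∏ j ∈ Finset.univ.filter (fun j => (i, j) ∈ E), q j := by
        refine (hPA i).trans_eq ?_
        rw [ENNReal.ofReal_mul (hy0 i),
          ENNReal.ofReal_prod_of_nonneg (fun j _ => by linarith [hy1 j])]
      have hprodle : (∏ j ∈ Finset.univ.filter (fun j => (i, j) ∈ E), q j)
          ≤ ∏ j ∈ S₁, q j := by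
        have hsub : S₁ ⊆ Finset.univ.filter (fun j => (i, j) ∈ E) := fun j hj =>
          Finset.mem_filter.mpr ⟨Finset.mem_univ j, (Finset.mem_filter.mp hj).2⟩
        rw [← Finset.prod_sdiff hsub]
        calc (∏ j ∈ Finset.univ.filter (fun j => (i, j) ∈ E) \ S₁, q j) * ∏ j ∈ S₁, q j
            ≤ 1 * ∏ j ∈ S₁, q j := mul_le_mul_left
              (Finset.prod_le_one (fun _ _ => zero_le) (fun j _ => hq1 j)) _
          _ = ∏ j ∈ S₁, q j := one_mul _
      have hS2S : S₂ ∪ S₁ = S := by rw [Finset.union_comm]; exact hunion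
      calc μ (A i ∩ LLLC A S) ≤ μ (A i ∩ LLLC A S₂) := hmono
        _ = μ (A i) * μ (LLLC A S₂) := hindep
        _ ≤ (ENNReal.ofReal (y i)
              * ∏ j ∈ Finset.univ.filter (fun j => (i, j) ∈ E), q j) * μ (LLLC A S₂) :=
            mul_le_mul_left hPA' _
        _ = ENNReal.ofReal (y i)
              * ((∏ j ∈ Finset.univ.filter (fun j => (i, j) ∈ E), q j) * μ (LLLC A S₂)) := by
            rw [mul_assoc]
        _ ≤ ENNReal.ofReal (y i) * ((∏ j ∈ S₁, q j) * μ (LLLC A S₂)) :=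
            mul_le_mul_right (mul_le_mul_left hprodle _) _
        _ ≤ ENNReal.ofReal (y i) * μ (LLLC A (S₂ ∪ S₁)) :=
            mul_le_mul_right (bound S₁ le_rfl) _
        _ = ENNReal.ofReal (y i) * μ (LLLC A S) := by rw [hS2S]
  -- final product bound
  have final : ∀ S : Finset (Fin n), (∏ j ∈ S, q j) ≤ μ (LLLC A S) := by
    intro S
    induction S using Finset.induction_on with
    | empty => simp [LLLC]
    | @insert i S hi ihS =>
      have hstep := step i (LLLC A S) (key S.card S le_rfl i hi)
      rw [hCins i S, Finset.prod_insert hi]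
      calc q i * ∏ j ∈ S, q j ≤ q i * μ (LLLC A S) := mul_le_mul_right ihS _
        _ ≤ μ (LLLC A S \ A i) := hstep
  have hCuniv : LLLC A (Finset.univ : Finset (Fin n)) = ⋂ i, (A i)ᶜ := by
    simp [LLLC]
  calc ENNReal.ofReal (∏ i, (1 - y i)) = ∏ i, q i := by
        rw [ENNReal.ofReal_prod_of_nonneg (fun j _ => by linarith [hy1 j])]
    _ ≤ μ (LLLC A Finset.univ) := final Finset.univ
    _ = μ (⋂ i, (A i)ᶜ) := by rw [hCuniv]
end

section
/- Let Φ be a k-SAT formula in CNF form over n Boolean variables, consisting of clauses c_1, …, c_m where each clause involves exactly k distinct variables. If every variable appears in at most 2^k/(e · k) clauses, then Φ is satisfiable: there exists an assignment a : {1,…,n} → {true, false} satisfying every clause. -/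
open Finset

namespace KsatLLL

abbrev Asg (n : ℕ) := Fin n → Bool

/-- Key counting lemma: if `B` is determined by coordinates outside `T`, then the
assignments matching `τ` on `T` and lying in `B` number at most `B.card / 2^|T|`. -/
lemma count_le {n : ℕ} (T : Finset (Fin n)) (τ : Fin n → Bool) (B : Finset (Asg n))
    (hB : ∀ a b : Asg n, (∀ v, v ∉ T → a v = b v) → a ∈ B → b ∈ B) :
    ((univ.filter fun a => ∀ v ∈ T, a v = τ v) ∩ B).card * 2 ^ T.card ≤ B.card := by
  classical
  have hcard : (((univ.filter fun a => ∀ v ∈ T, a v = τ v) ∩ B) ×ˢ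
      (univ : Finset ({v : Fin n // v ∈ T} → Bool))).card
      = ((univ.filter fun a => ∀ v ∈ T, a v = τ v) ∩ B).card * 2 ^ T.card := by
    rw [Finset.card_product, Finset.card_univ, Fintype.card_fun, Fintype.card_coe,
      Fintype.card_bool]
  rw [← hcard]
  apply Finset.card_le_card_of_injOn
    (fun p => fun v => if h : v ∈ T then p.2 ⟨v, h⟩ else p.1 v)
  · rintro ⟨a, f⟩ hp
    simp only [Finset.mem_coe, Finset.mem_product, Finset.mem_inter, Finset.mem_filter, Finset.mem_univ,
      true_and] at hp
    exact hB a _ (fun v hv => by simp [dif_neg hv]) hp.1.2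
  · rintro ⟨a, f⟩ hp ⟨b, g⟩ hq he
    simp only [Finset.coe_product, Set.mem_prod, Finset.mem_coe, Finset.mem_inter,
      Finset.mem_filter, Finset.mem_univ, true_and, Finset.coe_univ, Set.mem_univ,
      and_true] at hp hq
    have hfg : f = g := by
      funext v
      have := congrFun he v.1
      simpa [dif_pos v.2] using this
    have hab : a = b := by
      funext v
      by_cases hv : v ∈ T
      · rw [hp.1 v hv, hq.1 v hv]
      · have := congrFun he v
        simpa [dif_neg hv] using this
    simp [hfg, hab]


lemma exp_neg_le_pow (c : ℕ) (hc : 2 ≤ c) :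
    Real.exp (-1) ≤ (1 - 1/(c:ℝ)) ^ (c - 1) := by
  have hc2 : (2:ℝ) ≤ (c:ℝ) := by exact_mod_cast hc
  have hdc : ((c - 1 : ℕ) : ℝ) = (c:ℝ) - 1 := by
    push_cast [Nat.cast_sub (by omega : 1 ≤ c)]; ring
  have hd0 : (0:ℝ) < ((c - 1 : ℕ) : ℝ) := by rw [hdc]; linarith
  have hc0 : (0:ℝ) < (c:ℝ) := by linarith
  have h1 : 1 - 1/(c:ℝ) = ((c - 1 : ℕ) : ℝ)/(c:ℝ) := by
    rw [hdc]; field_simp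
  have h2 : ((c:ℝ)/((c - 1 : ℕ) : ℝ)) ^ (c - 1) ≤ Real.exp 1 := by
    have he : (c:ℝ)/((c - 1 : ℕ) : ℝ) = 1 + 1/((c - 1 : ℕ) : ℝ) := by
      have hne : (c:ℝ) - 1 ≠ 0 := by linarith
      rw [hdc]; field_simp; ring
    rw [he]
    calc (1 + 1/((c - 1 : ℕ) : ℝ)) ^ (c - 1)
        ≤ (Real.exp (1/((c - 1 : ℕ) : ℝ))) ^ (c - 1) := by
          apply pow_le_pow_left₀ (by positivity)
          have := Real.add_one_le_exp (1/((c - 1 : ℕ) : ℝ))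
          linarith
      _ = Real.exp (((c - 1 : ℕ) : ℝ) * (1/((c - 1 : ℕ) : ℝ))) := by
          rw [Real.exp_nat_mul]
      _ = Real.exp 1 := by rw [mul_one_div, div_self (ne_of_gt hd0)]
  have hpos : (0:ℝ) < ((c:ℝ)/((c - 1 : ℕ) : ℝ)) ^ (c - 1) := by positivity
  have h3 : (Real.exp 1)⁻¹ ≤ (((c:ℝ)/((c - 1 : ℕ) : ℝ)) ^ (c - 1))⁻¹ :=
    inv_anti₀ hpos h2
  rw [Real.exp_neg]
  rw [h1]
  calc (Real.exp 1)⁻¹ ≤ (((c:ℝ)/((c - 1 : ℕ) : ℝ)) ^ (c - 1))⁻¹ := h3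
    _ = (((c - 1 : ℕ) : ℝ)/(c:ℝ)) ^ (c - 1) := by
        rw [← inv_pow, inv_div]


variable {nv m k : ℕ} (W : Fin m → Finset (Fin nv)) (σ : Fin m → Fin nv → Bool)

def bad (i : Fin m) : Finset (Asg nv) := univ.filter fun a => ∀ v ∈ W i, a v = σ i v

def good (S : Finset (Fin m)) : Finset (Asg nv) := univ.filter fun a => ∀ j ∈ S, a ∉ bad W σ j

lemma good_mono {S S' : Finset (Fin m)} (h : S ⊆ S') : good W σ S' ⊆ good W σ S := by
  intro a ha
  simp only [good, mem_filter, mem_univ, true_and] at *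
  exact fun j hj => ha j (h hj)

lemma good_insert (i : Fin m) (S : Finset (Fin m)) :
    good W σ (insert i S) = good W σ S \ bad W σ i := by
  ext a
  simp only [good, mem_filter, mem_univ, true_and, mem_sdiff, Finset.mem_insert]
  constructor
  · intro h; exact ⟨fun j hj => h j (Or.inr hj), h i (Or.inl rfl)⟩
  · rintro ⟨h1, h2⟩ j hj
    rcases hj with rfl | hj
    · exact h2
    · exact h1 j hj

lemma card_good_insert (i : Fin m) (S : Finset (Fin m)) :
    ((good W σ (insert i S)).card : ℝ)
      = (good W σ S).card - (bad W σ i ∩ good W σ S).card := by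
  rw [good_insert]
  have h := Finset.card_sdiff_add_card_inter (good W σ S) (bad W σ i)
  rw [Finset.inter_comm] at h
  have := congrArg (fun x : ℕ => (x : ℝ)) h
  push_cast at this
  linarith


lemma main_claim (hk : 0 < k) (hWc : ∀ i, (W i).card = k) (c : ℕ) (hc : 2 ≤ c)
    (hΓ : ∀ i : Fin m, (univ.filter fun j => ¬ Disjoint (W j) (W i)).card ≤ c)
    (hck : (c : ℝ) ≤ 2 ^ k * Real.exp (-1)) :
    ∀ S : Finset (Fin m), ∀ i ∉ S,
      ((bad W σ i ∩ good W σ S).card : ℝ) * c ≤ (good W σ S).card := by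
  intro S
  induction S using Finset.strongInduction with
  | _ S ih =>
  intro i hi
  classical
  have hc0 : (0:ℝ) < (c:ℝ) := by
    have : (0:ℕ) < c := by omega
    exact_mod_cast this
  have hc2 : (2:ℝ) ≤ (c:ℝ) := by exact_mod_cast hc
  have h1c : (0:ℝ) ≤ 1 - 1/(c:ℝ) := by
    have : 1/(c:ℝ) ≤ 1/2 := by
      apply one_div_le_one_div_of_le <;> linarith
    linarith
  set S1 : Finset (Fin m) := S.filter (fun j => ¬ Disjoint (W j) (W i)) with hS1
  set S2 : Finset (Fin m) := S.filter (fun j => ¬ ¬ Disjoint (W j) (W i)) with hS2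
  have hS12 : S1 ∪ S2 = S := Finset.filter_union_filter_not_eq _ S
  -- step (a): independence bound
  have hdet : ∀ a b : Asg nv, (∀ v, v ∉ W i → a v = b v) →
      a ∈ good W σ S2 → b ∈ good W σ S2 := by
    intro a b hab ha
    simp only [good, mem_filter, mem_univ, true_and] at ha ⊢
    intro j hj hb
    apply ha j hj
    have hdisj : Disjoint (W j) (W i) := by
      have := (Finset.mem_filter.mp hj).2
      tauto
    simp only [bad, mem_filter, mem_univ, true_and] at hb ⊢
    intro v hv
    have hvi : v ∉ W i := Finset.disjoint_left.mp hdisj hv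
    rw [hab v hvi]
    exact hb v hv
  have hstepa : ((bad W σ i ∩ good W σ S2).card : ℝ) * 2 ^ k
      ≤ (good W σ S2).card := by
    have h := count_le (W i) (σ i) (good W σ S2) hdet
    rw [hWc i] at h
    calc ((bad W σ i ∩ good W σ S2).card : ℝ) * 2 ^ k
        = (((univ.filter fun a => ∀ v ∈ W i, a v = σ i v) ∩ good W σ S2).card * 2 ^ k : ℕ) := by
          push_cast [bad]; ring
      _ ≤ ((good W σ S2).card : ℕ) := by exact_mod_cast h
  -- step (c): iterated LLL bound over S1
  have hstepc : ∀ T ⊆ S1, (1 - 1/(c:ℝ)) ^ T.card * (good W σ S2).card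
      ≤ (good W σ (S2 ∪ T)).card := by
    intro T
    induction T using Finset.induction_on with
    | empty => intro _; simp
    | @insert j T0 hj ihT =>
      intro hsub
      have hjS1 : j ∈ S1 := hsub (Finset.mem_insert_self j T0)
      have hT0 : T0 ⊆ S1 := fun x hx => hsub (Finset.mem_insert_of_mem hx)
      have hjS : j ∈ S := (Finset.mem_filter.mp hjS1).1
      have hjn : j ∉ S2 ∪ T0 := by
        simp only [Finset.mem_union, not_or]
        constructor
        · intro h
          have := (Finset.mem_filter.mp h).2
          exact this (Finset.mem_filter.mp hjS1).2
        · exact hj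
      have hsub2 : S2 ∪ T0 ⊂ S := by
        constructor
        · intro x hx
          rcases Finset.mem_union.mp hx with h | h
          · exact (Finset.mem_filter.mp h).1
          · exact (Finset.mem_filter.mp (hT0 h)).1
        · intro hS'
          exact hjn (hS' hjS)
      have hIH := ih (S2 ∪ T0) hsub2 j hjn
      have hcg := card_good_insert W σ j (S2 ∪ T0)
      have hins : S2 ∪ insert j T0 = insert j (S2 ∪ T0) := Finset.union_insert ..
      have hprev := ihT hT0
      have hg0 : (0:ℝ) ≤ ((good W σ (S2 ∪ T0)).card : ℝ) := by positivity
      rw [hins, hcg, Finset.card_insert_of_notMem hj, pow_succ]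
      have hkey : ((bad W σ j ∩ good W σ (S2 ∪ T0)).card : ℝ)
          ≤ (good W σ (S2 ∪ T0)).card / c := by
        rw [le_div_iff₀ hc0]
        exact hIH
      have hmul : (1 - 1/(c:ℝ)) ^ T0.card * (1 - 1/(c:ℝ)) * (good W σ S2).card
          ≤ (1 - 1/(c:ℝ)) * (good W σ (S2 ∪ T0)).card := by
        calc (1 - 1/(c:ℝ)) ^ T0.card * (1 - 1/(c:ℝ)) * (good W σ S2).card
            = (1 - 1/(c:ℝ)) * ((1 - 1/(c:ℝ)) ^ T0.card * (good W σ S2).card) := by ring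
          _ ≤ (1 - 1/(c:ℝ)) * (good W σ (S2 ∪ T0)).card :=
              mul_le_mul_of_nonneg_left hprev h1c
      have hlast : (1 - 1/(c:ℝ)) * (good W σ (S2 ∪ T0)).card
          ≤ (good W σ (S2 ∪ T0)).card - (bad W σ j ∩ good W σ (S2 ∪ T0)).card := by
        have : (1 - 1/(c:ℝ)) * (good W σ (S2 ∪ T0)).card
            = (good W σ (S2 ∪ T0)).card - (good W σ (S2 ∪ T0)).card / c := by
          field_simp
        rw [this]
        linarith
      linarith
  -- |S1| ≤ c - 1
  have hiΓ : i ∈ univ.filter fun j => ¬ Disjoint (W j) (W i) := by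
    simp only [mem_filter, mem_univ, true_and, Finset.disjoint_self_iff_empty]
    intro h
    have := hWc i
    rw [h] at this
    simp at this
    omega
  have hS1card : S1.card ≤ c - 1 := by
    have hsub : S1 ⊆ (univ.filter fun j => ¬ Disjoint (W j) (W i)).erase i := by
      intro j hj
      rw [Finset.mem_erase]
      refine ⟨?_, ?_⟩
      · rintro rfl
        exact hi (Finset.mem_filter.mp hj).1
      · simp only [mem_filter, mem_univ, true_and]
        exact (Finset.mem_filter.mp hj).2
    have := Finset.card_le_card hsub
    rw [Finset.card_erase_of_mem hiΓ] at this
    have h2 := hΓ i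
    omega
  -- combine
  have hmono : ((bad W σ i ∩ good W σ S).card : ℝ)
      ≤ (bad W σ i ∩ good W σ S2).card := by
    have : good W σ S ⊆ good W σ S2 := by
      apply good_mono
      intro x hx
      rw [← hS12]
      exact Finset.mem_union_right _ hx
    exact_mod_cast Finset.card_le_card (Finset.inter_subset_inter Finset.Subset.rfl this)
  have hexp : Real.exp (-1) ≤ (1 - 1/(c:ℝ)) ^ S1.card := by
    calc Real.exp (-1) ≤ (1 - 1/(c:ℝ)) ^ (c - 1) := exp_neg_le_pow c hc
      _ ≤ (1 - 1/(c:ℝ)) ^ S1.card :=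
          pow_le_pow_of_le_one h1c (by linarith [one_div_pos.mpr hc0] : 1 - 1/(c:ℝ) ≤ 1) hS1card
  have hfin : (1 - 1/(c:ℝ)) ^ S1.card * (good W σ S2).card ≤ (good W σ S).card := by
    have := hstepc S1 Finset.Subset.rfl
    rwa [show S2 ∪ S1 = S by rw [Finset.union_comm]; exact hS12] at this
  have hg2 : (0:ℝ) ≤ ((good W σ S2).card : ℝ) := by positivity
  have hb2 : (0:ℝ) ≤ ((bad W σ i ∩ good W σ S2).card : ℝ) := by positivity
  calc ((bad W σ i ∩ good W σ S).card : ℝ) * c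
      ≤ ((bad W σ i ∩ good W σ S2).card : ℝ) * c := by
        apply mul_le_mul_of_nonneg_right hmono (le_of_lt hc0)
    _ ≤ ((bad W σ i ∩ good W σ S2).card : ℝ) * (2 ^ k * Real.exp (-1)) :=
        mul_le_mul_of_nonneg_left hck hb2
    _ = Real.exp (-1) * (((bad W σ i ∩ good W σ S2).card : ℝ) * 2 ^ k) := by ring
    _ ≤ Real.exp (-1) * (good W σ S2).card :=
        mul_le_mul_of_nonneg_left hstepa (le_of_lt (Real.exp_pos _))
    _ ≤ (1 - 1/(c:ℝ)) ^ S1.card * (good W σ S2).card :=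
        mul_le_mul_of_nonneg_right hexp hg2
    _ ≤ (good W σ S).card := hfin


lemma good_pos (hk : 0 < k) (hWc : ∀ i, (W i).card = k) (c : ℕ) (hc : 2 ≤ c)
    (hΓ : ∀ i : Fin m, (univ.filter fun j => ¬ Disjoint (W j) (W i)).card ≤ c)
    (hck : (c : ℝ) ≤ 2 ^ k * Real.exp (-1)) :
    ∀ S : Finset (Fin m), (0:ℝ) < (good W σ S).card := by
  intro S
  classical
  induction S using Finset.induction_on with
  | empty =>
    have h : good W σ (∅ : Finset (Fin m)) = univ := by
      simp [good]
    rw [h, Finset.card_univ]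
    exact_mod_cast Fintype.card_pos
  | @insert i S hi ihS =>
    have hcg := card_good_insert W σ i S
    have hmain := main_claim W σ hk hWc c hc hΓ hck S i hi
    have hc0 : (0:ℝ) < (c:ℝ) := by
      have : (0:ℕ) < c := by omega
      exact_mod_cast this
    have hc1 : (1:ℝ) < (c:ℝ) := by
      have : (1:ℕ) < c := by omega
      exact_mod_cast this
    rw [hcg]
    have h1 : ((bad W σ i ∩ good W σ S).card : ℝ) ≤ (good W σ S).card / c := by
      rw [le_div_iff₀ hc0]; exact hmain
    have h2 : ((good W σ S).card : ℝ) / c < (good W σ S).card := div_lt_self ihS hc1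
    linarith

end KsatLLL

/-- k-SAT via the Lovász Local Lemma: a k-CNF formula is given by clauses indexed by
`Fin m`, where clause `i` has variable set `W i` of size exactly `k` and unique
falsifying partial assignment `σ i` (restricted to `W i`); an assignment `a` satisfies
clause `i` iff `a v ≠ σ i v` for some `v ∈ W i`. If every variable appears in at most
`2^k / (e·k)` clauses, then the formula is satisfiable. -/
theorem ksat_satisfiable_of_low_degree (nv m k : ℕ) (hk : 0 < k)
    (W : Fin m → Finset (Fin nv)) (hW : ∀ i, (W i).card = k)
    (σ : Fin m → Fin nv → Bool)
    (hdeg : ∀ v : Fin nv, ((Finset.univ.filter fun i => v ∈ W i).card : ℝ)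
        ≤ 2 ^ k / (Real.exp 1 * k)) :
    ∃ a : Fin nv → Bool, ∀ i, ∃ v ∈ W i, a v ≠ σ i v := by
  classical
  rcases Nat.eq_zero_or_pos m with hm | hm
  · subst hm
    exact ⟨fun _ => true, fun i => i.elim0⟩
  have hkpos : (0:ℝ) < (k:ℝ) := by exact_mod_cast hk
  have hepos := Real.exp_pos 1
  obtain ⟨v0, hv0⟩ : (W ⟨0, hm⟩).Nonempty := by
    rw [← Finset.card_pos, hW]; exact hk
  have h1 : (1:ℝ) ≤ 2 ^ k / (Real.exp 1 * k) := by
    refine le_trans ?_ (hdeg v0)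
    have hmem : (⟨0,hm⟩ : Fin m) ∈ Finset.univ.filter fun i => v0 ∈ W i := by
      simp [hv0]
    have hcp := Finset.card_pos.mpr ⟨_, hmem⟩
    exact_mod_cast hcp
  have hek : Real.exp 1 * k ≤ 2 ^ k := by
    rw [le_div_iff₀ (by positivity)] at h1; linarith
  have hk2 : 2 ≤ k := by
    by_contra h
    have hk1 : k = 1 := by omega
    subst hk1
    have hgt := Real.exp_one_gt_d9
    norm_num at hek
    linarith
  set c : ℕ := max 2 ⌊(2:ℝ) ^ k / Real.exp 1⌋₊ with hcdef
  have hc : 2 ≤ c := le_max_left _ _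
  have hck : (c:ℝ) ≤ 2 ^ k * Real.exp (-1) := by
    rw [Real.exp_neg]
    have heq : (2:ℝ)^k * (Real.exp 1)⁻¹ = 2^k / Real.exp 1 := by ring
    rw [heq]
    have h2 : (2:ℝ) ≤ 2^k / Real.exp 1 := by
      rw [le_div_iff₀ hepos]
      calc (2:ℝ) * Real.exp 1 ≤ (k:ℝ) * Real.exp 1 := by
            apply mul_le_mul_of_nonneg_right _ (le_of_lt hepos)
            exact_mod_cast hk2
        _ = Real.exp 1 * k := by ring
        _ ≤ 2^k := hek
    have hfl : (⌊(2:ℝ)^k / Real.exp 1⌋₊ : ℝ) ≤ 2^k / Real.exp 1 :=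
      Nat.floor_le (by positivity)
    rw [hcdef]
    push_cast
    exact max_le h2 hfl
  have hΓ : ∀ i : Fin m,
      (Finset.univ.filter fun j => ¬ Disjoint (W j) (W i)).card ≤ c := by
    intro i
    have hsub : (Finset.univ.filter fun j => ¬ Disjoint (W j) (W i)) ⊆
        (W i).biUnion fun v => Finset.univ.filter fun j => v ∈ W j := by
      intro j hj
      have hnd := (Finset.mem_filter.mp hj).2
      rw [Finset.not_disjoint_iff] at hnd
      obtain ⟨v, hvj, hvi⟩ := hnd
      exact Finset.mem_biUnion.mpr ⟨v, hvi, by simp [hvj]⟩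
    have hb : ((Finset.univ.filter fun j => ¬ Disjoint (W j) (W i)).card : ℝ)
        ≤ 2^k / Real.exp 1 := by
      calc ((Finset.univ.filter fun j => ¬ Disjoint (W j) (W i)).card : ℝ)
          ≤ (((W i).biUnion fun v => Finset.univ.filter fun j => v ∈ W j).card : ℝ) := by
            exact_mod_cast Finset.card_le_card hsub
        _ ≤ ∑ v ∈ W i, ((Finset.univ.filter fun j => v ∈ W j).card : ℝ) := by
            exact_mod_cast Finset.card_biUnion_le
        _ ≤ ∑ _v ∈ W i, (2:ℝ)^k / (Real.exp 1 * k) := Finset.sum_le_sum fun v _ => hdeg v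
        _ = (k:ℝ) * ((2:ℝ)^k / (Real.exp 1 * k)) := by
            rw [Finset.sum_const, hW i, nsmul_eq_mul]
        _ = 2^k / Real.exp 1 := by
            field_simp
    exact le_trans (Nat.le_floor hb) (le_max_right _ _)
  have hpos := KsatLLL.good_pos W σ hk hW c hc hΓ hck Finset.univ
  have hne : (KsatLLL.good W σ Finset.univ).Nonempty := by
    rw [← Finset.card_pos]
    exact_mod_cast hpos
  obtain ⟨a, ha⟩ := hne
  refine ⟨a, fun i => ?_⟩
  simp only [KsatLLL.good, Finset.mem_filter] at ha
  have hai := ha.2 i (Finset.mem_univ i)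
  simp only [KsatLLL.bad, Finset.mem_filter, Finset.mem_univ, true_and] at hai
  push_neg at hai
  exact hai
end
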